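/- arXiv:2004.08037 — 8 statements merged into one kernel-verified Lean document; each statement's English description precedes it below -/
import Mathlib

section
/- Let k ≥ 2 and ℓ ≥ 1 be integers. Let 𝐱 be a random variable on [ℓ]^k with blockwise min-entropy at least 50·log₂ k, and let 𝐲 be a random variable on ({0,1}^ℓ)^k, independent of 𝐱, with deficiency at most k (i.e. Pr[𝐲 = y] ≤ 2^{k − ℓk} for every y). Then there exists x in the support of 𝐱 such that the random vector Ind_ℓ^k(x, 𝐲) = (y_1(x_1), …, y_k(x_k)) ∈ {0,1}^k is (1/k³)-multiplicatively uniform. -/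
open Finset

namespace LIL

set_option linter.unusedSectionVars false

variable {ι : Type*} [Fintype ι] [DecidableEq ι]

noncomputable def sg (b : Bool) : ℝ := if b then -1 else 1

lemma sg_sq (b : Bool) : sg b ^ 2 = 1 := by cases b <;> simp [sg]

lemma abs_sg (b : Bool) : |sg b| = 1 := by cases b <;> simp [sg]

noncomputable def chi (T : Finset ι) (y : ι → Bool) : ℝ := ∏ i ∈ T, sg (y i)

lemma chi_empty (y : ι → Bool) : chi (∅ : Finset ι) y = 1 := by simp [chi]

lemma chi_sq (T : Finset ι) (y : ι → Bool) : chi T y ^ 2 = 1 := by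
  rw [chi, ← prod_pow]
  exact prod_eq_one fun i _ => sg_sq (y i)

lemma abs_chi (T : Finset ι) (y : ι → Bool) : |chi T y| = 1 := by
  rw [chi, abs_prod]
  exact prod_eq_one fun i _ => abs_sg (y i)

lemma chi_mul (T T' : Finset ι) (y : ι → Bool) :
    chi T y * chi T' y = chi (symmDiff T T') y := by
  have h1 : chi T y = chi (T \ T') y * chi (T ∩ T') y := by
    rw [chi, chi, chi, ← prod_union (disjoint_sdiff_inter T T')]
    congr 1
    exact (sdiff_union_inter T T').symm
  have h2 : chi T' y = chi (T' \ T) y * chi (T' ∩ T) y := by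
    rw [chi, chi, chi, ← prod_union (disjoint_sdiff_inter T' T)]
    congr 1
    exact (sdiff_union_inter T' T).symm
  have h3 : T' ∩ T = T ∩ T' := inter_comm _ _
  have h4 : chi (T ∩ T') y * chi (T ∩ T') y = 1 := by
    have := chi_sq (T ∩ T') y; nlinarith [this]
  have h5 : chi (symmDiff T T') y = chi (T \ T') y * chi (T' \ T) y := by
    rw [chi, chi, chi, ← prod_union (disjoint_sdiff_sdiff)]
    congr 1
  rw [h1, h2, h3, h5]
  linear_combination (chi (T \ T') y * chi (T' \ T) y) * h4

lemma sum_chi {T : Finset ι} (hT : T.Nonempty) : ∑ y : ι → Bool, chi T y = 0 := by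
  have hrw : ∀ y : ι → Bool, chi T y = ∏ i, (if i ∈ T then sg (y i) else 1) := by
    intro y
    rw [Finset.prod_ite_mem univ T (fun i => sg (y i)), univ_inter, chi]
  calc ∑ y : ι → Bool, chi T y
      = ∑ y : ι → Bool, ∏ i, (if i ∈ T then sg (y i) else 1) := by
        exact Finset.sum_congr rfl fun y _ => hrw y
    _ = ∏ i, ∑ b : Bool, (if i ∈ T then sg b else 1) := by
        rw [Finset.prod_univ_sum]
        rw [Fintype.piFinset_univ]
    _ = 0 := by
        obtain ⟨i, hi⟩ := hT
        apply prod_eq_zero (mem_univ i)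
        simp [hi, sg]

lemma sum_one_cube : (∑ _y : ι → Bool, (1 : ℝ)) = 2 ^ (Fintype.card ι) := by
  rw [Finset.sum_const, card_univ, Fintype.card_fun]
  simp

noncomputable def FF (c : Finset ι → ℝ) (y : ι → Bool) : ℝ := ∑ T : Finset ι, c T * chi T y

noncomputable def conv (c c' : Finset ι → ℝ) (U : Finset ι) : ℝ :=
  ∑ T : Finset ι, c T * c' (symmDiff T U)

lemma FF_mul (c c' : Finset ι → ℝ) (y : ι → Bool) :
    FF c y * FF c' y = FF (conv c c') y := by
  simp only [FF, conv, Finset.sum_mul_sum]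
  have h1 : ∀ T : Finset ι, ∑ T' : Finset ι, (c T * chi T y) * (c' T' * chi T' y)
      = ∑ U : Finset ι, c T * c' (symmDiff T U) * chi U y := by
    intro T
    apply Fintype.sum_bijective (fun U => symmDiff T U)
      (Function.Involutive.bijective (fun U => symmDiff_symmDiff_cancel_left T U))
    intro U
    have h : symmDiff T (symmDiff T U) = U := symmDiff_symmDiff_cancel_left T U
    rw [h, ← chi_mul]
    ring
  calc ∑ T : Finset ι, ∑ T' : Finset ι, (c T * chi T y) * (c' T' * chi T' y)
      = ∑ T : Finset ι, ∑ U : Finset ι, c T * c' (symmDiff T U) * chi U y :=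
        Finset.sum_congr rfl fun T _ => h1 T
    _ = ∑ U : Finset ι, ∑ T : Finset ι, c T * c' (symmDiff T U) * chi U y := Finset.sum_comm
    _ = ∑ U : Finset ι, (∑ T : Finset ι, c T * c' (symmDiff T U)) * chi U y := by
        exact Finset.sum_congr rfl fun U _ => (Finset.sum_mul _ _ _).symm

lemma sum_FF (c : Finset ι → ℝ) :
    ∑ y : ι → Bool, FF c y = c ∅ * 2 ^ (Fintype.card ι) := by
  simp only [FF]
  rw [Finset.sum_comm]
  rw [Finset.sum_eq_single (∅ : Finset ι)]
  · rw [← Finset.mul_sum]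
    congr 1
    calc ∑ y : ι → Bool, chi (∅ : Finset ι) y = ∑ _y : ι → Bool, (1:ℝ) :=
          Finset.sum_congr rfl fun y _ => chi_empty y
      _ = 2 ^ (Fintype.card ι) := sum_one_cube
  · intro T _ hT
    rw [← Finset.mul_sum, sum_chi (nonempty_iff_ne_empty.2 hT), mul_zero]
  · intro h; exact absurd (mem_univ _) h

lemma sum_FF_sq (c : Finset ι → ℝ) :
    ∑ y : ι → Bool, (FF c y) ^ 2 = (∑ T : Finset ι, (c T) ^ 2) * 2 ^ (Fintype.card ι) := by
  have h : ∀ y : ι → Bool, (FF c y) ^ 2 = FF (conv c c) y := by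
    intro y; rw [sq, FF_mul]
  rw [Finset.sum_congr rfl fun y _ => h y, sum_FF]
  congr 1
  rw [conv]
  refine Finset.sum_congr rfl fun T _ => ?_
  rw [← Finset.bot_eq_empty, symmDiff_bot, sq]

lemma symmDiff_subset_union {A B : Finset ι} : symmDiff A B ⊆ A ∪ B := by
  intro x hx
  rw [mem_symmDiff] at hx
  rw [mem_union]
  tauto

lemma conv_supp {c c' : Finset ι → ℝ} {u : Finset ι} {d e : ℕ}
    (hc : ∀ T, c T ≠ 0 → T ⊆ u ∧ T.card ≤ d) (hc' : ∀ T, c' T ≠ 0 → T ⊆ u ∧ T.card ≤ e) :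
    ∀ T, conv c c' T ≠ 0 → T ⊆ u ∧ T.card ≤ d + e := by
  intro U hU
  rw [conv] at hU
  obtain ⟨T, _, hT⟩ := Finset.exists_ne_zero_of_sum_ne_zero hU
  have h1 : c T ≠ 0 := fun h => hT (by rw [h, zero_mul])
  have h2 : c' (symmDiff T U) ≠ 0 := fun h => hT (by rw [h, mul_zero])
  have hU' : U = symmDiff T (symmDiff T U) := (symmDiff_symmDiff_cancel_left T U).symm
  constructor
  · intro x hx
    rw [hU'] at hx
    have hx2 : x ∈ T ∪ (symmDiff T U) := symmDiff_subset_union hx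
    rcases mem_union.1 hx2 with h | h
    · exact (hc T h1).1 h
    · exact (hc' _ h2).1 h
  · calc U.card = (symmDiff T (symmDiff T U)).card := by rw [← hU']
      _ ≤ (T ∪ (symmDiff T U)).card := card_le_card (fun x hx => symmDiff_subset_union hx)
      _ ≤ T.card + (symmDiff T U).card := card_union_le _ _
      _ ≤ d + e := add_le_add (hc T h1).2 (hc' _ h2).2

lemma sum_chi_singleton_mul {c : Finset ι → ℝ} {u : Finset ι} {i : ι} (hi : i ∉ u)
    (hc : ∀ T, c T ≠ 0 → T ⊆ u) :
    ∑ y : ι → Bool, chi {i} y * FF c y = 0 := by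
  have h : ∀ y : ι → Bool, chi {i} y * FF c y
      = ∑ T : Finset ι, c T * chi (symmDiff {i} T) y := by
    intro y
    simp only [FF, Finset.mul_sum]
    refine Finset.sum_congr rfl fun T _ => ?_
    rw [← chi_mul]; ring
  rw [Finset.sum_congr rfl fun y _ => h y, Finset.sum_comm]
  apply Finset.sum_eq_zero
  intro T _
  by_cases hcT : c T = 0
  · simp [hcT]
  · rw [← Finset.mul_sum, sum_chi, mul_zero]
    refine ⟨i, ?_⟩
    have hiT : i ∉ T := fun h => hi (hc T hcT h)
    simp [mem_symmDiff, hiT]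


lemma pow_le_of_sq_le_sq {a b : ℝ} (hb : 0 ≤ b) (h : a ^ 2 ≤ b ^ 2) (ha : 0 ≤ a) : a ≤ b := by
  nlinarith

theorem bonami4 (u : Finset ι) (d : ℕ) (c : Finset ι → ℝ)
    (hc : ∀ T, c T ≠ 0 → T ⊆ u ∧ T.card ≤ d) :
    (2:ℝ) ^ (Fintype.card ι) * ∑ y : ι → Bool, (FF c y) ^ 4
      ≤ 9 ^ d * (∑ y : ι → Bool, (FF c y) ^ 2) ^ 2 := by
  induction u using Finset.induction_on generalizing c d with
  | empty =>
    have hconst : ∀ y : ι → Bool, FF c y = c ∅ := by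
      intro y
      rw [FF, Finset.sum_eq_single (∅ : Finset ι)]
      · rw [chi_empty, mul_one]
      · intro T _ hT
        have : c T = 0 := by
          by_contra hne
          exact hT (Finset.subset_empty.1 (hc T hne).1)
        rw [this, zero_mul]
      · intro h; exact absurd (mem_univ _) h
    have h4 : ∀ y : ι → Bool, (FF c y) ^ 4 = (c ∅)^4 := fun y => by rw [hconst y]
    have h2 : ∀ y : ι → Bool, (FF c y) ^ 2 = (c ∅)^2 := fun y => by rw [hconst y]
    rw [Finset.sum_congr rfl fun y _ => h4 y, Finset.sum_congr rfl fun y _ => h2 y,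
      Finset.sum_const, Finset.sum_const, card_univ, Fintype.card_fun]
    have hN : (0:ℝ) ≤ 2 ^ (Fintype.card ι) := by positivity
    have h9 : (1:ℝ) ≤ 9 ^ d := one_le_pow₀ (by norm_num : (1:ℝ) ≤ 9)
    simp only [nsmul_eq_mul, Fintype.card_bool]
    push_cast
    calc (2:ℝ) ^ (Fintype.card ι) * ((2:ℝ) ^ (Fintype.card ι) * c ∅ ^ 4)
        = ((2:ℝ) ^ (Fintype.card ι) * c ∅ ^ 2) ^ 2 := by ring
      _ ≤ 9 ^ d * ((2:ℝ) ^ (Fintype.card ι) * c ∅ ^ 2) ^ 2 := by nlinarith [sq_nonneg ((2:ℝ) ^ (Fintype.card ι) * c ∅ ^ 2)]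
  | @insert i u hi ih =>
    set c0 : Finset ι → ℝ := fun T => if i ∈ T then 0 else c T with hc0def
    set c1 : Finset ι → ℝ := fun T => if i ∈ T then 0 else c (insert i T) with hc1def
    have hc0 : ∀ T, c0 T ≠ 0 → T ⊆ u ∧ T.card ≤ d := by
      intro T hT
      rw [hc0def] at hT
      simp only at hT
      by_cases hiT : i ∈ T
      · simp [hiT] at hT
      · simp only [hiT, if_false] at hT
        obtain ⟨hsub, hcard⟩ := hc T hT
        refine ⟨?_, hcard⟩
        intro x hx
        rcases Finset.mem_insert.1 (hsub hx) with h | h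
        · exact absurd (h ▸ hx) hiT
        · exact h
    have hc1 : ∀ T, c1 T ≠ 0 → (T ⊆ u ∧ T.card ≤ d - 1) ∧ i ∉ T := by
      intro T hT
      rw [hc1def] at hT
      simp only at hT
      by_cases hiT : i ∈ T
      · simp [hiT] at hT
      · simp only [hiT, if_false] at hT
        obtain ⟨hsub, hcard⟩ := hc _ hT
        have hsub' : T ⊆ u := by
          intro x hx
          have hxi : x ∈ insert i u := hsub (Finset.mem_insert_of_mem hx)
          rcases Finset.mem_insert.1 hxi with h | h
          · exact absurd (h ▸ hx) hiT
          · exact h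
        have hcard' : T.card ≤ d - 1 := by
          have : T.card + 1 ≤ d := by
            rw [← Finset.card_insert_of_notMem hiT]; exact hcard
          omega
        exact ⟨⟨hsub', hcard'⟩, hiT⟩
    have key1 : ∀ y : ι → Bool, FF c y = FF c0 y + chi {i} y * FF c1 y := by
      intro y
      rw [FF, ← Finset.sum_filter_add_sum_filter_not univ (fun T => i ∈ T)]
      have e2 : ∑ T ∈ univ.filter (fun T => ¬ i ∈ T), c T * chi T y = FF c0 y := by
        rw [FF]
        rw [Finset.sum_filter]
        refine Finset.sum_congr rfl fun T _ => ?_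
        by_cases hiT : i ∈ T <;> simp [hc0def, hiT]
      have e1 : ∑ T ∈ univ.filter (fun T => i ∈ T), c T * chi T y
          = chi {i} y * FF c1 y := by
        have hr : chi ({i} : Finset ι) y * FF c1 y
            = ∑ T ∈ univ.filter (fun T => ¬ i ∈ T),
                chi ({i} : Finset ι) y * (c (insert i T) * chi T y) := by
          rw [FF, Finset.mul_sum, Finset.sum_filter]
          refine Finset.sum_congr rfl fun T _ => ?_
          by_cases hiT : i ∈ T <;> simp [hc1def, hiT]
        rw [hr]
        refine Finset.sum_nbij' (fun T => T.erase i) (fun T => insert i T) ?_ ?_ ?_ ?_ ?_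
        · intro T hT
          simp only [Finset.mem_filter, Finset.mem_univ, true_and] at hT ⊢
          simp
        · intro T hT
          simp only [Finset.mem_filter, Finset.mem_univ, true_and] at hT ⊢
          exact Finset.mem_insert_self i T
        · intro T hT
          simp only [Finset.mem_filter, Finset.mem_univ, true_and] at hT
          exact Finset.insert_erase hT
        · intro T hT
          simp only [Finset.mem_filter, Finset.mem_univ, true_and] at hT
          exact Finset.erase_insert hT
        · intro T hT
          simp only [Finset.mem_filter, Finset.mem_univ, true_and] at hT
          have hIE : insert i (T.erase i) = T := Finset.insert_erase hT
          have hchi : chi T y = sg (y i) * chi (T.erase i) y := by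
            conv_lhs => rw [← hIE]
            rw [chi, Finset.prod_insert (Finset.notMem_erase i T)]
            rfl
          have hsing : chi ({i} : Finset ι) y = sg (y i) := by
            rw [chi, Finset.prod_singleton]
          rw [hchi, hIE, hsing]
          ring
      rw [e1, e2]; ring
    -- names
    have he : ∀ y : ι → Bool, chi ({i} : Finset ι) y ^ 2 = 1 := fun y => chi_sq _ y
    have hsupp1 : ∀ T, c1 T ≠ 0 → T ⊆ u ∧ T.card ≤ d - 1 := fun T h => (hc1 T h).1
    have hsupp0u : ∀ T, c0 T ≠ 0 → T ⊆ u := fun T h => (hc0 T h).1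
    -- product representations
    have hA3B : ∀ y : ι → Bool, FF c0 y ^ 3 * FF c1 y
        = FF (conv (conv (conv c0 c0) c0) c1) y := by
      intro y; rw [← FF_mul, ← FF_mul, ← FF_mul]; ring
    have hAB3 : ∀ y : ι → Bool, FF c0 y * FF c1 y ^ 3
        = FF (conv (conv (conv c1 c1) c1) c0) y := by
      intro y; rw [← FF_mul, ← FF_mul, ← FF_mul]; ring
    have hAB : ∀ y : ι → Bool, FF c0 y * FF c1 y = FF (conv c0 c1) y := fun y => FF_mul _ _ _
    have hz3 : ∑ y : ι → Bool, chi ({i} : Finset ι) y * FF (conv (conv (conv c0 c0) c0) c1) y = 0 := by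
      apply sum_chi_singleton_mul hi
      intro T h
      exact (conv_supp (conv_supp (conv_supp hc0 hc0) hc0) hsupp1 T h).1
    have hz3' : ∑ y : ι → Bool, chi ({i} : Finset ι) y * FF (conv (conv (conv c1 c1) c1) c0) y = 0 := by
      apply sum_chi_singleton_mul hi
      intro T h
      exact (conv_supp (conv_supp (conv_supp hsupp1 hsupp1) hsupp1) hc0 T h).1
    have hz1 : ∑ y : ι → Bool, chi ({i} : Finset ι) y * FF (conv c0 c1) y = 0 := by
      apply sum_chi_singleton_mul hi
      intro T h
      exact (conv_supp hc0 hsupp1 T h).1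
    -- sum decompositions
    have key2 : ∑ y : ι → Bool, (FF c y) ^ 2
        = (∑ y : ι → Bool, FF c0 y ^ 2) + (∑ y : ι → Bool, FF c1 y ^ 2) := by
      have hpt : ∀ y : ι → Bool, (FF c y) ^ 2
          = FF c0 y ^ 2 + FF c1 y ^ 2
            + 2 * (chi ({i} : Finset ι) y * (FF c0 y * FF c1 y)) := by
        intro y
        rw [key1 y]
        linear_combination (FF c1 y ^ 2) * (he y)
      rw [Finset.sum_congr rfl fun y _ => hpt y]
      rw [Finset.sum_add_distrib, Finset.sum_add_distrib, ← Finset.mul_sum]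
      have : ∑ y : ι → Bool, chi ({i} : Finset ι) y * (FF c0 y * FF c1 y)
          = ∑ y : ι → Bool, chi ({i} : Finset ι) y * FF (conv c0 c1) y :=
        Finset.sum_congr rfl fun y _ => by rw [hAB y]
      rw [this, hz1]
      ring
    have key3 : ∑ y : ι → Bool, (FF c y) ^ 4
        = (∑ y : ι → Bool, FF c0 y ^ 4) + 6 * (∑ y : ι → Bool, FF c0 y ^ 2 * FF c1 y ^ 2)
          + (∑ y : ι → Bool, FF c1 y ^ 4) := by
      have hpt : ∀ y : ι → Bool, (FF c y) ^ 4
          = FF c0 y ^ 4 + 6 * (FF c0 y ^ 2 * FF c1 y ^ 2) + FF c1 y ^ 4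
            + (4 * (chi ({i} : Finset ι) y * (FF c0 y ^ 3 * FF c1 y))
              + 4 * (chi ({i} : Finset ι) y * (FF c0 y * FF c1 y ^ 3))) := by
        intro y
        rw [key1 y]
        linear_combination (6 * FF c0 y ^ 2 * FF c1 y ^ 2
          + 4 * FF c0 y * FF c1 y ^ 3 * chi ({i} : Finset ι) y
          + FF c1 y ^ 4 * (chi ({i} : Finset ι) y ^ 2 + 1)) * (he y)
      rw [Finset.sum_congr rfl fun y _ => hpt y]
      rw [Finset.sum_add_distrib, Finset.sum_add_distrib, Finset.sum_add_distrib,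
        Finset.sum_add_distrib, ← Finset.mul_sum, ← Finset.mul_sum, ← Finset.mul_sum]
      have h1 : ∑ y : ι → Bool, chi ({i} : Finset ι) y * (FF c0 y ^ 3 * FF c1 y) = 0 := by
        rw [Finset.sum_congr rfl fun y _ => by rw [hA3B y]]
        exact hz3
      have h2 : ∑ y : ι → Bool, chi ({i} : Finset ι) y * (FF c0 y * FF c1 y ^ 3) = 0 := by
        rw [Finset.sum_congr rfl fun y _ => by rw [hAB3 y]]
        exact hz3'
      rw [h1, h2]
      ring
    -- numeric part
    rcases d with _ | d'
    · -- d = 0 : c1 = 0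
      have hc1z : ∀ T, c1 T = 0 := by
        intro T
        by_contra h
        obtain ⟨⟨_, hcard⟩, hiT⟩ := hc1 T h
        rw [hc1def] at h
        simp only [hiT, if_false] at h
        have := (hc _ h).2
        rw [Finset.card_insert_of_notMem hiT] at this
        omega
      have hB0 : ∀ y : ι → Bool, FF c1 y = 0 := by
        intro y
        rw [FF]
        exact Finset.sum_eq_zero fun T _ => by rw [hc1z T, zero_mul]
      have hfa : ∀ y : ι → Bool, FF c y = FF c0 y := by
        intro y; rw [key1 y, hB0 y]; ring
      have h4 : ∑ y : ι → Bool, FF c y ^ 4 = ∑ y : ι → Bool, FF c0 y ^ 4 :=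
        Finset.sum_congr rfl fun y _ => by rw [hfa y]
      have h2 : ∑ y : ι → Bool, FF c y ^ 2 = ∑ y : ι → Bool, FF c0 y ^ 2 :=
        Finset.sum_congr rfl fun y _ => by rw [hfa y]
      rw [h4, h2]
      exact ih 0 c0 hc0
    · -- d = d' + 1
      have hA4 : (2:ℝ) ^ (Fintype.card ι) * ∑ y : ι → Bool, FF c0 y ^ 4
          ≤ 9 ^ (d'+1) * (∑ y : ι → Bool, FF c0 y ^ 2) ^ 2 := ih (d'+1) c0 hc0
      have hB4 : (2:ℝ) ^ (Fintype.card ι) * ∑ y : ι → Bool, FF c1 y ^ 4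
          ≤ 9 ^ d' * (∑ y : ι → Bool, FF c1 y ^ 2) ^ 2 :=
        ih d' c1 (fun T h => ⟨(hsupp1 T h).1, by have := (hsupp1 T h).2; omega⟩)
      have hcs : (∑ y : ι → Bool, FF c0 y ^ 2 * FF c1 y ^ 2) ^ 2
          ≤ (∑ y : ι → Bool, FF c0 y ^ 4) * (∑ y : ι → Bool, FF c1 y ^ 4) := by
        have h := Finset.sum_mul_sq_le_sq_mul_sq univ (fun y => FF c0 y ^ 2) (fun y => FF c1 y ^ 2)
        have e0 : ∑ y : ι → Bool, (FF c0 y ^ 2) ^ 2 = ∑ y : ι → Bool, FF c0 y ^ 4 :=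
          Finset.sum_congr rfl fun y _ => by ring
        have e1 : ∑ y : ι → Bool, (FF c1 y ^ 2) ^ 2 = ∑ y : ι → Bool, FF c1 y ^ 4 :=
          Finset.sum_congr rfl fun y _ => by ring
        rw [e0, e1] at h
        exact h
      have ha : (0:ℝ) ≤ ∑ y : ι → Bool, FF c0 y ^ 2 := Finset.sum_nonneg fun y _ => sq_nonneg _
      have hb : (0:ℝ) ≤ ∑ y : ι → Bool, FF c1 y ^ 2 := Finset.sum_nonneg fun y _ => sq_nonneg _
      have hcross0 : (0:ℝ) ≤ ∑ y : ι → Bool, FF c0 y ^ 2 * FF c1 y ^ 2 :=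
        Finset.sum_nonneg fun y _ => mul_nonneg (sq_nonneg _) (sq_nonneg _)
      have hA40 : (0:ℝ) ≤ ∑ y : ι → Bool, FF c0 y ^ 4 :=
        Finset.sum_nonneg fun y _ => by positivity
      have hB40 : (0:ℝ) ≤ ∑ y : ι → Bool, FF c1 y ^ 4 :=
        Finset.sum_nonneg fun y _ => by positivity
      have hN0 : (0:ℝ) ≤ 2 ^ (Fintype.card ι) := by positivity
      rw [key2, key3]
      revert hA4 hB4 hcs ha hb hcross0 hA40 hB40 hN0
      generalize (∑ y : ι → Bool, FF c0 y ^ 2) = a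
      generalize (∑ y : ι → Bool, FF c1 y ^ 2) = b
      generalize (∑ y : ι → Bool, FF c0 y ^ 4) = A4
      generalize (∑ y : ι → Bool, FF c1 y ^ 4) = B4
      generalize (∑ y : ι → Bool, FF c0 y ^ 2 * FF c1 y ^ 2) = CR
      generalize ((2:ℝ) ^ (Fintype.card ι)) = N
      intro hA4 hB4 hcs ha hb hcross0 hA40 hB40 hN0
      have h9 : (9:ℝ) ^ (d'+1) * 9 ^ d' = (3 ^ (2*d'+1)) ^ 2 := by
        rw [show (9:ℝ) = 3^2 by norm_num, ← pow_mul, ← pow_mul, ← pow_add, ← pow_mul]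
        congr 1
        ring
      have hcross : N * CR ≤ 3 ^ (2*d'+1) * (a * b) := by
        apply pow_le_of_sq_le_sq
        · positivity
        · calc (N * CR) ^ 2 = N^2 * CR^2 := by ring
            _ ≤ N^2 * (A4 * B4) := mul_le_mul_of_nonneg_left hcs (by positivity)
            _ = (N * A4) * (N * B4) := by ring
            _ ≤ (9 ^ (d'+1) * a ^ 2) * (9 ^ d' * b ^ 2) :=
                mul_le_mul hA4 hB4 (by positivity) (by positivity)
            _ = (3 ^ (2*d'+1) * (a * b)) ^ 2 := by rw [mul_pow, ← h9]; ring
        · positivity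
      have e9 : (9:ℝ) ^ (d'+1) = 9 * 9 ^ d' := by rw [pow_succ]; ring
      have e3 : (3:ℝ) ^ (2*d'+1) = 3 * 9 ^ d' := by
        rw [show (9:ℝ) = 3^2 by norm_num, ← pow_mul, pow_succ]
        ring_nf
      have hM : (0:ℝ) ≤ (9:ℝ) ^ d' := by positivity
      nlinarith [hA4, hB4, hcross, mul_nonneg hM (sq_nonneg b), sq_nonneg (a+b)]

theorem moment_pow (m : ℕ) (d : ℕ) (c : Finset ι → ℝ) (hc : ∀ T, c T ≠ 0 → T.card ≤ d) :
    ((2:ℝ) ^ (Fintype.card ι)) ^ (2^m - 1) * ∑ y : ι → Bool, (FF c y) ^ (2^(m+1))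
      ≤ 3 ^ (m * d * 2^m) * (∑ y : ι → Bool, (FF c y) ^ 2) ^ (2^m) := by
  induction m generalizing c d with
  | zero => simp
  | succ m ih =>
    have hc2 : ∀ T, conv c c T ≠ 0 → T.card ≤ d + d := fun T h =>
      (conv_supp (fun T h => ⟨Finset.subset_univ T, hc T h⟩)
        (fun T h => ⟨Finset.subset_univ T, hc T h⟩) T h).2
    have IH := ih (d + d) (conv c c) hc2
    have epow : ∀ y : ι → Bool, ∀ n : ℕ, (FF (conv c c) y) ^ n = (FF c y) ^ (2 * n) := by
      intro y n
      rw [← FF_mul, ← sq, pow_mul]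
    have e1 : ∑ y : ι → Bool, (FF (conv c c) y) ^ (2^(m+1))
        = ∑ y : ι → Bool, (FF c y) ^ (2^(m+2)) := by
      refine Finset.sum_congr rfl fun y _ => ?_
      rw [epow y, ← pow_succ']
    have e2 : ∑ y : ι → Bool, (FF (conv c c) y) ^ 2 = ∑ y : ι → Bool, (FF c y) ^ 4 := by
      refine Finset.sum_congr rfl fun y _ => ?_
      rw [epow y]
    rw [e1, e2] at IH
    have hB := bonami4 univ d c (fun T h => ⟨Finset.subset_univ T, hc T h⟩)
    have hNn : (0:ℝ) ≤ (2:ℝ) ^ (Fintype.card ι) := by positivity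
    have hf4 : (0:ℝ) ≤ ∑ y : ι → Bool, (FF c y) ^ 4 :=
      Finset.sum_nonneg fun y _ => by positivity
    have hNf4 : (0:ℝ) ≤ (2:ℝ) ^ (Fintype.card ι) * ∑ y : ι → Bool, (FF c y) ^ 4 :=
      mul_nonneg hNn hf4
    have hexp : (2:ℕ)^(m+1) - 1 = 2^m + (2^m - 1) := by
      have h : (2:ℕ)^(m+1) = 2^m + 2^m := by rw [pow_succ]; omega
      have h1 : 1 ≤ (2:ℕ)^m := Nat.one_le_two_pow
      omega
    calc ((2:ℝ) ^ (Fintype.card ι)) ^ (2^(m+1) - 1) * ∑ y : ι → Bool, (FF c y) ^ (2^(m+2))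
        = ((2:ℝ) ^ (Fintype.card ι)) ^ (2^m)
          * (((2:ℝ) ^ (Fintype.card ι)) ^ (2^m - 1) * ∑ y : ι → Bool, (FF c y) ^ (2^(m+2))) := by
          rw [hexp, pow_add]
          ring
      _ ≤ ((2:ℝ) ^ (Fintype.card ι)) ^ (2^m)
          * (3 ^ (m * (d + d) * 2^m) * (∑ y : ι → Bool, (FF c y) ^ 4) ^ (2^m)) :=
          mul_le_mul_of_nonneg_left IH (by positivity)
      _ = 3 ^ (m * (d + d) * 2^m)
          * ((2:ℝ) ^ (Fintype.card ι) * ∑ y : ι → Bool, (FF c y) ^ 4) ^ (2^m) := by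
          rw [mul_pow]
          ring
      _ ≤ 3 ^ (m * (d + d) * 2^m)
          * (9 ^ d * (∑ y : ι → Bool, (FF c y) ^ 2) ^ 2) ^ (2^m) := by
          apply mul_le_mul_of_nonneg_left _ (by positivity)
          exact pow_le_pow_left₀ hNf4 hB _
      _ = 3 ^ ((m+1) * d * 2^(m+1)) * (∑ y : ι → Bool, (FF c y) ^ 2) ^ (2^(m+1)) := by
          rw [show (9:ℝ) = 3^2 by norm_num, mul_pow, ← pow_mul, ← pow_mul, ← mul_assoc,
            ← pow_add, show m * (d + d) * 2 ^ m + 2 * (d * 2 ^ m) = (m+1) * d * 2^(m+1) by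
              rw [pow_succ]; ring]
          rw [← pow_mul]
          congr 1
          rw [pow_succ]
          ring

lemma young_pt (M : ℕ) (hM : 1 ≤ M) (x t : ℝ) (ht : 0 < t) :
    x ≤ t + x ^ (2*M) / t ^ (2*M-1) := by
  have hxe : x ^ (2*M) = |x| ^ (2*M) := by
    rw [← abs_pow, abs_of_nonneg]
    rw [pow_mul]
    positivity
  rcases le_or_gt |x| t with h | h
  · have h2 : 0 ≤ x ^ (2*M) / t ^ (2*M-1) := by
      rw [hxe]
      positivity
    calc x ≤ |x| := le_abs_self x
      _ ≤ t := h
      _ ≤ t + x ^ (2*M) / t ^ (2*M-1) := by linarith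
  · have hx0 : 0 < |x| := lt_trans ht h
    have hr : 2*M = (2*M-1) + 1 := by omega
    have habs : |x| ≤ |x| ^ (2*M) / t ^ (2*M-1) := by
      rw [le_div_iff₀ (by positivity)]
      calc |x| * t ^ (2*M-1) ≤ |x| * |x| ^ (2*M-1) := by
            apply mul_le_mul_of_nonneg_left _ (le_of_lt hx0)
            exact pow_le_pow_left₀ (le_of_lt ht) (le_of_lt h) _
        _ = |x| ^ (2*M) := by
            rw [mul_comm, ← pow_succ]
            congr 1
            omega
    calc x ≤ |x| := le_abs_self x
      _ ≤ |x| ^ (2*M) / t ^ (2*M-1) := habs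
      _ = x ^ (2*M) / t ^ (2*M-1) := by rw [← hxe]
      _ ≤ t + x ^ (2*M) / t ^ (2*M-1) := by linarith

lemma levelW (k : ℕ) (hk : 2 ≤ k) (qq : (ι → Bool) → ℝ)
    (hqq0 : ∀ Y, 0 ≤ qq Y) (hqq1 : ∑ Y : ι → Bool, qq Y = 1)
    (hqqb : ∀ Y, qq Y * (2:ℝ) ^ (Fintype.card ι) ≤ 2 ^ k) (s : ℕ) :
    ∑ T ∈ univ.filter (fun T : Finset ι => T.card = s),
        (∑ Y : ι → Bool, qq Y * chi T Y) ^ 2 ≤ 16 * (k:ℝ) ^ (2*s) := by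
  classical
  set hq : Finset ι → ℝ := fun T => ∑ Y : ι → Bool, qq Y * chi T Y with hhq
  set W : ℝ := ∑ T ∈ univ.filter (fun T : Finset ι => T.card = s), (hq T) ^ 2 with hWdef
  set N : ℝ := (2:ℝ) ^ (Fintype.card ι) with hNdef
  have hN : (0:ℝ) < N := by positivity
  set cs : Finset ι → ℝ := fun T => if T.card = s then hq T else 0 with hcs
  have hW0 : 0 ≤ W := Finset.sum_nonneg fun T _ => sq_nonneg _
  show W ≤ 16 * (k:ℝ) ^ (2*s)
  -- clog setup
  have hclog : 0 < Nat.clog 2 k := Nat.clog_pos (by norm_num) hk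
  set m : ℕ := Nat.clog 2 k - 1 with hmdef
  have hj : Nat.clog 2 k = m + 1 := by omega
  set M : ℕ := 2 ^ m with hMdef
  have hM1 : 1 ≤ M := Nat.one_le_two_pow
  have hkle : k ≤ 2 * M := by
    have h := Nat.le_pow_clog (by norm_num : 1 < 2) k
    rw [hj, pow_succ] at h
    omega
  have h2mk : ((2:ℕ) ^ m : ℕ) < k := by
    have h := Nat.pow_pred_clog_lt_self (by norm_num : 1 < 2) (by omega : 1 < k)
    rwa [Nat.pred_eq_sub_one, ← hmdef] at h
  have h3m : (3:ℝ) ^ m ≤ (k:ℝ) ^ 2 := by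
    have h2 : ((2:ℝ)) ^ m ≤ (k:ℝ) := by
      have : (((2:ℕ) ^ m : ℕ) : ℝ) ≤ (k:ℝ) := by exact_mod_cast le_of_lt h2mk
      push_cast at this
      exact this
    calc (3:ℝ) ^ m ≤ (4:ℝ) ^ m := pow_le_pow_left₀ (by norm_num) (by norm_num) m
      _ = ((2:ℝ) ^ m) ^ 2 := by rw [← pow_mul, show m*2 = 2*m by ring, pow_mul]; norm_num
      _ ≤ (k:ℝ) ^ 2 := pow_le_pow_left₀ (by positivity) h2 2
  -- basic sums
  have hcs2 : ∑ T : Finset ι, (cs T) ^ 2 = W := by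
    rw [hWdef, Finset.sum_filter]
    refine Finset.sum_congr rfl fun T _ => ?_
    by_cases h : T.card = s
    · simp [hcs, h]
    · simp [hcs, h]
  have hsum2 : ∑ Y : ι → Bool, (FF cs Y) ^ 2 = W * N := by
    rw [sum_FF_sq, hcs2, hNdef]
  have hsumq : ∑ Y : ι → Bool, qq Y * FF cs Y = W := by
    have expand : ∀ Y : ι → Bool, qq Y * FF cs Y
        = ∑ T : Finset ι, cs T * (qq Y * chi T Y) := by
      intro Y
      simp only [FF, Finset.mul_sum]
      exact Finset.sum_congr rfl fun T _ => by ring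
    rw [Finset.sum_congr rfl fun Y _ => expand Y, Finset.sum_comm]
    have e : ∀ T : Finset ι, ∑ Y : ι → Bool, cs T * (qq Y * chi T Y) = cs T * hq T := by
      intro T
      rw [← Finset.mul_sum]
    rw [Finset.sum_congr rfl fun T _ => e T, hWdef, Finset.sum_filter]
    refine Finset.sum_congr rfl fun T _ => ?_
    by_cases h : T.card = s <;> simp [hcs, h, sq]
  -- moment bound
  have hdeg : ∀ T, cs T ≠ 0 → T.card ≤ s := by
    intro T h
    rw [hcs] at h
    by_cases hc : T.card = s
    · omega
    · simp [hc] at h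
  have moment := moment_pow m s cs hdeg
  rw [hsum2] at moment
  have hP0 : (0:ℝ) ≤ ∑ Y : ι → Bool, (FF cs Y) ^ (2 ^ (m+1)) := by
    apply Finset.sum_nonneg
    intro Y _
    rw [pow_succ, pow_mul]
    positivity
  have hP : ∑ Y : ι → Bool, (FF cs Y) ^ (2*M) ≤ 3 ^ (m*s*M) * W ^ M * N := by
    have h2M : 2 ^ (m+1) = 2 * M := by rw [pow_succ, hMdef]; ring
    have hNM : (0:ℝ) < N ^ (M - 1) := by positivity
    rw [h2M] at moment
    rw [mul_pow] at moment
    -- moment : N^(2^m -1) * Σ f^(2M) ≤ 3^(m*s*2^m) * (W^(2^m) * N^(2^m))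
    have hMm : (2:ℕ) ^ m = M := rfl
    rw [hMm] at moment
    have hNsplit : N ^ M = N ^ (M - 1) * N := by
      rw [← pow_succ]
      congr 1
      omega
    rw [hNsplit] at moment
    apply le_of_mul_le_mul_left _ hNM
    calc N ^ (M-1) * ∑ Y : ι → Bool, (FF cs Y) ^ (2*M)
        ≤ 3 ^ (m*s*M) * (W ^ M * (N ^ (M-1) * N)) := moment
      _ = N ^ (M-1) * (3 ^ (m*s*M) * W ^ M * N) := by ring
  -- Young
  by_cases hWz : W = 0
  · rw [hWz]; positivity
  have hWpos : 0 < W := lt_of_le_of_ne hW0 (Ne.symm hWz)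
  set C : ℝ := (2:ℝ) ^ ((k:ℝ)/(2*M)) * Real.sqrt ((3:ℝ) ^ (m*s)) with hCdef
  have hC : 0 < C := by
    apply mul_pos (Real.rpow_pos_of_pos (by norm_num) _)
    apply Real.sqrt_pos.2
    positivity
  set t : ℝ := C * Real.sqrt W with htdef
  have ht : 0 < t := mul_pos hC (Real.sqrt_pos.2 hWpos)
  have ht2M : t ^ (2*M) = (2:ℝ) ^ k * 3 ^ (m*s*M) * W ^ M := by
    rw [htdef, hCdef, mul_pow, mul_pow]
    have hMpos : (0:ℝ) < (M:ℝ) := by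
      have : (0:ℕ) < M := hM1
      exact_mod_cast this
    have e1 : ((2:ℝ) ^ ((k:ℝ)/(2*M))) ^ (2*M) = (2:ℝ) ^ k := by
      rw [← Real.rpow_natCast ((2:ℝ) ^ ((k:ℝ)/(2*M))) (2*M), ← Real.rpow_mul (by norm_num)]
      have harg : (k:ℝ) / (2 * (M:ℝ)) * ((2*M : ℕ):ℝ) = ((k:ℕ):ℝ) := by
        push_cast
        field_simp
      rw [harg, Real.rpow_natCast]
    have e2 : (Real.sqrt ((3:ℝ) ^ (m*s))) ^ (2*M) = (3:ℝ) ^ (m*s*M) := by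
      rw [pow_mul, Real.sq_sqrt (by positivity : (0:ℝ) ≤ (3:ℝ) ^ (m*s)), ← pow_mul]
    have e3 : (Real.sqrt W) ^ (2*M) = W ^ M := by
      rw [pow_mul, Real.sq_sqrt hW0]
    rw [e1, e2, e3]
  have hyoung : W ≤ t + ((2:ℝ)^k * 3 ^ (m*s*M) * W ^ M) / t ^ (2*M-1) := by
    have step1 : W ≤ t + (∑ Y : ι → Bool, qq Y * (FF cs Y) ^ (2*M)) / t ^ (2*M-1) := by
      rw [← hsumq]
      have hpt : ∀ Y : ι → Bool, qq Y * FF cs Y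
          ≤ qq Y * t + (qq Y * (FF cs Y) ^ (2*M)) / t ^ (2*M-1) := by
        intro Y
        have := young_pt M hM1 (FF cs Y) t ht
        have h2 := mul_le_mul_of_nonneg_left this (hqq0 Y)
        calc qq Y * FF cs Y ≤ qq Y * (t + (FF cs Y) ^ (2*M) / t ^ (2*M-1)) := h2
          _ = qq Y * t + (qq Y * (FF cs Y) ^ (2*M)) / t ^ (2*M-1) := by ring
      calc ∑ Y : ι → Bool, qq Y * FF cs Y
          ≤ ∑ Y : ι → Bool, (qq Y * t + (qq Y * (FF cs Y) ^ (2*M)) / t ^ (2*M-1)) :=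
            Finset.sum_le_sum fun Y _ => hpt Y
        _ = (∑ Y : ι → Bool, qq Y) * t
            + (∑ Y : ι → Bool, qq Y * (FF cs Y) ^ (2*M)) / t ^ (2*M-1) := by
            rw [Finset.sum_add_distrib, Finset.sum_mul, Finset.sum_div]
        _ = t + (∑ Y : ι → Bool, qq Y * (FF cs Y) ^ (2*M)) / t ^ (2*M-1) := by
            rw [hqq1, one_mul]
    have step2 : ∑ Y : ι → Bool, qq Y * (FF cs Y) ^ (2*M)
        ≤ (2:ℝ)^k * 3 ^ (m*s*M) * W ^ M := by
      have hpt2 : ∀ Y : ι → Bool, qq Y * (FF cs Y) ^ (2*M)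
          ≤ ((2:ℝ)^k / N) * (FF cs Y) ^ (2*M) := by
        intro Y
        have hfnn : (0:ℝ) ≤ (FF cs Y) ^ (2*M) := by rw [pow_mul]; positivity
        apply mul_le_mul_of_nonneg_right _ hfnn
        rw [le_div_iff₀ hN]
        exact hqqb Y
      calc ∑ Y : ι → Bool, qq Y * (FF cs Y) ^ (2*M)
          ≤ ∑ Y : ι → Bool, ((2:ℝ)^k / N) * (FF cs Y) ^ (2*M) :=
            Finset.sum_le_sum fun Y _ => hpt2 Y
        _ = ((2:ℝ)^k / N) * ∑ Y : ι → Bool, (FF cs Y) ^ (2*M) := by rw [Finset.mul_sum]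
        _ ≤ ((2:ℝ)^k / N) * (3 ^ (m*s*M) * W ^ M * N) := by
            apply mul_le_mul_of_nonneg_left hP (by positivity)
        _ = (2:ℝ)^k * 3 ^ (m*s*M) * W ^ M := by field_simp
    calc W ≤ t + (∑ Y : ι → Bool, qq Y * (FF cs Y) ^ (2*M)) / t ^ (2*M-1) := step1
      _ ≤ t + ((2:ℝ)^k * 3 ^ (m*s*M) * W ^ M) / t ^ (2*M-1) := by
          apply add_le_add le_rfl
          apply div_le_div_of_nonneg_right step2 (by positivity)
  have hW2t : W ≤ 2 * t := by
    have heq : ((2:ℝ)^k * 3 ^ (m*s*M) * W ^ M) / t ^ (2*M-1) = t := by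
      rw [← ht2M]
      rw [show 2*M = (2*M-1) + 1 by omega, pow_succ]
      field_simp
      rw [Nat.add_sub_cancel]
    rw [heq] at hyoung
    linarith
  -- conclude
  have hsw : Real.sqrt W ≤ 2 * C := by
    have hws : W = Real.sqrt W * Real.sqrt W := (Real.mul_self_sqrt hW0).symm
    have h2 : Real.sqrt W * Real.sqrt W ≤ (2 * C) * Real.sqrt W := by
      calc Real.sqrt W * Real.sqrt W = W := (Real.mul_self_sqrt hW0)
        _ ≤ 2 * t := hW2t
        _ = (2 * C) * Real.sqrt W := by rw [htdef]; ring
    exact le_of_mul_le_mul_right h2 (Real.sqrt_pos.2 hWpos)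
  have hfin : W ≤ 4 * C ^ 2 := by
    calc W = (Real.sqrt W) ^ 2 := (Real.sq_sqrt hW0).symm
      _ ≤ (2 * C) ^ 2 := pow_le_pow_left₀ (Real.sqrt_nonneg W) hsw 2
      _ = 4 * C ^ 2 := by ring
  have hCsq : C ^ 2 ≤ 4 * (k:ℝ) ^ (2*s) := by
    rw [hCdef, mul_pow, Real.sq_sqrt (by positivity : (0:ℝ) ≤ (3:ℝ) ^ (m*s))]
    have e1 : ((2:ℝ) ^ ((k:ℝ)/(2*M))) ^ 2 = (2:ℝ) ^ ((k:ℝ)/M) := by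
      rw [← Real.rpow_natCast ((2:ℝ) ^ ((k:ℝ)/(2*M))) 2, ← Real.rpow_mul (by norm_num)]
      congr 1
      have hMne : (M:ℝ) ≠ 0 := by
        have : (0:ℕ) < M := hM1
        exact_mod_cast Nat.pos_iff_ne_zero.1 this
      push_cast
      field_simp
    have e2 : (2:ℝ) ^ ((k:ℝ)/M) ≤ 4 := by
      have hMpos : (0:ℝ) < (M:ℝ) := by exact_mod_cast hM1
      have hexple : (k:ℝ)/M ≤ 2 := by
        rw [div_le_iff₀ hMpos]
        have : (k:ℝ) ≤ 2*M := by exact_mod_cast hkle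
        linarith
      calc (2:ℝ) ^ ((k:ℝ)/M) ≤ (2:ℝ) ^ (2:ℝ) :=
            Real.rpow_le_rpow_of_exponent_le (by norm_num) hexple
        _ = 4 := by
            rw [show (2:ℝ) = ((2:ℕ):ℝ) by norm_num, Real.rpow_natCast]
            norm_num
    have e3 : (3:ℝ) ^ (m*s) ≤ (k:ℝ) ^ (2*s) := by
      calc (3:ℝ) ^ (m*s) = ((3:ℝ) ^ m) ^ s := by rw [pow_mul]
        _ ≤ ((k:ℝ) ^ 2) ^ s := pow_le_pow_left₀ (by positivity) h3m s
        _ = (k:ℝ) ^ (2*s) := by rw [pow_mul]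
    rw [e1]
    exact mul_le_mul e2 e3 (by positivity) (by norm_num)
  linarith [hfin, hCsq]

lemma one_add_pow_le (x : ℝ) (hx : 0 ≤ x) :
    ∀ n : ℕ, 2*(n:ℝ)*x ≤ 1 → (1+x) ^ n ≤ 1 + 2*(n:ℝ)*x := by
  intro n
  induction n with
  | zero => simp
  | succ n ih =>
    intro hc
    have hxn : (0:ℝ) ≤ (n:ℝ) := Nat.cast_nonneg n
    have hcn : 2*(n:ℝ)*x ≤ 1 := by
      have : 2*(n:ℝ)*x ≤ 2*((n:ℕ)+1:ℝ)*x := by nlinarith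
      push_cast at hc ⊢
      nlinarith
    have hih := ih hcn
    have h1x : (0:ℝ) ≤ 1 + x := by linarith
    calc (1+x) ^ (n+1) = (1+x)^n * (1+x) := by rw [pow_succ]
      _ ≤ (1 + 2*(n:ℝ)*x) * (1+x) := by
          apply mul_le_mul_of_nonneg_right hih h1x
      _ ≤ 1 + 2*((n:ℕ)+1:ℝ)*x := by push_cast at hcn ⊢; nlinarith
      _ = 1 + 2*((n+1:ℕ):ℝ)*x := by push_cast; ring

end LIL

open LIL in
/-- Large Index Lemma. -/
theorem statement2 (ℓ k : ℕ) (hℓ : 1 ≤ ℓ) (hk : 2 ≤ k)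
    (p : (Fin k → Fin ℓ) → ℝ) (q : (Fin k → Fin ℓ → Bool) → ℝ)
    (hp0 : ∀ x, 0 ≤ p x) (hp1 : ∑ x, p x = 1)
    (hq0 : ∀ y, 0 ≤ q y) (hq1 : ∑ y, q y = 1)
    (hblock : ∀ S : Finset (Fin k), S.Nonempty → ∀ α : Fin k → Fin ℓ,
      ∑ x ∈ univ.filter (fun x => ∀ i ∈ S, x i = α i), p x
        ≤ (2 : ℝ) ^ (-(50 * Real.logb 2 (k : ℝ) * (S.card : ℝ))))
    (hdef : ∀ y, q y ≤ (2 : ℝ) ^ ((k : ℝ) - (ℓ : ℝ) * (k : ℝ))) :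
    ∃ x : Fin k → Fin ℓ, 0 < p x ∧
      ∀ z : Fin k → Bool,
        |(∑ y ∈ univ.filter (fun y : Fin k → Fin ℓ → Bool =>
              ∀ i, y i (x i) = z i), q y) - 1 / 2 ^ k|
          ≤ (1 / (k : ℝ) ^ 3) / 2 ^ k := by
  classical
  have hk2 : (2:ℝ) ≤ (k:ℝ) := by exact_mod_cast hk
  have hkpos : (0:ℝ) < (k:ℝ) := by linarith
  have hkne : (k:ℝ) ≠ 0 := ne_of_gt hkpos
  -- transfer to the product cube
  set E : ((Fin k × Fin ℓ) → Bool) → (Fin k → Fin ℓ → Bool) :=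
    fun Y i a => Y (i,a) with hEdef
  have hEbij : Function.Bijective E := (Equiv.curry (Fin k) (Fin ℓ) Bool).bijective
  have hEsum : ∀ G : (Fin k → Fin ℓ → Bool) → ℝ,
      ∑ Y : (Fin k × Fin ℓ) → Bool, G (E Y) = ∑ y : Fin k → Fin ℓ → Bool, G y := by
    intro G
    exact Fintype.sum_bijective E hEbij _ _ (fun Y => rfl)
  set qq : ((Fin k × Fin ℓ) → Bool) → ℝ := fun Y => q (E Y) with hqqdef
  have hqq0 : ∀ Y, 0 ≤ qq Y := fun Y => hq0 _
  have hqq1 : ∑ Y : (Fin k × Fin ℓ) → Bool, qq Y = 1 := (hEsum q).trans hq1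
  have hcard : Fintype.card (Fin k × Fin ℓ) = k * ℓ := by simp
  have hqqb : ∀ Y, qq Y * (2:ℝ) ^ (Fintype.card (Fin k × Fin ℓ)) ≤ 2 ^ k := by
    intro Y
    have h1 := hdef (E Y)
    have h2 : (2:ℝ) ^ ((k:ℝ) - (ℓ:ℝ)*(k:ℝ)) * (2:ℝ) ^ (Fintype.card (Fin k × Fin ℓ))
        = 2 ^ k := by
      rw [hcard, ← Real.rpow_natCast (2:ℝ) (k*ℓ), ← Real.rpow_add (by norm_num),
        ← Real.rpow_natCast (2:ℝ) k]
      congr 1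
      push_cast
      ring
    calc qq Y * (2:ℝ) ^ (Fintype.card (Fin k × Fin ℓ))
        ≤ (2:ℝ) ^ ((k:ℝ) - (ℓ:ℝ)*(k:ℝ)) * (2:ℝ) ^ (Fintype.card (Fin k × Fin ℓ)) :=
          mul_le_mul_of_nonneg_right h1 (by positivity)
      _ = 2 ^ k := h2
  -- the Fourier coefficients
  set hqF : Finset (Fin k × Fin ℓ) → ℝ :=
    fun T => ∑ Y : (Fin k × Fin ℓ) → Bool, qq Y * chi T Y with hqFdef
  set gam : Finset (Fin k) → (Fin k → Fin ℓ) → Finset (Fin k × Fin ℓ) :=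
    fun S x => S.image (fun i => (i, x i)) with hgamdef
  set A : Finset (Fin k) → (Fin k → Fin ℓ) → ℝ := fun S x => hqF (gam S x) with hAdef
  have hgamcard : ∀ S x, (gam S x).card = S.card := by
    intro S x
    apply Finset.card_image_of_injOn
    intro i _ j _ h
    simpa using congrArg Prod.fst h
  have hA_eq : ∀ S (x : Fin k → Fin ℓ),
      A S x = ∑ y : Fin k → Fin ℓ → Bool, q y * ∏ i ∈ S, sg (y i (x i)) := by
    intro S x
    have hinj : ∀ i ∈ S, ∀ j ∈ S, (i, x i) = (j, x j) → i = j :=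
      fun i _ j _ h => by simpa using congrArg Prod.fst h
    have hchi : ∀ Y : (Fin k × Fin ℓ) → Bool,
        chi (gam S x) Y = ∏ i ∈ S, sg (Y (i, x i)) := by
      intro Y
      simp only [hgamdef, chi]
      exact Finset.prod_image hinj
    calc A S x = ∑ Y : (Fin k × Fin ℓ) → Bool, qq Y * chi (gam S x) Y := by
          simp only [hAdef, hqFdef]
      _ = ∑ Y : (Fin k × Fin ℓ) → Bool, qq Y * ∏ i ∈ S, sg (Y (i, x i)) :=
          Finset.sum_congr rfl fun Y _ => by rw [hchi Y]
      _ = ∑ y : Fin k → Fin ℓ → Bool, q y * ∏ i ∈ S, sg (y i (x i)) :=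
          hEsum (fun y => q y * ∏ i ∈ S, sg (y i (x i)))
  have hA_empty : ∀ x, A ∅ x = 1 := by
    intro x
    rw [hA_eq]
    simp [hq1]
  have hA_dep : ∀ S (x x' : Fin k → Fin ℓ), (∀ i ∈ S, x i = x' i) → A S x = A S x' := by
    intro S x x' h
    simp only [hAdef]
    congr 1
    simp only [hgamdef]
    exact Finset.image_congr (fun i hi => by rw [h i hi])
  -- Φ
  set Φ : (Fin k → Fin ℓ) → ℝ :=
    fun x => ∑ S ∈ univ.filter (fun S : Finset (Fin k) => S.Nonempty), |A S x| with hΦdef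
  have hΦ0 : ∀ x, 0 ≤ Φ x := fun x => Finset.sum_nonneg fun S _ => abs_nonneg _
  -- expansion
  have hexpand : ∀ (x : Fin k → Fin ℓ) (z : Fin k → Bool),
      (∑ y ∈ univ.filter (fun y : Fin k → Fin ℓ → Bool => ∀ i, y i (x i) = z i), q y)
      = (1/2^k) * ∑ S : Finset (Fin k), (∏ i ∈ S, sg (z i)) * A S x := by
    intro x z
    rw [Finset.sum_filter]
    have hpt : ∀ y : Fin k → Fin ℓ → Bool,
        (if (∀ i, y i (x i) = z i) then q y else 0)
        = q y * ((1/2^k) * ∏ i, (1 + sg (z i) * sg (y i (x i)))) := by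
      intro y
      by_cases hcond : ∀ i, y i (x i) = z i
      · rw [if_pos hcond]
        have h2 : ∀ i : Fin k, (1 + sg (z i) * sg (y i (x i))) = 2 := by
          intro i
          rw [hcond i]
          cases z i <;> norm_num [sg]
        rw [Finset.prod_congr rfl fun i _ => h2 i, Finset.prod_const, card_univ,
          Fintype.card_fin]
        have : (1:ℝ)/2^k * 2^k = 1 := by
          field_simp
        rw [this, mul_one]
      · rw [if_neg hcond]
        push_neg at hcond
        obtain ⟨i0, hi0⟩ := hcond
        have h0 : (1 + sg (z i0) * sg (y i0 (x i0))) = 0 := by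
          revert hi0
          cases z i0 <;> cases y i0 (x i0) <;> simp [sg]
        rw [Finset.prod_eq_zero (Finset.mem_univ i0) h0]
        ring
    rw [Finset.sum_congr rfl fun y _ => hpt y]
    have hprod : ∀ y : Fin k → Fin ℓ → Bool,
        ∏ i, (1 + sg (z i) * sg (y i (x i)))
        = ∑ S : Finset (Fin k), (∏ i ∈ S, sg (z i)) * ∏ i ∈ S, sg (y i (x i)) := by
      intro y
      have h1 : ∀ i : Fin k, (1 + sg (z i) * sg (y i (x i)))
          = (sg (z i) * sg (y i (x i)) + 1) := fun i => by ring
      rw [Finset.prod_congr rfl fun i _ => h1 i,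
        Finset.prod_add (fun i => sg (z i) * sg (y i (x i))) (fun _ => (1:ℝ)) univ]
      rw [Finset.powerset_univ]
      refine Finset.sum_congr rfl fun S _ => ?_
      rw [Finset.prod_const_one, mul_one, Finset.prod_mul_distrib]
    calc ∑ y : Fin k → Fin ℓ → Bool, q y * ((1/2^k) * ∏ i, (1 + sg (z i) * sg (y i (x i))))
        = (1/2^k) * ∑ y : Fin k → Fin ℓ → Bool,
            q y * ∑ S : Finset (Fin k), (∏ i ∈ S, sg (z i)) * ∏ i ∈ S, sg (y i (x i)) := by
          rw [Finset.mul_sum]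
          refine Finset.sum_congr rfl fun y _ => ?_
          rw [hprod y]
          ring
      _ = (1/2^k) * ∑ S : Finset (Fin k), (∏ i ∈ S, sg (z i))
            * ∑ y : Fin k → Fin ℓ → Bool, q y * ∏ i ∈ S, sg (y i (x i)) := by
          congr 1
          calc ∑ y : Fin k → Fin ℓ → Bool,
                q y * ∑ S : Finset (Fin k), (∏ i ∈ S, sg (z i)) * ∏ i ∈ S, sg (y i (x i))
              = ∑ y : Fin k → Fin ℓ → Bool, ∑ S : Finset (Fin k),
                  (∏ i ∈ S, sg (z i)) * (q y * ∏ i ∈ S, sg (y i (x i))) := by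
                refine Finset.sum_congr rfl fun y _ => ?_
                rw [Finset.mul_sum]
                exact Finset.sum_congr rfl fun S _ => by ring
            _ = ∑ S : Finset (Fin k), ∑ y : Fin k → Fin ℓ → Bool,
                  (∏ i ∈ S, sg (z i)) * (q y * ∏ i ∈ S, sg (y i (x i))) := Finset.sum_comm
            _ = ∑ S : Finset (Fin k), (∏ i ∈ S, sg (z i))
                  * ∑ y : Fin k → Fin ℓ → Bool, q y * ∏ i ∈ S, sg (y i (x i)) := by
                refine Finset.sum_congr rfl fun S _ => ?_
                rw [← Finset.mul_sum]
      _ = (1/2^k) * ∑ S : Finset (Fin k), (∏ i ∈ S, sg (z i)) * A S x := by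
          refine congrArg _ (Finset.sum_congr rfl fun S _ => ?_)
          rw [hA_eq S x]
  -- per-S bound
  have hperS : ∀ S : Finset (Fin k), S.Nonempty →
      ∑ x : Fin k → Fin ℓ, p x * |A S x| ≤ 4 * (((k:ℝ)^24)⁻¹) ^ S.card := by
    intro S hS
    set s := S.card with hsdef
    have hd0 : Nonempty (Fin ℓ) := ⟨⟨0, hℓ⟩⟩
    set d0 : Fin ℓ := ⟨0, hℓ⟩ with hd0def
    set ρ : (Fin k → Fin ℓ) → (Fin k → Fin ℓ) :=
      fun x i => if i ∈ S then x i else d0 with hρ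
    have hρρ : ∀ x, ρ (ρ x) = ρ x := by
      intro x
      funext i
      simp only [hρ]
      by_cases h : i ∈ S <;> simp [h]
    set reps := univ.filter (fun α => ρ α = α) with hreps
    have hmaps : ∀ x : Fin k → Fin ℓ, x ∈ (univ : Finset (Fin k → Fin ℓ)) → ρ x ∈ reps :=
      fun x _ => Finset.mem_filter.2 ⟨Finset.mem_univ _, hρρ x⟩
    have hgroup : ∀ f : (Fin k → Fin ℓ) → ℝ,
        ∑ α ∈ reps, ∑ x ∈ univ.filter (fun x => ρ x = α), f x = ∑ x, f x :=
      fun f => Finset.sum_fiberwise_of_maps_to hmaps f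
    set w : (Fin k → Fin ℓ) → ℝ :=
      fun α => ∑ x ∈ univ.filter (fun x => ρ x = α), p x with hwdef
    have hw0 : ∀ α, 0 ≤ w α := fun α => Finset.sum_nonneg fun x _ => hp0 x
    have hw1 : ∑ α ∈ reps, w α = 1 := (hgroup p).trans hp1
    have hfibereq : ∀ α, ∀ x ∈ univ.filter (fun x => ρ x = α), A S x = A S α := by
      intro α x hx
      rw [Finset.mem_filter] at hx
      apply hA_dep
      intro i hi
      have h := congrFun hx.2 i
      simpa only [hρ, if_pos hi] using h
    have hsplit : ∑ x : Fin k → Fin ℓ, p x * |A S x| = ∑ α ∈ reps, w α * |A S α| := by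
      rw [← hgroup (fun x => p x * |A S x|)]
      refine Finset.sum_congr rfl fun α hα => ?_
      rw [hwdef]
      simp only []
      rw [Finset.sum_mul]
      refine Finset.sum_congr rfl fun x hx => ?_
      rw [hfibereq α x hx]
    have hwb : ∀ α ∈ reps, w α ≤ ((k:ℝ)^(50*s))⁻¹ := by
      intro α hα
      have hsub : univ.filter (fun x => ρ x = α)
          ⊆ univ.filter (fun x => ∀ i ∈ S, x i = α i) := by
        intro x hx
        rw [Finset.mem_filter] at hx ⊢
        refine ⟨Finset.mem_univ _, fun i hi => ?_⟩
        have h := congrFun hx.2 i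
        simpa only [hρ, if_pos hi] using h
      have h1 : w α ≤ ∑ x ∈ univ.filter (fun x => ∀ i ∈ S, x i = α i), p x :=
        Finset.sum_le_sum_of_subset_of_nonneg hsub (fun x _ _ => hp0 x)
      have h2 := hblock S hS α
      have h3 : (2:ℝ) ^ (-(50 * Real.logb 2 (k:ℝ) * (S.card:ℝ))) = ((k:ℝ)^(50*s))⁻¹ := by
        rw [Real.rpow_neg (by norm_num : (0:ℝ) ≤ 2)]
        congr 1
        rw [show 50 * Real.logb 2 (k:ℝ) * (S.card:ℝ)
            = Real.logb 2 (k:ℝ) * (50*(s:ℝ)) by rw [hsdef]; ring]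
        rw [Real.rpow_mul (by norm_num : (0:ℝ) ≤ 2),
          Real.rpow_logb (by norm_num) (by norm_num) hkpos]
        rw [show (50*(s:ℝ)) = ((50*s : ℕ):ℝ) by push_cast; ring, Real.rpow_natCast]
      rw [h3] at h2
      linarith
    have hw2 : ∑ α ∈ reps, (w α)^2 ≤ ((k:ℝ)^(50*s))⁻¹ := by
      calc ∑ α ∈ reps, (w α)^2 ≤ ∑ α ∈ reps, ((k:ℝ)^(50*s))⁻¹ * w α := by
            refine Finset.sum_le_sum fun α hα => ?_
            rw [sq]
            exact mul_le_mul_of_nonneg_right (hwb α hα) (hw0 α)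
        _ = ((k:ℝ)^(50*s))⁻¹ := by rw [← Finset.mul_sum, hw1, mul_one]
    have hWS := levelW (ι := Fin k × Fin ℓ) k hk qq hqq0 hqq1 hqqb s
    have hMS : ∑ α ∈ reps, (A S α)^2 ≤ 16 * (k:ℝ)^(2*s) := by
      have hinj : ∀ α ∈ reps, ∀ β ∈ reps, gam S α = gam S β → α = β := by
        intro α hα β hβ h
        funext i
        by_cases hi : i ∈ S
        · have h1 : (i, α i) ∈ gam S β := by
            rw [← h]
            simp only [hgamdef]
            exact Finset.mem_image_of_mem _ hi
          simp only [hgamdef, Finset.mem_image] at h1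
          obtain ⟨j, hj, hj2⟩ := h1
          have hji : j = i := by simpa using congrArg Prod.fst hj2
          have := congrArg Prod.snd hj2
          simp only at this
          rw [← this, hji]
        · rw [hreps, Finset.mem_filter] at hα hβ
          have h1 := congrFun hα.2 i
          have h2 := congrFun hβ.2 i
          simp only [hρ, if_neg hi] at h1 h2
          rw [← h1, ← h2]
      have himg : ∑ T ∈ reps.image (gam S), (hqF T)^2
          = ∑ α ∈ reps, (hqF (gam S α))^2 := Finset.sum_image hinj
      have hsub2 : reps.image (gam S) ⊆ univ.filter
          (fun T : Finset (Fin k × Fin ℓ) => T.card = s) := by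
        intro T hT
        rw [Finset.mem_image] at hT
        obtain ⟨α, _, rfl⟩ := hT
        rw [Finset.mem_filter]
        exact ⟨Finset.mem_univ _, hgamcard S α⟩
      calc ∑ α ∈ reps, (A S α)^2 = ∑ α ∈ reps, (hqF (gam S α))^2 := by simp only [hAdef]
        _ = ∑ T ∈ reps.image (gam S), (hqF T)^2 := himg.symm
        _ ≤ ∑ T ∈ univ.filter (fun T : Finset (Fin k × Fin ℓ) => T.card = s), (hqF T)^2 :=
            Finset.sum_le_sum_of_subset_of_nonneg hsub2 (fun T _ _ => sq_nonneg _)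
        _ ≤ 16 * (k:ℝ)^(2*s) := by
            refine le_trans (le_of_eq ?_) hWS
            refine Finset.sum_congr rfl fun T _ => ?_
            simp only [hqFdef]
    have hcs := Finset.sum_mul_sq_le_sq_mul_sq reps w (fun α => |A S α|)
    have habs2 : ∑ α ∈ reps, |A S α|^2 = ∑ α ∈ reps, (A S α)^2 :=
      Finset.sum_congr rfl fun α _ => sq_abs _
    rw [habs2] at hcs
    have hLHS0 : 0 ≤ ∑ α ∈ reps, w α * |A S α| :=
      Finset.sum_nonneg fun α _ => mul_nonneg (hw0 α) (abs_nonneg _)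
    rw [hsplit]
    have hw2nn : 0 ≤ ∑ α ∈ reps, (w α)^2 := Finset.sum_nonneg fun α _ => sq_nonneg _
    apply pow_le_of_sq_le_sq (by positivity) _ hLHS0
    have hpowid : ((k:ℝ)^(50*s))⁻¹ * (16 * (k:ℝ)^(2*s)) = (4 * (((k:ℝ)^24)⁻¹) ^ s)^2 := by
      have hksne : ((k:ℝ)^s) ≠ 0 := pow_ne_zero _ hkne
      rw [show 50*s = s*50 by ring, show 2*s = s*2 by ring, pow_mul, pow_mul]
      rw [show (((k:ℝ)^24)⁻¹) ^ s = (((k:ℝ)^s)^24)⁻¹ by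
        rw [inv_pow, ← pow_mul, ← pow_mul, show 24*s = s*24 by ring]]
      field_simp
      ring
    calc (∑ α ∈ reps, w α * |A S α|)^2
        ≤ (∑ α ∈ reps, (w α)^2) * (∑ α ∈ reps, (A S α)^2) := hcs
      _ ≤ ((k:ℝ)^(50*s))⁻¹ * (16 * (k:ℝ)^(2*s)) := by
          apply mul_le_mul hw2 hMS (Finset.sum_nonneg fun α _ => sq_nonneg _) (by positivity)
      _ = (4 * (((k:ℝ)^24)⁻¹) ^ s)^2 := hpowid
  -- total bound
  have htotal : ∑ x : Fin k → Fin ℓ, p x * Φ x ≤ 1/(k:ℝ)^3 := by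
    set x₀ : ℝ := ((k:ℝ)^24)⁻¹ with hx₀
    have hx₀0 : 0 ≤ x₀ := by positivity
    have hswap : ∑ x : Fin k → Fin ℓ, p x * Φ x
        = ∑ S ∈ univ.filter (fun S : Finset (Fin k) => S.Nonempty),
            ∑ x : Fin k → Fin ℓ, p x * |A S x| := by
      calc ∑ x : Fin k → Fin ℓ, p x * Φ x
          = ∑ x : Fin k → Fin ℓ, ∑ S ∈ univ.filter (fun S : Finset (Fin k) => S.Nonempty),
              p x * |A S x| := by
            refine Finset.sum_congr rfl fun x _ => ?_
            rw [hΦdef]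
            simp only []
            rw [Finset.mul_sum]
        _ = ∑ S ∈ univ.filter (fun S : Finset (Fin k) => S.Nonempty),
              ∑ x : Fin k → Fin ℓ, p x * |A S x| := Finset.sum_comm
    have hbd : ∑ S ∈ univ.filter (fun S : Finset (Fin k) => S.Nonempty),
        ∑ x : Fin k → Fin ℓ, p x * |A S x|
        ≤ ∑ S ∈ univ.filter (fun S : Finset (Fin k) => S.Nonempty), 4 * x₀ ^ S.card :=
      Finset.sum_le_sum fun S hS => hperS S (Finset.mem_filter.1 hS).2
    have hbinom : ∑ S : Finset (Fin k), x₀ ^ S.card = (x₀ + 1)^k := by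
      have h := Finset.prod_add (fun _ : Fin k => x₀) (fun _ : Fin k => (1:ℝ)) univ
      rw [Finset.prod_const, card_univ, Fintype.card_fin, Finset.powerset_univ] at h
      rw [h]
      refine Finset.sum_congr rfl fun S _ => ?_
      rw [Finset.prod_const, Finset.prod_const_one, mul_one]
    have hne : univ.filter (fun S : Finset (Fin k) => ¬ S.Nonempty)
        = ({∅} : Finset (Finset (Fin k))) := by
      ext S
      simp [Finset.not_nonempty_iff_eq_empty]
    have hsplitS : ∑ S ∈ univ.filter (fun S : Finset (Fin k) => S.Nonempty), x₀ ^ S.card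
        = (x₀+1)^k - 1 := by
      have h := Finset.sum_filter_add_sum_filter_not univ
        (fun S : Finset (Fin k) => S.Nonempty) (fun S => x₀ ^ S.card)
      rw [hne, Finset.sum_singleton, Finset.card_empty, pow_zero, hbinom] at h
      linarith
    have h23 : (2:ℝ) ≤ (k:ℝ)^23 :=
      le_trans (by norm_num : (2:ℝ) ≤ 2^23) (pow_le_pow_left₀ (by norm_num) hk2 23)
    have h24 : 2*(k:ℝ) ≤ (k:ℝ)^24 := by
      calc 2*(k:ℝ) ≤ (k:ℝ)^23 * (k:ℝ) := by nlinarith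
        _ = (k:ℝ)^24 := by rw [← pow_succ]
    have hcond : 2*(k:ℝ)*x₀ ≤ 1 := by
      calc 2*(k:ℝ)*x₀ ≤ (k:ℝ)^24 * x₀ := mul_le_mul_of_nonneg_right h24 hx₀0
        _ = 1 := by rw [hx₀]; field_simp
    have hpow := one_add_pow_le x₀ hx₀0 k hcond
    have h8 : 8*(k:ℝ)*x₀ ≤ 1/(k:ℝ)^3 := by
      rw [hx₀, show 8*(k:ℝ)*((k:ℝ)^24)⁻¹ = (8*(k:ℝ))/((k:ℝ)^24) by ring,
        div_le_div_iff₀ (by positivity) (by positivity)]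
      have h20 : (2:ℝ)^20 ≤ (k:ℝ)^20 := pow_le_pow_left₀ (by norm_num) hk2 20
      have hk4 : (0:ℝ) < (k:ℝ)^4 := by positivity
      calc 8*(k:ℝ) * (k:ℝ)^3 = 8 * (k:ℝ)^4 := by ring
        _ ≤ (2:ℝ)^20 * (k:ℝ)^4 := by nlinarith
        _ ≤ (k:ℝ)^20 * (k:ℝ)^4 := by nlinarith
        _ = 1 * (k:ℝ)^24 := by rw [← pow_add]; ring
    calc ∑ x : Fin k → Fin ℓ, p x * Φ x
        ≤ ∑ S ∈ univ.filter (fun S : Finset (Fin k) => S.Nonempty), 4 * x₀ ^ S.card := by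
          rw [hswap]; exact hbd
      _ = 4 * ((x₀+1)^k - 1) := by rw [← Finset.mul_sum, hsplitS]
      _ ≤ 4 * (2*(k:ℝ)*x₀) := by
          have h1x : (x₀+1)^k ≤ 1 + 2*(k:ℝ)*x₀ := by
            rw [add_comm x₀ 1]; exact hpow
          linarith
      _ = 8*(k:ℝ)*x₀ := by ring
      _ ≤ 1/(k:ℝ)^3 := h8
  -- existence of a good x
  obtain ⟨x, hpx, hΦx⟩ : ∃ x : Fin k → Fin ℓ, 0 < p x ∧ Φ x ≤ 1/(k:ℝ)^3 := by
    by_contra hcon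
    push_neg at hcon
    obtain ⟨x0, hx0⟩ : ∃ x0 : Fin k → Fin ℓ, 0 < p x0 := by
      by_contra hall
      push_neg at hall
      have : ∑ x : Fin k → Fin ℓ, p x = 0 :=
        le_antisymm (Finset.sum_nonpos fun x _ => hall x) (Finset.sum_nonneg fun x _ => hp0 x)
      rw [hp1] at this
      norm_num at this
    have hlt : ∑ x : Fin k → Fin ℓ, p x * (1/(k:ℝ)^3) < ∑ x : Fin k → Fin ℓ, p x * Φ x := by
      apply Finset.sum_lt_sum
      · intro x _
        rcases eq_or_lt_of_le (hp0 x) with h | h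
        · rw [← h]; ring_nf; exact le_refl _
        · exact mul_le_mul_of_nonneg_left (le_of_lt (hcon x h)) (le_of_lt h)
      · exact ⟨x0, Finset.mem_univ x0, mul_lt_mul_of_pos_left (hcon x0 hx0) hx0⟩
    rw [← Finset.sum_mul, hp1, one_mul] at hlt
    linarith
  refine ⟨x, hpx, ?_⟩
  intro z
  rw [hexpand x z]
  have hne : univ.filter (fun S : Finset (Fin k) => ¬ S.Nonempty)
      = ({∅} : Finset (Finset (Fin k))) := by
    ext S
    simp [Finset.not_nonempty_iff_eq_empty]
  have hsplitz : ∑ S : Finset (Fin k), (∏ i ∈ S, sg (z i)) * A S x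
      = 1 + ∑ S ∈ univ.filter (fun S : Finset (Fin k) => S.Nonempty),
          (∏ i ∈ S, sg (z i)) * A S x := by
    have h := Finset.sum_filter_add_sum_filter_not univ
      (fun S : Finset (Fin k) => S.Nonempty) (fun S => (∏ i ∈ S, sg (z i)) * A S x)
    rw [hne, Finset.sum_singleton, Finset.prod_empty, one_mul, hA_empty x] at h
    linarith
  rw [hsplitz]
  have hRabs : |∑ S ∈ univ.filter (fun S : Finset (Fin k) => S.Nonempty),
      (∏ i ∈ S, sg (z i)) * A S x| ≤ Φ x := by
    calc |∑ S ∈ univ.filter (fun S : Finset (Fin k) => S.Nonempty),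
        (∏ i ∈ S, sg (z i)) * A S x|
        ≤ ∑ S ∈ univ.filter (fun S : Finset (Fin k) => S.Nonempty),
            |(∏ i ∈ S, sg (z i)) * A S x| := Finset.abs_sum_le_sum_abs _ _
      _ = ∑ S ∈ univ.filter (fun S : Finset (Fin k) => S.Nonempty), |A S x| := by
          refine Finset.sum_congr rfl fun S _ => ?_
          rw [abs_mul, Finset.abs_prod,
            Finset.prod_congr rfl (fun i _ => abs_sg (z i)), Finset.prod_const_one, one_mul]
      _ = Φ x := by rw [hΦdef]
  have hid : (1/2^k : ℝ) * (1 + ∑ S ∈ univ.filter (fun S : Finset (Fin k) => S.Nonempty),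
      (∏ i ∈ S, sg (z i)) * A S x) - 1/2^k
      = (1/2^k) * ∑ S ∈ univ.filter (fun S : Finset (Fin k) => S.Nonempty),
          (∏ i ∈ S, sg (z i)) * A S x := by ring
  rw [hid, abs_mul, abs_of_pos (by positivity : (0:ℝ) < (1:ℝ)/2^k)]
  calc (1/2^k : ℝ) * |∑ S ∈ univ.filter (fun S : Finset (Fin k) => S.Nonempty),
      (∏ i ∈ S, sg (z i)) * A S x|
      ≤ (1/2^k : ℝ) * (1/(k:ℝ)^3) :=
        mul_le_mul_of_nonneg_left (le_trans hRabs hΦx) (by positivity)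
    _ = (1/(k:ℝ)^3)/2^k := by ring
end

section
/- Let k ≥ 2 and ℓ ≥ 1 be integers. Let 𝐱 be a random variable on [ℓ]^k with blockwise min-entropy at least 50·log₂ k, and let 𝐲 be a random variable on ({0,1}^ℓ)^k, independent of 𝐱, with deficiency at most k. Call a point x ∈ [ℓ]^k good if for every nonempty subset I ⊆ [k], |E_{y∼𝐲}[∏_{i∈I} (−1)^{y_i(x_i)}]| ≤ k^{−10|I|}. Then Pr_{x∼𝐱}[x is not good] ≤ 2/k⁹. -/
open Finset

open scoped Classical

/-- sign of a boolean as a real number -/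
def sg (b : Bool) : ℝ := if b then -1 else 1

lemma sg_def (b : Bool) : (if b then (-1:ℝ) else 1) = sg b := rfl

lemma sg_sq (b : Bool) : sg b ^ 2 = 1 := by cases b <;> simp [sg]

lemma sg_not (b : Bool) : sg (!b) = - sg b := by cases b <;> simp [sg]

/-- double factorial (2m-1)!! -/
def DF : ℕ → ℕ
  | 0 => 1
  | m+1 => (2*m+1) * DF m

lemma DF_pos (m : ℕ) : 0 < DF m := by
  induction m with
  | zero => simp [DF]
  | succ n ih => exact Nat.mul_pos (by omega) ih

lemma DF_factorial (m : ℕ) : 2^m * m.factorial * DF m = (2*m).factorial := by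
  induction m with
  | zero => simp [DF]
  | succ n ih =>
    have h2 : 2*(n+1) = 2*n+1+1 := by ring
    rw [DF, h2, Nat.factorial_succ, Nat.factorial_succ]
    calc 2^(n+1) * ((n+1) * n.factorial) * ((2*n+1) * DF n)
        = (2*n+1+1)*((2*n+1) * (2^n * n.factorial * DF n)) := by ring
      _ = (2*n+1+1)*((2*n+1) * (2*n).factorial) := by rw [ih]

lemma two_pow_fact_le (i : ℕ) : 2^i * i.factorial ≤ (2*i).factorial := by
  calc 2^i * i.factorial = 2^i * i.factorial * 1 := by ring
    _ ≤ 2^i * i.factorial * DF i := Nat.mul_le_mul_left _ (DF_pos i)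
    _ = (2*i).factorial := DF_factorial i

lemma choose_DF_le {i m : ℕ} (h : i ≤ m) :
    (2*m).choose (2*i) * DF (m-i) ≤ m.choose i * DF m := by
  have h2 : 2*i ≤ 2*m := by omega
  have hM : 0 < (2*i).factorial * (2^(m-i) * (m-i).factorial) :=
    Nat.mul_pos (Nat.factorial_pos _) (Nat.mul_pos (Nat.pow_pos (by norm_num)) (Nat.factorial_pos _))
  apply Nat.le_of_mul_le_mul_right _ hM
  have e3 : 2*m - 2*i = 2*(m-i) := by omega
  have eL : (2*m).choose (2*i) * DF (m-i) * ((2*i).factorial * (2^(m-i) * (m-i).factorial))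
      = (2*m).factorial := by
    calc (2*m).choose (2*i) * DF (m-i) * ((2*i).factorial * (2^(m-i) * (m-i).factorial))
        = ((2*m).choose (2*i) * (2*i).factorial) * (2^(m-i) * (m-i).factorial * DF (m-i)) := by ring
      _ = ((2*m).choose (2*i) * (2*i).factorial) * (2*(m-i)).factorial := by rw [DF_factorial]
      _ = (2*m).choose (2*i) * (2*i).factorial * (2*m - 2*i).factorial := by rw [e3]
      _ = (2*m).factorial := Nat.choose_mul_factorial_mul_factorial h2
  rw [eL]
  -- (2m)! = 2^m * m! * DF m = 2^m * (choose m i * i! * (m-i)!) * DF m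
  have eR : (2*m).factorial = 2^m * (m.choose i * i.factorial * (m-i).factorial) * DF m := by
    rw [Nat.choose_mul_factorial_mul_factorial h, DF_factorial]
  rw [eR]
  have key : 2^m * i.factorial ≤ (2*i).factorial * 2^(m-i) := by
    have : 2^m = 2^i * 2^(m-i) := by rw [← pow_add]; congr 1; omega
    calc 2^m * i.factorial = (2^i * i.factorial) * 2^(m-i) := by rw [this]; ring
      _ ≤ (2*i).factorial * 2^(m-i) := Nat.mul_le_mul_right _ (two_pow_fact_le i)
  calc 2^m * (m.choose i * i.factorial * (m-i).factorial) * DF m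
      = (m.choose i * DF m * (m-i).factorial) * (2^m * i.factorial) := by ring
    _ ≤ (m.choose i * DF m * (m-i).factorial) * ((2*i).factorial * 2^(m-i)) :=
        Nat.mul_le_mul_left _ key
    _ = m.choose i * DF m * ((2*i).factorial * (2^(m-i) * (m-i).factorial)) := by ring

lemma DF_le (m : ℕ) : DF m ≤ (2*m)^m := by
  induction m with
  | zero => simp [DF]
  | succ n ih =>
    calc DF (n+1) = (2*n+1) * DF n := rfl
      _ ≤ (2*(n+1)) * (2*n)^n := Nat.mul_le_mul (by omega) ih
      _ ≤ (2*(n+1)) * (2*(n+1))^n :=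
          Nat.mul_le_mul_left _ (Nat.pow_le_pow_left (by omega) n)
      _ = (2*(n+1))^(n+1) := by rw [pow_succ]; ring

/-- pointwise truncation inequality -/
lemma pointwise_T (v T : ℝ) (hT : 0 < T) (n : ℕ) (hn : 1 ≤ n) :
    v * T^(2*n-1) ≤ T^(2*n) + v^(2*n) := by
  have hTnn := hT.le
  have hvnn : (0:ℝ) ≤ v^(2*n) := by rw [pow_mul]; positivity
  have hv2 : v^(2*n) = |v|^(2*n) := by
    rw [← abs_pow]; exact (abs_of_nonneg hvnn).symm
  have hsucc : 2*n-1+1 = 2*n := by omega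
  rcases le_total |v| T with h | h
  · have h1 : v * T^(2*n-1) ≤ T * T^(2*n-1) := by
      have h2 : v ≤ T := le_trans (le_abs_self v) h
      have h3 : (0:ℝ) ≤ T^(2*n-1) := by positivity
      nlinarith
    have h4 : T * T^(2*n-1) = T^(2*n) := by rw [← pow_succ', hsucc]
    linarith
  · have h1 : v * T^(2*n-1) ≤ |v| * T^(2*n-1) := by
      have h3 : (0:ℝ) ≤ T^(2*n-1) := by positivity
      nlinarith [le_abs_self v]
    have h2 : |v| * T^(2*n-1) ≤ |v| * |v|^(2*n-1) := by
      have := pow_le_pow_left₀ hTnn h (2*n-1)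
      nlinarith [abs_nonneg v]
    have h4 : |v| * |v|^(2*n-1) = |v|^(2*n) := by rw [← pow_succ', hsucc]
    have h5 : (0:ℝ) ≤ T^(2*n) := by positivity
    rw [hv2]
    linarith

/-- Bernoulli-type upper bound -/
lemma pow_one_add_sub_le (r : ℝ) (hr : 0 ≤ r) (n : ℕ) :
    (1+r)^n - 1 ≤ n * r * (1+r)^n := by
  induction n with
  | zero => simp
  | succ n ih =>
    have h1 : (0:ℝ) ≤ (1+r)^n := by positivity
    rw [pow_succ]
    push_cast
    nlinarith [mul_nonneg (mul_nonneg (mul_nonneg (Nat.cast_nonneg n : (0:ℝ) ≤ n) hr) hr) h1,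
      mul_nonneg (mul_nonneg hr hr) h1]

/-- union bound helper -/
lemma sum_biUnion_le_sum {ι γ : Type*} [DecidableEq γ] (T : Finset ι) (f : ι → Finset γ)
    (p : γ → ℝ) (hp : ∀ x, 0 ≤ p x) :
    ∑ x ∈ T.biUnion f, p x ≤ ∑ I ∈ T, ∑ x ∈ f I, p x := by
  induction T using Finset.induction with
  | empty => simp
  | insert _ _ ha ih =>
    rename_i a T
    rw [Finset.biUnion_insert, Finset.sum_insert ha]
    have h1 := Finset.sum_union_inter (s₁ := f a) (s₂ := T.biUnion f) (f := p)
    have h2 : (0:ℝ) ≤ ∑ x ∈ f a ∩ T.biUnion f, p x := Finset.sum_nonneg fun x _ => hp x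
    linarith

/-- Conditional Khintchine inequality for one block. -/
lemma condKhin (ℓ k : ℕ) (j : Fin k)
    (h : Fin ℓ → (Fin k → Fin ℓ → Bool) → ℝ)
    (hh : ∀ a y v, h a (Function.update y j v) = h a y)
    (A : Finset (Fin ℓ)) (m : ℕ) (u : (Fin k → Fin ℓ → Bool) → ℝ)
    (hu0 : ∀ y, 0 ≤ u y) (hu : ∀ y v, u (Function.update y j v) = u y) :
    ∑ y, u y * (∑ a ∈ A, h a y * sg (y j a)) ^ (2*m)
      ≤ (DF m : ℝ) * ∑ y, u y * (∑ a ∈ A, (h a y)^2) ^ m := by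
  induction A using Finset.induction generalizing m u with
  | empty =>
    rcases Nat.eq_zero_or_pos m with rfl | hm
    · simp [DF]
    · simp only [Finset.sum_empty]
      rw [zero_pow (by omega : 2*m ≠ 0), zero_pow (by omega : m ≠ 0)]
      simp
  | insert _ _ ha₀ ih =>
    rename_i a₀ A
    set Φ : (Fin k → Fin ℓ → Bool) → (Fin k → Fin ℓ → Bool) :=
      fun y => Function.update y j (Function.update (y j) a₀ (!(y j a₀))) with hΦdef
    have hΦj : ∀ y, Φ y j = Function.update (y j) a₀ (!(y j a₀)) := by
      intro y; simp [hΦdef]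
    have hΦinv : Function.Involutive Φ := by
      intro y
      funext i
      rcases eq_or_ne i j with rfl | hij
      · rw [hΦj (Φ y), hΦj y]
        simp [Function.update_idem]
      · show Φ (Φ y) i = y i
        rw [hΦdef]
        simp only [Function.update_of_ne hij]
    have hΦu : ∀ y, u (Φ y) = u y := fun y => hu y _
    have hΦh : ∀ a y, h a (Φ y) = h a y := fun a y => hh a y _
    have hΦa₀ : ∀ y, Φ y j a₀ = !(y j a₀) := by
      intro y; rw [hΦj]; simp
    have hΦja : ∀ y a, a ≠ a₀ → Φ y j a = y j a := by
      intro y a ha; rw [hΦj]; exact Function.update_of_ne ha _ _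
    have flipSum : ∀ F : (Fin k → Fin ℓ → Bool) → ℝ, (∀ y, F (Φ y) = - F y) →
        ∑ y, F y = 0 := by
      intro F hF
      have h1 : ∑ y, F y = ∑ y, - F y :=
        Finset.sum_nbij' Φ Φ (fun a _ => mem_univ _) (fun a _ => mem_univ _)
          (fun a _ => hΦinv a) (fun a _ => hΦinv a)
          (fun a _ => by rw [hF a, neg_neg])
      rw [Finset.sum_neg_distrib] at h1
      linarith
    have key : ∀ y : Fin k → Fin ℓ → Bool,
        (∑ a ∈ insert a₀ A, h a y * sg (y j a))
          = h a₀ y * sg (y j a₀) + ∑ a ∈ A, h a y * sg (y j a) :=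
      fun y => Finset.sum_insert ha₀
    have e1 : ∀ y : Fin k → Fin ℓ → Bool,
        u y * (h a₀ y * sg (y j a₀) + (∑ a ∈ A, h a y * sg (y j a))) ^ (2*m)
        = ∑ t ∈ Finset.range (2*m+1), ((2*m).choose t : ℝ) *
            ((u y * (h a₀ y)^t * (∑ a ∈ A, h a y * sg (y j a))^(2*m-t)) * (sg (y j a₀))^t) := by
      intro y
      rw [add_pow, Finset.mul_sum]
      apply Finset.sum_congr rfl
      intro t _
      rw [mul_pow]
      ring
    have expand : ∑ y, u y * (∑ a ∈ insert a₀ A, h a y * sg (y j a)) ^ (2*m)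
        = ∑ t ∈ Finset.range (2*m+1), ((2*m).choose t : ℝ) *
            ∑ y, ((u y * (h a₀ y)^t * (∑ a ∈ A, h a y * sg (y j a))^(2*m-t)) * (sg (y j a₀))^t) := by
      simp_rw [key, e1]
      rw [Finset.sum_comm]
      simp_rw [← Finset.mul_sum]
    have hodd : ∀ t ∈ Finset.range (2*m+1), ¬ Even t →
        ((2*m).choose t : ℝ) *
          ∑ y, ((u y * (h a₀ y)^t * (∑ a ∈ A, h a y * sg (y j a))^(2*m-t)) * (sg (y j a₀))^t) = 0 := by
      intro t _ ht
      have hz : ∑ y, ((u y * (h a₀ y)^t * (∑ a ∈ A, h a y * sg (y j a))^(2*m-t)) * (sg (y j a₀))^t) = 0 := by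
        apply flipSum
        intro y
        have h3 : (∑ a ∈ A, h a (Φ y) * sg (Φ y j a)) = ∑ a ∈ A, h a y * sg (y j a) := by
          apply Finset.sum_congr rfl
          intro a haA
          rw [hΦh a y, hΦja y a (by rintro rfl; exact ha₀ haA)]
        rw [hΦu, hΦh, h3, hΦa₀, sg_not, (Nat.not_even_iff_odd.mp ht).neg_pow]
        ring
      rw [hz, mul_zero]
    have heven : ∑ t ∈ Finset.range (2*m+1), (((2*m).choose t : ℝ) *
            ∑ y, ((u y * (h a₀ y)^t * (∑ a ∈ A, h a y * sg (y j a))^(2*m-t)) * (sg (y j a₀))^t))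
        = ∑ i ∈ Finset.range (m+1), (((2*m).choose (2*i) : ℝ) *
            ∑ y, ((u y * (h a₀ y)^(2*i) * (∑ a ∈ A, h a y * sg (y j a))^(2*m-2*i)) * (sg (y j a₀))^(2*i))) := by
      rw [← Finset.sum_filter_of_ne (fun t ht hne => by_contra fun hodd' => hne (hodd t ht hodd'))]
      rw [show (Finset.range (2*m+1)).filter Even = (Finset.range (m+1)).image (fun i => 2*i) from ?_]
      · rw [Finset.sum_image (fun a _ b _ hab => by omega)]
      · ext t
        simp only [Finset.mem_filter, Finset.mem_range, Finset.mem_image]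
        constructor
        · rintro ⟨ht, r, rfl⟩
          exact ⟨r, by omega, by omega⟩
        · rintro ⟨i, hi, rfl⟩
          exact ⟨by omega, i, by omega⟩
    rw [expand, heven]
    have hbound : ∀ i ∈ Finset.range (m+1),
        (((2*m).choose (2*i) : ℝ) *
            ∑ y, ((u y * (h a₀ y)^(2*i) * (∑ a ∈ A, h a y * sg (y j a))^(2*m-2*i)) * (sg (y j a₀))^(2*i)))
        ≤ ((m.choose i : ℝ) * (DF m : ℝ)) *
            ∑ y, ((u y * (h a₀ y)^(2*i)) * (∑ a ∈ A, (h a y)^2)^(m-i)) := by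
      intro i hi
      have him : i ≤ m := by
        simp only [Finset.mem_range] at hi; omega
      have he : 2*m - 2*i = 2*(m-i) := by omega
      have hstep1 : ∑ y, ((u y * (h a₀ y)^(2*i) * (∑ a ∈ A, h a y * sg (y j a))^(2*m-2*i)) * (sg (y j a₀))^(2*i))
          = ∑ y, ((u y * (h a₀ y)^(2*i)) * (∑ a ∈ A, h a y * sg (y j a))^(2*(m-i))) := by
        rw [he]
        apply Finset.sum_congr rfl
        intro y _
        rw [pow_mul (sg (y j a₀)), sg_sq, one_pow, mul_one]
      rw [hstep1]
      have hnn : ∀ y, 0 ≤ u y * (h a₀ y)^(2*i) :=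
        fun y => mul_nonneg (hu0 y) (by rw [pow_mul]; positivity)
      have hih := ih (m-i) (fun y => u y * (h a₀ y)^(2*i)) hnn
        (fun y v => by simp only [hu, hh])
      have hX : (0:ℝ) ≤ ∑ y, ((u y * (h a₀ y)^(2*i)) * (∑ a ∈ A, (h a y)^2)^(m-i)) := by
        apply Finset.sum_nonneg
        intro y _
        apply mul_nonneg (hnn y)
        apply pow_nonneg
        exact Finset.sum_nonneg fun a _ => sq_nonneg _
      calc ((2*m).choose (2*i) : ℝ) * ∑ y, ((u y * (h a₀ y)^(2*i)) * (∑ a ∈ A, h a y * sg (y j a))^(2*(m-i)))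
          ≤ ((2*m).choose (2*i) : ℝ) * ((DF (m-i) : ℝ) * ∑ y, ((u y * (h a₀ y)^(2*i)) * (∑ a ∈ A, (h a y)^2)^(m-i))) := by
            apply mul_le_mul_of_nonneg_left _ (by positivity)
            exact hih
        _ = (((2*m).choose (2*i) * DF (m-i) : ℕ) : ℝ) * ∑ y, ((u y * (h a₀ y)^(2*i)) * (∑ a ∈ A, (h a y)^2)^(m-i)) := by
            push_cast; ring
        _ ≤ ((m.choose i * DF m : ℕ) : ℝ) * ∑ y, ((u y * (h a₀ y)^(2*i)) * (∑ a ∈ A, (h a y)^2)^(m-i)) := by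
            apply mul_le_mul_of_nonneg_right _ hX
            exact_mod_cast choose_DF_le him
        _ = ((m.choose i : ℝ) * (DF m : ℝ)) * ∑ y, ((u y * (h a₀ y)^(2*i)) * (∑ a ∈ A, (h a y)^2)^(m-i)) := by
            push_cast; ring
    calc ∑ i ∈ Finset.range (m+1), (((2*m).choose (2*i) : ℝ) *
            ∑ y, ((u y * (h a₀ y)^(2*i) * (∑ a ∈ A, h a y * sg (y j a))^(2*m-2*i)) * (sg (y j a₀))^(2*i)))
        ≤ ∑ i ∈ Finset.range (m+1), (((m.choose i : ℝ) * (DF m : ℝ)) *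
            ∑ y, ((u y * (h a₀ y)^(2*i)) * (∑ a ∈ A, (h a y)^2)^(m-i))) := Finset.sum_le_sum hbound
      _ = (DF m : ℝ) * ∑ y, u y * (∑ a ∈ insert a₀ A, (h a y)^2) ^ m := by
          simp_rw [Finset.mul_sum]
          rw [Finset.sum_comm]
          apply Finset.sum_congr rfl
          intro y _
          simp_rw [Finset.sum_insert ha₀]
          rw [add_pow, Finset.mul_sum, Finset.mul_sum]
          apply Finset.sum_congr rfl
          intro i _
          rw [pow_mul]
          ring

lemma reindex (ℓ k : ℕ) [NeZero ℓ] (j : Fin k) (f : (Fin k → Fin ℓ) → ℝ) :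
    ∑ α : Fin k → Fin ℓ, f α
      = ∑ a : Fin ℓ, ∑ α : Fin k → Fin ℓ, (if α j = 0 then f (Function.update α j a) else 0) := by
  have h1 : ∀ a : Fin ℓ, (∑ α : Fin k → Fin ℓ, if α j = 0 then f (Function.update α j a) else 0)
      = ∑ α ∈ univ.filter (fun α => α j = a), f α := by
    intro a
    rw [← Finset.sum_filter]
    refine Finset.sum_nbij' (fun α => Function.update α j a) (fun β => Function.update β j 0)
      ?_ ?_ ?_ ?_ ?_
    · intro α _; simp [Finset.mem_filter]
    · intro β _; simp [Finset.mem_filter]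
    · intro α hα
      simp only [Finset.mem_filter, Finset.mem_univ, true_and] at hα
      show Function.update (Function.update α j a) j 0 = α
      rw [Function.update_idem]
      exact Function.update_eq_self_iff.mpr hα.symm
    · intro β hβ
      simp only [Finset.mem_filter, Finset.mem_univ, true_and] at hβ
      show Function.update (Function.update β j 0) j a = β
      rw [Function.update_idem]
      exact Function.update_eq_self_iff.mpr hβ.symm
    · intro α _; rfl
  simp_rw [h1]
  exact (Finset.sum_fiberwise_of_maps_to (fun α _ => Finset.mem_univ _) f).symm

lemma momentBound (ℓ k : ℕ) [NeZero ℓ] (m : ℕ) (I : Finset (Fin k))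
    (c : (Fin k → Fin ℓ) → ℝ)
    (hsupp : ∀ α, c α ≠ 0 → ∀ i, i ∉ I → α i = 0) :
    ∑ y : Fin k → Fin ℓ → Bool,
        (∑ α : Fin k → Fin ℓ, c α * ∏ i ∈ I, sg (y i (α i))) ^ (2*m)
      ≤ (DF m : ℝ)^I.card * 2^(ℓ*k) * (∑ α, (c α)^2)^m := by
  have hconst : ∀ r : ℝ, (∑ _y : Fin k → Fin ℓ → Bool, r) = 2^(ℓ*k) * r := by
    intro r
    rw [Finset.sum_const, Finset.card_univ]
    have hcd : Fintype.card (Fin k → Fin ℓ → Bool) = 2^(ℓ*k) := by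
      simp [Fintype.card_fun, pow_mul]
    rw [hcd, nsmul_eq_mul]
    push_cast
    ring
  rcases Nat.eq_zero_or_pos m with rfl | hm
  · simp only [Nat.mul_zero, pow_zero, mul_one, DF, Nat.cast_one, one_pow, one_mul]
    rw [hconst 1, mul_one]
  · induction I using Finset.induction generalizing c with
    | empty =>
      have hce : ∀ α, α ≠ (fun _ => (0:Fin ℓ)) → c α = 0 := by
        intro α hα
        by_contra hc
        exact hα (funext fun i => hsupp α hc i (by simp))
      have hsum : (∑ α, c α) = c (fun _ => (0:Fin ℓ)) :=
        Finset.sum_eq_single _ (fun β _ hβ => hce β hβ) (fun h => absurd (Finset.mem_univ _) h)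
      have hsum2 : (∑ α, (c α)^2) = (c (fun _ => (0:Fin ℓ)))^2 :=
        Finset.sum_eq_single _ (fun β _ hβ => by rw [hce β hβ]; ring)
          (fun h => absurd (Finset.mem_univ _) h)
      simp only [Finset.prod_empty, mul_one, hsum, hsum2, Finset.card_empty, pow_zero, one_mul]
      rw [hconst]
      simp only [pow_mul]
      exact le_rfl
    | insert _ _ hj ihI =>
      rename_i j I
      have hsupp' : ∀ a (α : Fin k → Fin ℓ),
          (if α j = 0 then c (Function.update α j a) else 0) ≠ 0 → ∀ i, i ∉ I → α i = 0 := by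
        intro a α hne i hiI
        by_cases h0 : α j = 0
        · rcases eq_or_ne i j with rfl | hij
          · exact h0
          · rw [if_pos h0] at hne
            have := hsupp _ hne i (by simp [hij, hiI])
            rwa [Function.update_of_ne hij] at this
        · rw [if_neg h0] at hne; exact absurd rfl hne
      have claim1 : ∀ y : Fin k → Fin ℓ → Bool,
          (∑ α, c α * ∏ i ∈ insert j I, sg (y i (α i)))
          = ∑ a : Fin ℓ,
              (∑ α, (if α j = 0 then c (Function.update α j a) else 0) * ∏ i ∈ I, sg (y i (α i)))
                * sg (y j a) := by
        intro y
        rw [reindex ℓ k j (fun α => c α * ∏ i ∈ insert j I, sg (y i (α i)))]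
        apply Finset.sum_congr rfl
        intro a _
        rw [Finset.sum_mul]
        apply Finset.sum_congr rfl
        intro α _
        by_cases h0 : α j = 0
        · rw [if_pos h0, if_pos h0, Finset.prod_insert hj, Function.update_self]
          have hsame : ∀ i ∈ I, sg (y i (Function.update α j a i)) = sg (y i (α i)) := by
            intro i hiI
            rw [Function.update_of_ne (by rintro rfl; exact hj hiI)]
          rw [Finset.prod_congr rfl hsame]
          ring
        · rw [if_neg h0, if_neg h0]
          ring
      have claim4 : (∑ α, (c α)^2)
          = ∑ a : Fin ℓ, ∑ α, ((if α j = 0 then c (Function.update α j a) else 0))^2 := by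
        rw [reindex ℓ k j (fun α => (c α)^2)]
        apply Finset.sum_congr rfl; intro a _
        apply Finset.sum_congr rfl; intro α _
        by_cases h0 : α j = 0
        · rw [if_pos h0, if_pos h0]
        · rw [if_neg h0, if_neg h0]; ring
      have hhinv : ∀ (a : Fin ℓ) (y : Fin k → Fin ℓ → Bool) (v : Fin ℓ → Bool),
          (∑ α, (if α j = 0 then c (Function.update α j a) else 0)
              * ∏ i ∈ I, sg ((Function.update y j v) i (α i)))
          = ∑ α, (if α j = 0 then c (Function.update α j a) else 0)
              * ∏ i ∈ I, sg (y i (α i)) := by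
        intro a y v
        apply Finset.sum_congr rfl; intro α _
        congr 1
        apply Finset.prod_congr rfl; intro i hiI
        rw [Function.update_of_ne (by rintro rfl; exact hj hiI)]
      have hck := condKhin ℓ k j
        (fun a y => ∑ α, (if α j = 0 then c (Function.update α j a) else 0) * ∏ i ∈ I, sg (y i (α i)))
        (fun a y v => hhinv a y v) Finset.univ m (fun _ => 1)
        (fun _ => zero_le_one) (fun _ _ => rfl)
      simp only [one_mul] at hck
      -- abbreviations (proof-level)
      set Wa : Fin ℓ → ℝ := fun a => ∑ α, ((if α j = 0 then c (Function.update α j a) else 0))^2 with hWa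
      set W : ℝ := ∑ α, (c α)^2 with hW
      have hWnn : 0 ≤ W := Finset.sum_nonneg fun α _ => sq_nonneg _
      have hWanns : ∀ a, 0 ≤ Wa a := fun a => Finset.sum_nonneg fun α _ => sq_nonneg _
      by_cases hW0 : W = 0
      · -- all coefficients vanish
        have hc0 : ∀ α, c α = 0 := by
          intro α
          have h2 := (Finset.sum_eq_zero_iff_of_nonneg (fun β _ => sq_nonneg (c β))).mp hW0 α (Finset.mem_univ α)
          exact pow_eq_zero_iff (by norm_num) |>.mp h2
        have hz : ∀ y : Fin k → Fin ℓ → Bool,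
            (∑ α, c α * ∏ i ∈ insert j I, sg (y i (α i))) = 0 := by
          intro y; apply Finset.sum_eq_zero; intro α _; rw [hc0]; ring
        calc ∑ y : Fin k → Fin ℓ → Bool, (∑ α, c α * ∏ i ∈ insert j I, sg (y i (α i))) ^ (2*m)
            = 0 := by
              apply Finset.sum_eq_zero; intro y _
              rw [hz y, zero_pow (by omega : 2*m ≠ 0)]
          _ ≤ (DF m : ℝ)^(insert j I).card * 2^(ℓ*k) * W^m := by
              rw [hW0, zero_pow (by omega : m ≠ 0), mul_zero]
      · have hWpos : 0 < W := lt_of_le_of_ne hWnn (Ne.symm hW0)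
        have hh0 : ∀ a, Wa a = 0 → ∀ y : Fin k → Fin ℓ → Bool,
            (∑ α, (if α j = 0 then c (Function.update α j a) else 0) * ∏ i ∈ I, sg (y i (α i))) = 0 := by
          intro a ha y
          apply Finset.sum_eq_zero; intro α _
          have h2 := (Finset.sum_eq_zero_iff_of_nonneg (fun β _ => sq_nonneg _)).mp ha α (Finset.mem_univ α)
          rw [pow_eq_zero_iff (by norm_num : 2 ≠ 0) |>.mp h2]
          ring
        obtain ⟨n, rfl⟩ : ∃ n, m = n + 1 := ⟨m-1, by omega⟩
        -- Jensen pointwise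
        have jens : ∀ y : Fin k → Fin ℓ → Bool,
            (∑ a : Fin ℓ, (∑ α, (if α j = 0 then c (Function.update α j a) else 0) * ∏ i ∈ I, sg (y i (α i)))^2)^(n+1)
            ≤ ∑ a : Fin ℓ, (Wa a / W) *
                (if Wa a = 0 then 0 else
                  ((∑ α, (if α j = 0 then c (Function.update α j a) else 0) * ∏ i ∈ I, sg (y i (α i)))^2 * (W / Wa a))^(n+1)) := by
          intro y
          have hw1 : ∑ a : Fin ℓ, Wa a / W = 1 := by
            rw [← Finset.sum_div, ← claim4]
            exact div_self hW0
          have hmem : ∀ a ∈ Finset.univ (α := Fin ℓ),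
              (if Wa a = 0 then (0:ℝ) else
                ((∑ α, (if α j = 0 then c (Function.update α j a) else 0) * ∏ i ∈ I, sg (y i (α i)))^2 * (W / Wa a))) ∈ Set.Ici (0:ℝ) := by
            intro a _
            by_cases hWa0 : Wa a = 0
            · rw [if_pos hWa0]; exact Set.mem_Ici.mpr le_rfl
            · rw [if_neg hWa0]
              have : 0 < Wa a := lt_of_le_of_ne (hWanns a) (Ne.symm hWa0)
              have h9 : 0 ≤ W / Wa a := le_of_lt (div_pos hWpos this)
              exact Set.mem_Ici.mpr (mul_nonneg (sq_nonneg _) h9)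
          have hjj := ConvexOn.map_sum_le (convexOn_pow (n+1))
            (fun a _ => div_nonneg (hWanns a) hWnn) hw1 hmem
          have heq : (∑ a : Fin ℓ, (Wa a / W) •
              (if Wa a = 0 then (0:ℝ) else
                ((∑ α, (if α j = 0 then c (Function.update α j a) else 0) * ∏ i ∈ I, sg (y i (α i)))^2 * (W / Wa a))))
              = ∑ a : Fin ℓ, (∑ α, (if α j = 0 then c (Function.update α j a) else 0) * ∏ i ∈ I, sg (y i (α i)))^2 := by
            apply Finset.sum_congr rfl
            intro a _
            by_cases hWa0 : Wa a = 0
            · rw [if_pos hWa0, smul_zero, hh0 a hWa0 y]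
              ring
            · rw [if_neg hWa0, smul_eq_mul]
              field_simp
          rw [heq] at hjj
          refine le_trans hjj ?_
          apply le_of_eq
          apply Finset.sum_congr rfl
          intro a _
          rw [smul_eq_mul]
          by_cases hWa0 : Wa a = 0
          · rw [if_pos hWa0, if_pos hWa0, zero_pow (by omega : n+1 ≠ 0)]
          · rw [if_neg hWa0, if_neg hWa0]
        -- sum over y and use ihI per a
        have main2 : ∑ y : Fin k → Fin ℓ → Bool,
            (∑ a : Fin ℓ, (∑ α, (if α j = 0 then c (Function.update α j a) else 0) * ∏ i ∈ I, sg (y i (α i)))^2)^(n+1)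
            ≤ (DF (n+1) : ℝ)^I.card * 2^(ℓ*k) * W^(n+1) := by
          calc ∑ y : Fin k → Fin ℓ → Bool,
              (∑ a : Fin ℓ, (∑ α, (if α j = 0 then c (Function.update α j a) else 0) * ∏ i ∈ I, sg (y i (α i)))^2)^(n+1)
              ≤ ∑ y : Fin k → Fin ℓ → Bool, ∑ a : Fin ℓ, (Wa a / W) *
                (if Wa a = 0 then 0 else
                  ((∑ α, (if α j = 0 then c (Function.update α j a) else 0) * ∏ i ∈ I, sg (y i (α i)))^2 * (W / Wa a))^(n+1)) :=
                Finset.sum_le_sum fun y _ => jens y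
            _ = ∑ a : Fin ℓ, (Wa a / W) * ∑ y : Fin k → Fin ℓ → Bool,
                (if Wa a = 0 then 0 else
                  ((∑ α, (if α j = 0 then c (Function.update α j a) else 0) * ∏ i ∈ I, sg (y i (α i)))^2 * (W / Wa a))^(n+1)) := by
                rw [Finset.sum_comm]
                apply Finset.sum_congr rfl
                intro a _
                rw [Finset.mul_sum]
            _ ≤ ∑ a : Fin ℓ, (DF (n+1) : ℝ)^I.card * 2^(ℓ*k) * (W^n * Wa a) := by
                apply Finset.sum_le_sum
                intro a _
                by_cases hWa0 : Wa a = 0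
                · simp only [if_pos hWa0, hWa0]
                  simp
                · simp only [if_neg hWa0]
                  have hWapos : 0 < Wa a := lt_of_le_of_ne (hWanns a) (Ne.symm hWa0)
                  have hq : 0 ≤ (W / Wa a)^(n+1) := by positivity
                  have estep : ∀ y : Fin k → Fin ℓ → Bool,
                      ((∑ α, (if α j = 0 then c (Function.update α j a) else 0) * ∏ i ∈ I, sg (y i (α i)))^2 * (W / Wa a))^(n+1)
                      = (∑ α, (if α j = 0 then c (Function.update α j a) else 0) * ∏ i ∈ I, sg (y i (α i)))^(2*(n+1)) * (W / Wa a)^(n+1) := by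
                    intro y
                    rw [mul_pow, ← pow_mul]
                  have e2 : ∑ y : Fin k → Fin ℓ → Bool,
                      ((∑ α, (if α j = 0 then c (Function.update α j a) else 0) * ∏ i ∈ I, sg (y i (α i)))^2 * (W / Wa a))^(n+1)
                      = (∑ y : Fin k → Fin ℓ → Bool,
                          (∑ α, (if α j = 0 then c (Function.update α j a) else 0) * ∏ i ∈ I, sg (y i (α i)))^(2*(n+1))) * (W / Wa a)^(n+1) := by
                    rw [Finset.sum_congr rfl fun y _ => estep y, ← Finset.sum_mul]
                  calc (Wa a / W) * ∑ y : Fin k → Fin ℓ → Bool,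
                      ((∑ α, (if α j = 0 then c (Function.update α j a) else 0) * ∏ i ∈ I, sg (y i (α i)))^2 * (W / Wa a))^(n+1)
                      = (Wa a / W) * ((∑ y : Fin k → Fin ℓ → Bool,
                          (∑ α, (if α j = 0 then c (Function.update α j a) else 0) * ∏ i ∈ I, sg (y i (α i)))^(2*(n+1))) * (W / Wa a)^(n+1)) := by
                        rw [e2]
                    _ ≤ (Wa a / W) * (((DF (n+1) : ℝ)^I.card * 2^(ℓ*k) * (Wa a)^(n+1)) * (W / Wa a)^(n+1)) := by
                        apply mul_le_mul_of_nonneg_left _ (div_nonneg (hWanns a) hWnn)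
                        apply mul_le_mul_of_nonneg_right _ hq
                        exact ihI (fun α => if α j = 0 then c (Function.update α j a) else 0) (hsupp' a)
                    _ = (DF (n+1) : ℝ)^I.card * 2^(ℓ*k) * (W^n * Wa a) := by
                        have hWa' : Wa a ≠ 0 := hWa0
                        have hW' : W ≠ 0 := hW0
                        have e : (Wa a)^(n+1) * (W / Wa a)^(n+1) = W^(n+1) := by
                          rw [← mul_pow, mul_div_assoc', mul_comm (Wa a) W, mul_div_assoc, div_self hWa', mul_one]
                        rw [show (Wa a / W) * (((DF (n+1) : ℝ)^I.card * 2^(ℓ*k) * (Wa a)^(n+1)) * (W / Wa a)^(n+1))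
                            = (Wa a / W) * ((DF (n+1) : ℝ)^I.card * 2^(ℓ*k)) * ((Wa a)^(n+1) * (W / Wa a)^(n+1)) by ring, e]
                        linear_combination ((DF (n+1) : ℝ)^I.card * 2^(ℓ*k) * W^n * Wa a) * mul_inv_cancel₀ hW'
            _ = (DF (n+1) : ℝ)^I.card * 2^(ℓ*k) * W^(n+1) := by
                rw [← Finset.mul_sum]
                have : (∑ a : Fin ℓ, W^n * Wa a) = W^n * ∑ a : Fin ℓ, Wa a := by
                  rw [Finset.mul_sum]
                rw [this, ← claim4]
                ring
        -- put everything together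
        calc ∑ y : Fin k → Fin ℓ → Bool, (∑ α, c α * ∏ i ∈ insert j I, sg (y i (α i))) ^ (2*(n+1))
            = ∑ y : Fin k → Fin ℓ → Bool,
                (∑ a : Fin ℓ, (∑ α, (if α j = 0 then c (Function.update α j a) else 0) * ∏ i ∈ I, sg (y i (α i))) * sg (y j a)) ^ (2*(n+1)) := by
              apply Finset.sum_congr rfl
              intro y _
              rw [claim1 y]
          _ ≤ (DF (n+1) : ℝ) * ∑ y : Fin k → Fin ℓ → Bool,
                (∑ a : Fin ℓ, (∑ α, (if α j = 0 then c (Function.update α j a) else 0) * ∏ i ∈ I, sg (y i (α i)))^2)^(n+1) := hck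
          _ ≤ (DF (n+1) : ℝ) * ((DF (n+1) : ℝ)^I.card * 2^(ℓ*k) * W^(n+1)) := by
              apply mul_le_mul_of_nonneg_left main2 (by positivity)
          _ = (DF (n+1) : ℝ)^(insert j I).card * 2^(ℓ*k) * W^(n+1) := by
              rw [Finset.card_insert_of_notMem hj, pow_succ]
              ring

/-- real-arithmetic helper: self-bounding inequality -/
lemma solveW (W R : ℝ) (K : ℕ) (hWpos : 0 < W)
    (hkey : W * (W/2)^K ≤ (W/2)^(K+1) + R) :
    W^(K+1) ≤ 2^(K+1) * R := by
  have h2K : (0:ℝ) < 2^K := by positivity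
  have e1 : W * (W/2)^K = W^(K+1)/2^K := by
    rw [div_pow, pow_succ']
    ring
  have e2 : (W/2)^(K+1) = W^(K+1)/(2^K*2) := by
    rw [div_pow, pow_succ, pow_succ]
  rw [e1, e2] at hkey
  have h4 : W^(K+1)/2^K - W^(K+1)/(2^K*2) = W^(K+1)/(2^K*2) := by
    field_simp
    ring
  have h5 : W^(K+1)/(2^K*2) ≤ R := by linarith
  have h6 := (div_le_iff₀ (by positivity : (0:ℝ) < 2^K*2)).mp h5
  calc W^(K+1) ≤ R * (2^K*2) := h6
    _ = 2^(K+1) * R := by rw [pow_succ]; ring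

lemma perI (ℓ k : ℕ) [NeZero ℓ] (hk : 2 ≤ k)
    (p : (Fin k → Fin ℓ) → ℝ) (q : (Fin k → Fin ℓ → Bool) → ℝ)
    (hp0 : ∀ x, 0 ≤ p x) (hq0 : ∀ y, 0 ≤ q y) (hq1 : ∑ y, q y = 1)
    (hdefq : ∀ y, q y ≤ (2:ℝ) ^ ((k:ℝ) - (ℓ:ℝ)*(k:ℝ)))
    (I : Finset (Fin k)) (hI : I.Nonempty)
    (hblockI : ∀ α : Fin k → Fin ℓ,
      ∑ x ∈ univ.filter (fun x => ∀ i ∈ I, x i = α i), p x ≤ ((k:ℝ) ^ (50*I.card))⁻¹) :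
    ∑ x ∈ univ.filter (fun x => 1/(k:ℝ)^(10*I.card) < |∑ y, q y * ∏ i ∈ I, sg (y i (x i))|), p x
      ≤ 8 * (2/(k:ℝ)^29)^I.card := by
  have hk0 : (0:ℝ) < k := by exact_mod_cast (by omega : 0 < k)
  have hkne : (k:ℝ) ≠ 0 := ne_of_gt hk0
  have hk1 : 1 ≤ k := by omega
  -- the coefficient function
  set c : (Fin k → Fin ℓ) → ℝ := fun α =>
    if (∀ i, i ∉ I → α i = 0) then (∑ y, q y * ∏ i ∈ I, sg (y i (α i))) else 0 with hc
  have hsupp : ∀ α, c α ≠ 0 → ∀ i, i ∉ I → α i = 0 := by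
    intro α hα i hi
    by_cases hcond : (∀ i, i ∉ I → α i = 0)
    · exact hcond i hi
    · rw [hc] at hα
      simp only [if_neg hcond] at hα
      exact absurd rfl hα
  have hWnn : (0:ℝ) ≤ ∑ α, (c α)^2 := Finset.sum_nonneg fun α _ => sq_nonneg _
  -- W = expected value of f·g
  have hW1 : (∑ y, q y * (∑ α, c α * ∏ i ∈ I, sg (y i (α i)))) = ∑ α, (c α)^2 := by
    calc ∑ y, q y * (∑ α, c α * ∏ i ∈ I, sg (y i (α i)))
        = ∑ y, ∑ α, c α * (q y * ∏ i ∈ I, sg (y i (α i))) := by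
          apply Finset.sum_congr rfl; intro y _
          rw [Finset.mul_sum]
          apply Finset.sum_congr rfl; intro α _; ring
      _ = ∑ α, ∑ y : Fin k → Fin ℓ → Bool, c α * (q y * ∏ i ∈ I, sg (y i (α i))) := Finset.sum_comm
      _ = ∑ α, c α * (∑ y, q y * ∏ i ∈ I, sg (y i (α i))) := by
          apply Finset.sum_congr rfl; intro α _
          rw [Finset.mul_sum]
      _ = ∑ α, (c α)^2 := by
          apply Finset.sum_congr rfl; intro α _
          rw [hc]
          by_cases hcond : (∀ i, i ∉ I → α i = 0)
          · simp only [if_pos hcond]; ring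
          · simp only [if_neg hcond]; ring
  -- the main bound on W
  have hWle : (∑ α, (c α)^2) ≤ 8 * (2*(k:ℝ))^I.card := by
    by_cases hW0 : (∑ α, (c α)^2) = 0
    · rw [hW0]; positivity
    · have hWpos : (0:ℝ) < ∑ α, (c α)^2 := lt_of_le_of_ne hWnn (Ne.symm hW0)
      set W : ℝ := ∑ α, (c α)^2 with hWdef
      have hEnn : ∀ y : Fin k → Fin ℓ → Bool,
          (0:ℝ) ≤ (∑ α, c α * ∏ i ∈ I, sg (y i (α i)))^(2*k) := by
        intro y; rw [pow_mul]; positivity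
      have hB0 : (0:ℝ) < (2:ℝ) ^ ((k:ℝ) - (ℓ:ℝ)*(k:ℝ)) := Real.rpow_pos_of_pos (by norm_num) _
      have hBB : (2:ℝ) ^ ((k:ℝ) - (ℓ:ℝ)*(k:ℝ)) * 2^(ℓ*k) = 2^k := by
        rw [← Real.rpow_natCast (2:ℝ) (ℓ*k), ← Real.rpow_add (by norm_num : (0:ℝ) < 2),
          ← Real.rpow_natCast (2:ℝ) k]
        congr 1
        push_cast
        ring
      have key : W * (W/2)^(2*k-1) ≤ (W/2)^(2*k) + 2^k * (DF k:ℝ)^I.card * W^k := by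
        have hhalf : (0:ℝ) < W/2 := by positivity
        calc W * (W/2)^(2*k-1)
            = ∑ y, q y * ((∑ α, c α * ∏ i ∈ I, sg (y i (α i))) * (W/2)^(2*k-1)) := by
              rw [← hW1, Finset.sum_mul]
              apply Finset.sum_congr rfl; intro y _; ring
          _ ≤ ∑ y, q y * ((W/2)^(2*k) + (∑ α, c α * ∏ i ∈ I, sg (y i (α i)))^(2*k)) := by
              apply Finset.sum_le_sum; intro y _
              exact mul_le_mul_of_nonneg_left
                (pointwise_T _ _ hhalf k hk1) (hq0 y)
          _ = (W/2)^(2*k) * (∑ y : Fin k → Fin ℓ → Bool, q y)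
              + ∑ y : Fin k → Fin ℓ → Bool, q y * (∑ α, c α * ∏ i ∈ I, sg (y i (α i)))^(2*k) := by
              simp_rw [mul_add]
              rw [Finset.sum_add_distrib, ← Finset.sum_mul]
              ring
          _ = (W/2)^(2*k) + ∑ y : Fin k → Fin ℓ → Bool, q y * (∑ α, c α * ∏ i ∈ I, sg (y i (α i)))^(2*k) := by
              rw [hq1, mul_one]
          _ ≤ (W/2)^(2*k) + (2:ℝ) ^ ((k:ℝ) - (ℓ:ℝ)*(k:ℝ)) *
                ∑ y : Fin k → Fin ℓ → Bool, (∑ α, c α * ∏ i ∈ I, sg (y i (α i)))^(2*k) := by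
              have : ∑ y : Fin k → Fin ℓ → Bool, q y * (∑ α, c α * ∏ i ∈ I, sg (y i (α i)))^(2*k)
                  ≤ (2:ℝ) ^ ((k:ℝ) - (ℓ:ℝ)*(k:ℝ)) * ∑ y : Fin k → Fin ℓ → Bool, (∑ α, c α * ∏ i ∈ I, sg (y i (α i)))^(2*k) := by
                rw [Finset.mul_sum]
                apply Finset.sum_le_sum; intro y _
                exact mul_le_mul_of_nonneg_right (hdefq y) (hEnn y)
              linarith
          _ ≤ (W/2)^(2*k) + (2:ℝ) ^ ((k:ℝ) - (ℓ:ℝ)*(k:ℝ)) *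
                ((DF k : ℝ)^I.card * 2^(ℓ*k) * W^k) := by
              have := momentBound ℓ k k I c hsupp
              have h2 := mul_le_mul_of_nonneg_left this (le_of_lt hB0)
              linarith
          _ = (W/2)^(2*k) + 2^k * (DF k:ℝ)^I.card * W^k := by
              rw [show (2:ℝ) ^ ((k:ℝ) - (ℓ:ℝ)*(k:ℝ)) * ((DF k : ℝ)^I.card * 2^(ℓ*k) * W^k)
                  = ((2:ℝ) ^ ((k:ℝ) - (ℓ:ℝ)*(k:ℝ)) * 2^(ℓ*k)) * ((DF k : ℝ)^I.card * W^k) from by ring,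
                hBB]
              ring
      -- solve for W
      obtain ⟨K, hK⟩ : ∃ K, 2*k = K + 1 := ⟨2*k-1, by omega⟩
      have hK2 : 2*k-1 = K := by omega
      rw [hK2, hK] at key
      have hsol := solveW W _ K hWpos key
      -- W^(2k) ≤ 2^(2k) * (2^k * DF^s * W^k)
      have hWk : W^k * W^k ≤ (8^k * (DF k:ℝ)^I.card) * W^k := by
        have e3 : W^(K+1) = W^k * W^k := by rw [← hK, two_mul, pow_add]
        have e4 : (2:ℝ)^(K+1) * (2^k * (DF k:ℝ)^I.card * W^k)
            = (8^k * (DF k:ℝ)^I.card) * W^k := by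
          rw [← hK]
          have : (2:ℝ)^(2*k) * 2^k = 8^k := by
            rw [← pow_add, show 2*k+k = 3*k from by ring, pow_mul]
            norm_num
          calc (2:ℝ)^(2*k) * (2^k * (DF k:ℝ)^I.card * W^k)
              = ((2:ℝ)^(2*k) * 2^k) * ((DF k:ℝ)^I.card * W^k) := by ring
            _ = 8^k * ((DF k:ℝ)^I.card * W^k) := by rw [this]
            _ = (8^k * (DF k:ℝ)^I.card) * W^k := by ring
        rw [← e3, ← e4]
        exact hsol
      have hWkk : W^k ≤ 8^k * (DF k:ℝ)^I.card :=
        le_of_mul_le_mul_right hWk (by positivity)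
      have hDFle : (DF k : ℝ)^I.card ≤ ((2*(k:ℝ))^k)^I.card := by
        apply pow_le_pow_left₀ (by positivity)
        have := DF_le k
        have h2 : ((DF k : ℕ):ℝ) ≤ (((2*k)^k : ℕ):ℝ) := by exact_mod_cast this
        push_cast at h2
        exact h2
      have hfin : W^k ≤ (8 * (2*(k:ℝ))^I.card)^k := by
        have e5 : (8 * (2*(k:ℝ))^I.card)^k = 8^k * ((2*(k:ℝ))^k)^I.card := by
          rw [mul_pow, ← pow_mul, ← pow_mul, mul_comm I.card k]
        rw [e5]
        calc W^k ≤ 8^k * (DF k:ℝ)^I.card := hWkk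
          _ ≤ 8^k * ((2*(k:ℝ))^k)^I.card := by
            apply mul_le_mul_of_nonneg_left hDFle (by positivity)
      exact le_of_pow_le_pow_left₀ (by omega) (by positivity) hfin
  -- counting bad fibers
  set Bad : Finset (Fin k → Fin ℓ) := univ.filter (fun β => (∀ i, i ∉ I → β i = 0) ∧
      1/(k:ℝ)^(10*I.card) < |∑ y, q y * ∏ i ∈ I, sg (y i (β i))|) with hBad
  have hcb : ∀ β ∈ Bad, (1/(k:ℝ)^(10*I.card))^2 ≤ (c β)^2 := by
    intro β hβ
    rw [hBad] at hβ
    simp only [Finset.mem_filter, Finset.mem_univ, true_and] at hβ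
    obtain ⟨hcond, hlt⟩ := hβ
    rw [hc]
    simp only [if_pos hcond]
    calc (1/(k:ℝ)^(10*I.card))^2
        ≤ |∑ y, q y * ∏ i ∈ I, sg (y i (β i))|^2 :=
          pow_le_pow_left₀ (by positivity) (le_of_lt hlt) 2
      _ = (∑ y, q y * ∏ i ∈ I, sg (y i (β i)))^2 := sq_abs _
  have hcard1 : (Bad.card : ℝ) * (1/(k:ℝ)^(10*I.card))^2 ≤ ∑ α, (c α)^2 := by
    calc (Bad.card : ℝ) * (1/(k:ℝ)^(10*I.card))^2
        = Bad.card • (1/(k:ℝ)^(10*I.card))^2 := by rw [nsmul_eq_mul]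
      _ ≤ ∑ β ∈ Bad, (c β)^2 := Finset.card_nsmul_le_sum Bad _ _ hcb
      _ ≤ ∑ α, (c α)^2 :=
          Finset.sum_le_sum_of_subset_of_nonneg (Finset.subset_univ _)
            (fun _ _ _ => sq_nonneg _)
  have h20 : ((1:ℝ)/(k:ℝ)^(10*I.card))^2 = ((k:ℝ)^(20*I.card))⁻¹ := by
    rw [div_pow, one_pow, ← pow_mul]
    congr 2
    ring
  have hcard : (Bad.card : ℝ) ≤ 8 * (2*(k:ℝ))^I.card * (k:ℝ)^(20*I.card) := by
    have hle := le_trans hcard1 hWle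
    rw [h20] at hle
    have hBpos : (0:ℝ) < (k:ℝ)^(20*I.card) := by positivity
    calc (Bad.card:ℝ) = ((Bad.card:ℝ) * ((k:ℝ)^(20*I.card))⁻¹) * (k:ℝ)^(20*I.card) := by
          rw [inv_mul_cancel_right₀ (pow_ne_zero _ hkne)]
      _ ≤ (8 * (2*(k:ℝ))^I.card) * (k:ℝ)^(20*I.card) :=
          mul_le_mul_of_nonneg_right hle hBpos.le
  -- fiberwise probability bound
  have hmaps : ∀ x ∈ (univ : Finset (Fin k → Fin ℓ)).filter (fun x =>
      1/(k:ℝ)^(10*I.card) < |∑ y, q y * ∏ i ∈ I, sg (y i (x i))|),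
      (fun i => if i ∈ I then x i else 0) ∈ Bad := by
    intro x hx
    simp only [Finset.mem_filter, Finset.mem_univ, true_and] at hx
    rw [hBad]
    simp only [Finset.mem_filter, Finset.mem_univ, true_and]
    constructor
    · intro i hi; rw [if_neg hi]
    · have heq : (∑ y, q y * ∏ i ∈ I, sg (y i (if i ∈ I then x i else 0)))
          = ∑ y, q y * ∏ i ∈ I, sg (y i (x i)) := by
        apply Finset.sum_congr rfl; intro y _
        congr 1
        apply Finset.prod_congr rfl; intro i hi
        rw [if_pos hi]
      rw [heq]
      exact hx
  have hfib := Finset.sum_fiberwise_of_maps_to hmaps p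
  have hinner : ∀ β ∈ Bad,
      (∑ x ∈ ((univ : Finset (Fin k → Fin ℓ)).filter (fun x =>
        1/(k:ℝ)^(10*I.card) < |∑ y, q y * ∏ i ∈ I, sg (y i (x i))|)).filter
          (fun x => (fun i => if i ∈ I then x i else 0) = β), p x)
      ≤ ((k:ℝ)^(50*I.card))⁻¹ := by
    intro β _
    refine le_trans (Finset.sum_le_sum_of_subset_of_nonneg ?_ (fun i _ _ => hp0 i)) (hblockI β)
    intro x hx
    simp only [Finset.mem_filter, Finset.mem_univ, true_and] at hx ⊢
    intro i hi
    have h7 := congrFun hx.2 i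
    simp only [if_pos hi] at h7
    exact h7
  calc ∑ x ∈ (univ : Finset (Fin k → Fin ℓ)).filter (fun x =>
        1/(k:ℝ)^(10*I.card) < |∑ y, q y * ∏ i ∈ I, sg (y i (x i))|), p x
      = ∑ β ∈ Bad, ∑ x ∈ ((univ : Finset (Fin k → Fin ℓ)).filter (fun x =>
          1/(k:ℝ)^(10*I.card) < |∑ y, q y * ∏ i ∈ I, sg (y i (x i))|)).filter
            (fun x => (fun i => if i ∈ I then x i else 0) = β), p x := hfib.symm
    _ ≤ ∑ β ∈ Bad, ((k:ℝ)^(50*I.card))⁻¹ := Finset.sum_le_sum hinner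
    _ = (Bad.card:ℝ) * ((k:ℝ)^(50*I.card))⁻¹ := by
        rw [Finset.sum_const, nsmul_eq_mul]
    _ ≤ (8 * (2*(k:ℝ))^I.card * (k:ℝ)^(20*I.card)) * ((k:ℝ)^(50*I.card))⁻¹ :=
        mul_le_mul_of_nonneg_right hcard (by positivity)
    _ = 8 * (2/(k:ℝ)^29)^I.card := by
        have hsplit : (k:ℝ)^(50*I.card) = (k:ℝ)^I.card * (k:ℝ)^(20*I.card) * (k:ℝ)^(29*I.card) := by
          rw [← pow_add, ← pow_add]
          congr 1
          ring
        rw [hsplit, mul_pow, div_pow, ← pow_mul]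
        field_simp

open scoped Classical in
/-- most pointers are good.
`p` is the distribution of a random variable `𝐱` on `[ℓ]^k` with blockwise
min-entropy at least `50·log₂ k`, and `q` is the distribution of an
(independent) random variable `𝐲` on `({0,1}^ℓ)^k` with deficiency at most
`k`.  A point `x ∈ [ℓ]^k` is *good* if for every nonempty `I ⊆ [k]`,
`|E_{y∼𝐲}[∏_{i∈I} (-1)^(y_i(x_i))]| ≤ k^(-10|I|)`.
Then `Pr_{x∼𝐱}[x is not good] ≤ 2/k⁹`. -/
theorem statement3 (ℓ k : ℕ) (hℓ : 1 ≤ ℓ) (hk : 2 ≤ k)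
    (p : (Fin k → Fin ℓ) → ℝ) (q : (Fin k → Fin ℓ → Bool) → ℝ)
    (hp0 : ∀ x, 0 ≤ p x) (hp1 : ∑ x, p x = 1)
    (hq0 : ∀ y, 0 ≤ q y) (hq1 : ∑ y, q y = 1)
    (hblock : ∀ S : Finset (Fin k), S.Nonempty → ∀ α : Fin k → Fin ℓ,
      ∑ x ∈ univ.filter (fun x => ∀ i ∈ S, x i = α i), p x
        ≤ (2 : ℝ) ^ (-(50 * Real.logb 2 (k : ℝ) * (S.card : ℝ))))
    (hdef : ∀ y, q y ≤ (2 : ℝ) ^ ((k : ℝ) - (ℓ : ℝ) * (k : ℝ)))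
    (Good : (Fin k → Fin ℓ) → Prop)
    (hGood : ∀ x, Good x ↔ ∀ I : Finset (Fin k), I.Nonempty →
      |∑ y, q y * ∏ i ∈ I, (if y i (x i) then (-1 : ℝ) else 1)|
        ≤ 1 / (k : ℝ) ^ (10 * I.card)) :
    ∑ x ∈ univ.filter (fun x => ¬ Good x), p x ≤ 2 / (k : ℝ) ^ 9 := by
  haveI : NeZero ℓ := ⟨by omega⟩
  have hk0 : (0:ℝ) < k := by exact_mod_cast (by omega : 0 < k)
  have hkne : (k:ℝ) ≠ 0 := ne_of_gt hk0
  have hk2 : (2:ℝ) ≤ (k:ℝ) := by exact_mod_cast hk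
  have hL : ∀ I : Finset (Fin k),
      (2:ℝ) ^ (-(50 * Real.logb 2 (k:ℝ) * (I.card : ℝ))) = ((k:ℝ)^(50*I.card))⁻¹ := by
    intro I
    rw [Real.rpow_neg (by norm_num : (0:ℝ) ≤ 2)]
    congr 1
    rw [show (50 : ℝ) * Real.logb 2 (k:ℝ) * (I.card:ℝ)
        = Real.logb 2 (k:ℝ) * ((50*I.card : ℕ):ℝ) from by push_cast; ring]
    rw [Real.rpow_mul (by norm_num : (0:ℝ) ≤ 2),
      Real.rpow_logb (by norm_num) (by norm_num) hk0, Real.rpow_natCast]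
  have hsub : (univ : Finset (Fin k → Fin ℓ)).filter (fun x => ¬ Good x) ⊆
      ((univ : Finset (Finset (Fin k))).filter (fun I => I.Nonempty)).biUnion
        (fun I => (univ : Finset (Fin k → Fin ℓ)).filter (fun x =>
          1/(k:ℝ)^(10*I.card) < |∑ y, q y * ∏ i ∈ I, sg (y i (x i))|)) := by
    intro x hx
    simp only [Finset.mem_filter, Finset.mem_univ, true_and] at hx
    rw [hGood] at hx
    push_neg at hx
    obtain ⟨I, hIne, hlt⟩ := hx
    rw [Finset.mem_biUnion]
    refine ⟨I, by simp [hIne], ?_⟩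
    simp only [Finset.mem_filter, Finset.mem_univ, true_and, sg]
    exact Finset.mem_filter.mpr ⟨Finset.mem_univ _, hlt⟩
  have main1 : ∑ x ∈ univ.filter (fun x => ¬ Good x), p x ≤
      ∑ I ∈ (univ : Finset (Finset (Fin k))).filter (fun I => I.Nonempty),
        ∑ x ∈ (univ : Finset (Fin k → Fin ℓ)).filter (fun x =>
          1/(k:ℝ)^(10*I.card) < |∑ y, q y * ∏ i ∈ I, sg (y i (x i))|), p x := by
    calc ∑ x ∈ univ.filter (fun x => ¬ Good x), p x
        ≤ ∑ x ∈ ((univ : Finset (Finset (Fin k))).filter (fun I => I.Nonempty)).biUnion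
            (fun I => (univ : Finset (Fin k → Fin ℓ)).filter (fun x =>
              1/(k:ℝ)^(10*I.card) < |∑ y, q y * ∏ i ∈ I, sg (y i (x i))|)), p x :=
          Finset.sum_le_sum_of_subset_of_nonneg hsub (fun i _ _ => hp0 i)
      _ ≤ _ := sum_biUnion_le_sum _ _ p hp0
  have main2 : ∀ I ∈ (univ : Finset (Finset (Fin k))).filter (fun I => I.Nonempty),
      (∑ x ∈ (univ : Finset (Fin k → Fin ℓ)).filter (fun x =>
        1/(k:ℝ)^(10*I.card) < |∑ y, q y * ∏ i ∈ I, sg (y i (x i))|), p x)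
      ≤ 8 * (2/(k:ℝ)^29)^I.card := by
    intro I hIne
    simp only [Finset.mem_filter, Finset.mem_univ, true_and] at hIne
    apply perI ℓ k hk p q hp0 hq0 hq1 hdef I hIne
    intro α
    have := hblock I hIne α
    rwa [hL I] at this
  have hr0 : (0:ℝ) ≤ 2/(k:ℝ)^29 := by positivity
  have hsum_univ : ∑ I : Finset (Fin k), (2/(k:ℝ)^29)^I.card = (1+2/(k:ℝ)^29)^k := by
    have hpa := Finset.prod_add (fun _ : Fin k => 2/(k:ℝ)^29) (fun _ => (1:ℝ)) univ
    simp only [Finset.prod_const, Finset.card_univ, Fintype.card_fin, one_pow, mul_one,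
      Finset.powerset_univ] at hpa
    rw [add_comm (2/(k:ℝ)^29) 1] at hpa
    exact hpa.symm
  have hfe : (univ : Finset (Finset (Fin k))).filter (fun I => I.Nonempty)
      = (univ : Finset (Finset (Fin k))).erase ∅ := by
    ext I
    simp [Finset.nonempty_iff_ne_empty]
  have hNE : ∑ I ∈ (univ : Finset (Finset (Fin k))).filter (fun I => I.Nonempty),
      (2/(k:ℝ)^29)^I.card = (1+2/(k:ℝ)^29)^k - 1 := by
    have h1 := Finset.add_sum_erase (univ : Finset (Finset (Fin k)))
      (fun I => (2/(k:ℝ)^29)^I.card) (Finset.mem_univ ∅)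
    rw [hfe]
    rw [hsum_univ] at h1
    simp only [Finset.card_empty, pow_zero] at h1
    linarith
  have hkr : (k:ℝ) * (2/(k:ℝ)^29) ≤ 1/2 := by
    have h28 : (2:ℝ)^28 ≤ (k:ℝ)^28 := pow_le_pow_left₀ (by norm_num) hk2 28
    have e : (k:ℝ) * (2/(k:ℝ)^29) = 2/(k:ℝ)^28 := by
      field_simp
    rw [e, div_le_iff₀ (by positivity)]
    nlinarith
  have hP1 : (1:ℝ) ≤ (1+2/(k:ℝ)^29)^k := by
    have := pow_le_pow_left₀ (by norm_num : (0:ℝ) ≤ 1) (by linarith : (1:ℝ) ≤ 1 + 2/(k:ℝ)^29) k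
    simpa using this
  have hD : (1+2/(k:ℝ)^29)^k - 1 ≤ 2*((k:ℝ)*(2/(k:ℝ)^29)) := by
    have h1 := pow_one_add_sub_le (2/(k:ℝ)^29) hr0 k
    have h3 : (0:ℝ) ≤ ((1+2/(k:ℝ)^29)^k - 1) * (1/2 - (k:ℝ)*(2/(k:ℝ)^29)) :=
      mul_nonneg (by linarith) (by linarith)
    nlinarith
  calc ∑ x ∈ univ.filter (fun x => ¬ Good x), p x
      ≤ ∑ I ∈ (univ : Finset (Finset (Fin k))).filter (fun I => I.Nonempty),
        ∑ x ∈ (univ : Finset (Fin k → Fin ℓ)).filter (fun x =>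
          1/(k:ℝ)^(10*I.card) < |∑ y, q y * ∏ i ∈ I, sg (y i (x i))|), p x := main1
    _ ≤ ∑ I ∈ (univ : Finset (Finset (Fin k))).filter (fun I => I.Nonempty),
          8 * (2/(k:ℝ)^29)^I.card := Finset.sum_le_sum main2
    _ = 8 * ((1+2/(k:ℝ)^29)^k - 1) := by
        rw [← Finset.mul_sum, hNE]
    _ ≤ 8 * (2*((k:ℝ)*(2/(k:ℝ)^29))) := by linarith
    _ = 32/(k:ℝ)^28 := by
        field_simp
        ring
    _ ≤ 2/(k:ℝ)^9 := by
        rw [div_le_div_iff₀ (by positivity) (by positivity)]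
        have h19 : (2:ℝ)^19 ≤ (k:ℝ)^19 := pow_le_pow_left₀ (by norm_num) hk2 19
        have h9 : (0:ℝ) ≤ (k:ℝ)^9 := by positivity
        have e : (k:ℝ)^28 = (k:ℝ)^19 * (k:ℝ)^9 := by rw [← pow_add]
        nlinarith [mul_le_mul_of_nonneg_right h19 h9]
end

section
/- Let n, ℓ ≥ 1 with nℓ ≥ 2 and set m := (nℓ)⁵. Let ρ be a partial assignment and let R = X × ∏_{i∈[n], j∈[ℓ]} Y^{ij} be a ρ-structured box. Then there exists x ∈ X such that the slice {x} × ∏_{i,j} Y^{ij} is ρ-like, i.e. the set of gadget outputs { z ∈ ({0,1}^ℓ)^n : z_{i,j} = y^{ij}(x_i) for some choice of y^{ij} ∈ Y^{ij} for each (i,j) } equals Cube(ρ). -/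
open Finset

lemma keycalc (n ℓ m : ℕ) (h2 : 2 ≤ n * ℓ) (hm : m = (n * ℓ) ^ 5) :
    (n : ℝ) * ℓ * Real.sqrt m * (2 : ℝ) ^ (-(0.9 * Real.logb 2 (m : ℝ))) < 1 := by
  set t : ℝ := ((n * ℓ : ℕ) : ℝ) with htdef
  have ht : (2 : ℝ) ≤ t := by rw [htdef]; exact_mod_cast h2
  have ht0 : (0 : ℝ) < t := by linarith
  have hmt : (m : ℝ) = t ^ (5 : ℕ) := by rw [hm, htdef]; push_cast; ring
  have hm0 : (0 : ℝ) < (m : ℝ) := by rw [hmt]; positivity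
  have h1 : (2 : ℝ) ^ (-(0.9 * Real.logb 2 (m : ℝ))) = (m : ℝ) ^ (-(0.9) : ℝ) := by
    rw [show -(0.9 * Real.logb 2 (m : ℝ)) = Real.logb 2 (m : ℝ) * (-(0.9)) by ring,
      Real.rpow_mul (by norm_num), Real.rpow_logb (by norm_num) (by norm_num) hm0]
  have e1 : Real.sqrt (m : ℝ) * (m : ℝ) ^ (-(0.9) : ℝ) = (m : ℝ) ^ (-(0.4) : ℝ) := by
    rw [Real.sqrt_eq_rpow, ← Real.rpow_add hm0]; norm_num
  have e2 : (m : ℝ) ^ (-(0.4) : ℝ) = t ^ (-(2) : ℝ) := by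
    rw [hmt, ← Real.rpow_natCast t 5, ← Real.rpow_mul ht0.le]; norm_num
  have e3 : t ^ (-(2) : ℝ) = (t ^ 2)⁻¹ := by
    rw [← Real.rpow_natCast t 2, ← Real.rpow_neg ht0.le]; norm_num
  have hn1 : (n : ℝ) * ℓ = t := by rw [htdef]; push_cast; ring
  rw [h1, mul_assoc, e1, e2, e3, hn1]
  rw [mul_inv_lt_iff₀ (by positivity)]
  nlinarith

lemma Ccard (m : ℕ) (Y : Finset (Fin m → Bool))
    (hlarge : (2:ℝ)^((m:ℝ) - Real.sqrt m) ≤ (Y.card : ℝ)) :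
    (((univ : Finset (Fin m)).filter (fun p => ∃ b, ∀ y ∈ Y, y p = b)).card : ℝ)
      ≤ Real.sqrt m := by
  set C := (univ : Finset (Fin m)).filter (fun p => ∃ b, ∀ y ∈ Y, y p = b) with hC
  have hcle : C.card ≤ m := by
    simpa using card_le_card (subset_univ C)
  have hinj : Function.Injective
      (fun (y : ↥Y) (q : {p : Fin m // p ∈ univ \ C}) => y.1 q.1) := by
    intro y₁ y₂ hf
    apply Subtype.ext
    funext p
    by_cases hp : p ∈ C
    · obtain ⟨b, hb⟩ := (mem_filter.mp hp).2
      rw [hb y₁.1 y₁.2, hb y₂.1 y₂.2]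
    · exact congrFun hf ⟨p, by simp [hp]⟩
  have hcard : Y.card ≤ 2 ^ (m - C.card) := by
    have := Fintype.card_le_of_injective _ hinj
    simpa [Fintype.card_fun, Fintype.card_coe, card_sdiff_of_subset (subset_univ C),
      card_univ] using this
  have h1 : (2:ℝ) ^ ((m:ℝ) - Real.sqrt m) ≤ (2:ℝ) ^ (((m - C.card : ℕ)) : ℝ) := by
    refine hlarge.trans ?_
    rw [Real.rpow_natCast]
    exact_mod_cast hcard
  have h2 : (m:ℝ) - Real.sqrt m ≤ ((m - C.card : ℕ) : ℝ) :=
    (Real.rpow_le_rpow_left_iff (by norm_num : (1:ℝ) < 2)).mp h1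
  have h3 : ((m - C.card : ℕ) : ℝ) = (m : ℝ) - C.card := by
    rw [Nat.cast_sub hcle]
  linarith [h2, h3.le, h3.ge]

/-- Lemma 4.2: ρ-structured boxes contain ρ-like slices.
Let `m = (nℓ)⁵`.  A partial assignment `ρ : Fin n → Option (Fin ℓ → Bool)`
assigns to each block either an `ℓ`-bit string (`some v`) or `*` (`none`).
The box `R = X × ∏_{ij} Y^{ij}` is ρ-structured:
(1) it is nonempty, and the gadget outputs of fixed blocks agree with ρ;
(2) the uniform variable on `X`, marginalized to the free blocks, has
blockwise min-entropy at least `0.9·log₂ m`;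
(3) `|Y^{ij}| ≥ 2^(m - √m)` for free `i` and all `j`.
Then there exists `x ∈ X` such that the slice `{x} × ∏_{ij} Y^{ij}` is
ρ-like: its image under the block column-index gadget equals `Cube(ρ)`. -/
theorem statement4 (n ℓ : ℕ) (hn : 1 ≤ n) (hℓ : 1 ≤ ℓ) (h2 : 2 ≤ n * ℓ)
    (m : ℕ) (hm : m = (n * ℓ) ^ 5)
    (ρ : Fin n → Option (Fin ℓ → Bool))
    (X : Finset (Fin n → Fin m)) (Y : Fin n → Fin ℓ → Finset (Fin m → Bool))
    -- R nonempty
    (hXne : X.Nonempty) (hYne : ∀ i j, (Y i j).Nonempty)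
    -- (1) gadgets are fixed according to ρ
    (hfix : ∀ x ∈ X, ∀ i : Fin n, ∀ v : Fin ℓ → Bool, ρ i = some v →
      ∀ j : Fin ℓ, ∀ y ∈ Y i j, y (x i) = v j)
    -- (2) X has blockwise min-entropy ≥ 0.9·log₂ m on the free blocks
    (hblock : ∀ S : Finset (Fin n), S.Nonempty → (∀ i ∈ S, ρ i = none) →
      ∀ α : Fin n → Fin m,
        ((X.filter fun x => ∀ i ∈ S, x i = α i).card : ℝ)
          ≤ (X.card : ℝ) * (2 : ℝ) ^ (-(0.9 * Real.logb 2 (m : ℝ) * (S.card : ℝ))))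
    -- (3) the Y^{ij} are large on free blocks
    (hlarge : ∀ i : Fin n, ρ i = none → ∀ j : Fin ℓ,
      (2 : ℝ) ^ ((m : ℝ) - Real.sqrt (m : ℝ)) ≤ ((Y i j).card : ℝ)) :
    ∃ x ∈ X,
      {z : Fin n → Fin ℓ → Bool |
          ∃ y : Fin n → Fin ℓ → (Fin m → Bool),
            (∀ i j, y i j ∈ Y i j) ∧ ∀ i j, z i j = y i j (x i)}
        = {z : Fin n → Fin ℓ → Bool |
            ∀ i : Fin n, ∀ v : Fin ℓ → Bool, ρ i = some v → z i = v} := by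
  -- the set of "constant" pointers for gadget (i,j)
  set C : Fin n → Fin ℓ → Finset (Fin m) :=
    fun i j => (univ : Finset (Fin m)).filter (fun p => ∃ b, ∀ y ∈ Y i j, y p = b) with hCdef
  set B : Fin n → Finset (Fin m) := fun i => (univ : Finset (Fin ℓ)).biUnion (C i) with hBdef
  set E : ℝ := (2 : ℝ) ^ (-(0.9 * Real.logb 2 (m : ℝ))) with hEdef
  have hE0 : 0 ≤ E := le_of_lt (Real.rpow_pos_of_pos (by norm_num) _)
  have hsqrt0 : 0 ≤ Real.sqrt (m : ℝ) := Real.sqrt_nonneg _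
  -- bound on C i j cards
  have hC : ∀ i, ρ i = none → ∀ j, ((C i j).card : ℝ) ≤ Real.sqrt (m : ℝ) :=
    fun i hi j => Ccard m (Y i j) (hlarge i hi j)
  -- bound on B i cards
  have hB : ∀ i, ρ i = none → ((B i).card : ℝ) ≤ (ℓ : ℝ) * Real.sqrt (m : ℝ) := by
    intro i hi
    have h1 : (B i).card ≤ ∑ j : Fin ℓ, (C i j).card := card_biUnion_le
    have h2 : ((B i).card : ℝ) ≤ ∑ j : Fin ℓ, ((C i j).card : ℝ) := by
      exact_mod_cast h1
    refine h2.trans ?_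
    calc ∑ j : Fin ℓ, ((C i j).card : ℝ)
        ≤ ∑ _j : Fin ℓ, Real.sqrt (m : ℝ) := Finset.sum_le_sum (fun j _ => hC i hi j)
      _ = (ℓ : ℝ) * Real.sqrt (m : ℝ) := by simp [mul_comm]
  -- singleton min-entropy bound
  have hA : ∀ i, ρ i = none → ∀ p : Fin m,
      ((X.filter fun x => x i = p).card : ℝ) ≤ (X.card : ℝ) * E := by
    intro i hi p
    have h := hblock {i} (singleton_nonempty i)
      (by intro i' hi'; rw [mem_singleton] at hi'; rwa [hi']) (fun _ => p)
    have heq : X.filter (fun x => x i = p)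
        = X.filter (fun x => ∀ i' ∈ ({i} : Finset (Fin n)), x i' = (fun _ => p) i') := by
      apply filter_congr
      intro x _
      simp
    rw [heq]
    simpa [hEdef] using h
  -- the bad set
  set F : Finset (Fin n) := univ.filter (fun i => ρ i = none) with hFdef
  set Bad : Finset (Fin n → Fin m) :=
    X.filter (fun x => ∃ i, ρ i = none ∧ x i ∈ B i) with hBaddef
  have hsub : Bad ⊆ F.biUnion (fun i => (B i).biUnion
      (fun p => X.filter (fun x => x i = p))) := by
    intro x hx
    obtain ⟨hxX, i, hi, hxB⟩ := by simpa [hBaddef] using hx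
    refine mem_biUnion.mpr ⟨i, by simp [hFdef, hi], mem_biUnion.mpr ⟨x i, hxB, ?_⟩⟩
    simp [hxX]
  have hBadcard : (Bad.card : ℝ) < (X.card : ℝ) := by
    have h1 : (Bad.card : ℝ)
        ≤ ∑ i ∈ F, ∑ p ∈ B i, ((X.filter fun x => x i = p).card : ℝ) := by
      have := (card_le_card hsub).trans card_biUnion_le
      have hnat : Bad.card ≤ ∑ i ∈ F, ∑ p ∈ B i, (X.filter fun x => x i = p).card :=
        this.trans (Finset.sum_le_sum (fun i _ => card_biUnion_le))
      exact_mod_cast hnat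
    have hFfree : ∀ i ∈ F, ρ i = none := by
      intro i hi; exact (mem_filter.mp hi).2
    have hsumB : ∀ i ∈ F, ∑ p ∈ B i, ((X.filter fun x => x i = p).card : ℝ)
        ≤ ((ℓ : ℝ) * Real.sqrt (m : ℝ)) * ((X.card : ℝ) * E) := by
      intro i hi
      have hle : ∑ p ∈ B i, ((X.filter fun x => x i = p).card : ℝ)
          ≤ (B i).card • ((X.card : ℝ) * E) :=
        Finset.sum_le_card_nsmul _ _ _ (fun p _ => hA i (hFfree i hi) p)
      rw [nsmul_eq_mul] at hle
      refine hle.trans ?_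
      have := hB i (hFfree i hi)
      have hXE0 : 0 ≤ (X.card : ℝ) * E := by positivity
      exact mul_le_mul_of_nonneg_right this hXE0
    have h3 : (Bad.card : ℝ)
        ≤ (F.card : ℝ) * (((ℓ : ℝ) * Real.sqrt (m : ℝ)) * ((X.card : ℝ) * E)) := by
      refine h1.trans ?_
      have := Finset.sum_le_card_nsmul F _ _ hsumB
      rwa [nsmul_eq_mul] at this
    have hFn : (F.card : ℝ) ≤ (n : ℝ) := by
      exact_mod_cast (card_le_card (subset_univ F)).trans (by simp)
    have hkey : (n : ℝ) * ℓ * Real.sqrt (m : ℝ) * E < 1 := keycalc n ℓ m h2 hm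
    have hX0 : (0 : ℝ) < (X.card : ℝ) := by
      exact_mod_cast card_pos.mpr hXne
    have h4 : (Bad.card : ℝ)
        ≤ ((n : ℝ) * ℓ * Real.sqrt (m : ℝ) * E) * (X.card : ℝ) := by
      refine h3.trans ?_
      have h5 : (F.card : ℝ) * (((ℓ : ℝ) * Real.sqrt (m : ℝ)) * ((X.card : ℝ) * E))
          ≤ (n : ℝ) * (((ℓ : ℝ) * Real.sqrt (m : ℝ)) * ((X.card : ℝ) * E)) := by
        refine mul_le_mul_of_nonneg_right hFn (by positivity)
      refine h5.trans_eq (by ring)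
    calc (Bad.card : ℝ) ≤ ((n : ℝ) * ℓ * Real.sqrt (m : ℝ) * E) * (X.card : ℝ) := h4
      _ < 1 * (X.card : ℝ) := by exact mul_lt_mul_of_pos_right hkey hX0
      _ = (X.card : ℝ) := one_mul _
  -- extract a good x
  have hBadlt : Bad.card < X.card := by exact_mod_cast hBadcard
  have hBadsub : Bad ⊆ X := by rw [hBaddef]; exact filter_subset _ _
  have hgoodex : (X \ Bad).Nonempty := by
    rw [← card_pos, card_sdiff_of_subset hBadsub]
    omega
  obtain ⟨x, hxmem⟩ := hgoodex
  have hxX : x ∈ X := (mem_sdiff.mp hxmem).1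
  have hxgood : ∀ i, ρ i = none → ∀ j, x i ∉ C i j := by
    intro i hi j hxc
    have := (mem_sdiff.mp hxmem).2
    exact this (by
      rw [hBaddef, mem_filter]
      exact ⟨hxX, i, hi, mem_biUnion.mpr ⟨j, mem_univ j, hxc⟩⟩)
  refine ⟨x, hxX, ?_⟩
  ext z
  simp only [Set.mem_setOf_eq]
  constructor
  · rintro ⟨y, hy, hz⟩ i v hv
    funext j
    rw [hz i j, hfix x hxX i v hv j (y i j) (hy i j)]
  · intro hzfix
    have hex : ∀ i j, ∃ y ∈ Y i j, y (x i) = z i j := by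
      intro i j
      cases hρ : ρ i with
      | some v =>
        obtain ⟨y, hy⟩ := hYne i j
        refine ⟨y, hy, ?_⟩
        rw [hfix x hxX i v hρ j y hy, hzfix i v hρ]
      | none =>
        by_contra hcon
        push_neg at hcon
        refine hxgood i hρ j ?_
        rw [hCdef]
        refine mem_filter.mpr ⟨mem_univ _, !(z i j), fun y hy => ?_⟩
        have := hcon y hy
        revert this
        cases hb : y (x i) <;> cases hb2 : z i j <;> simp
    choose y hy1 hy2 using hex
    exact ⟨y, hy1, fun i j => (hy2 i j).symm⟩
end

section
/- Let n, ℓ ≥ 1 with nℓ ≥ 2 and set m := (nℓ)⁵. Let X ⊆ [m]^n be nonempty and suppose the uniform random variable on X has blockwise min-entropy at least 0.9·log₂ m. For each i ∈ [n] and j ∈ [ℓ], let Y^{ij} ⊆ {0,1}^m satisfy |Y^{ij}| ≥ 2^{m − √m}. Then there exists x ∈ X such that for every i ∈ [n] and j ∈ [ℓ] both bit values are attained at the pointed coordinate: { y(x_i) : y ∈ Y^{ij} } = {0,1}. -/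
open Finset

lemma constant_coords (m : ℕ) (Y : Finset (Fin m → Bool)) :
    Y.card ≤ 2 ^ (m - (Finset.univ.filter
      (fun p : Fin m => ∀ y ∈ Y, ∀ z ∈ Y, y p = z p)).card) := by
  set B := Finset.univ.filter (fun p : Fin m => ∀ y ∈ Y, ∀ z ∈ Y, y p = z p) with hB
  have hinj : Set.InjOn (fun (y : Fin m → Bool) (p : {p : Fin m // p ∉ B}) => y p.1) Y := by
    intro y hy z hz hyz
    funext p
    by_cases hp : p ∈ B
    · exact (mem_filter.mp hp).2 y hy z hz
    · exact congrFun hyz ⟨p, hp⟩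
  calc Y.card ≤ (Finset.univ : Finset ({p : Fin m // p ∉ B} → Bool)).card :=
        Finset.card_le_card_of_injOn _ (fun x _ => Finset.mem_univ _) hinj
    _ = 2 ^ (m - B.card) := by
        rw [Finset.card_univ, Fintype.card_fun, Fintype.card_bool, Fintype.card_subtype]
        congr 1
        have : (Finset.univ.filter (fun p : Fin m => p ∉ B)) = Bᶜ := by
          ext p; simp [Finset.mem_compl]
        rw [this, Finset.card_compl, Fintype.card_fin]

lemma key_ineq (k : ℝ) (hk : 2 ≤ k) (m : ℝ) (hm : m = k ^ (5:ℕ)) :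
    k * Real.sqrt m * (2:ℝ) ^ (-(0.9 * Real.logb 2 m)) < 1 := by
  have hk0 : (0:ℝ) < k := by linarith
  have hk1 : (1:ℝ) < k := by linarith
  have hm0 : (0:ℝ) < m := by rw [hm]; positivity
  have h2L : (2:ℝ) ^ (Real.logb 2 m) = m := Real.rpow_logb (by norm_num) (by norm_num) hm0
  have hL : (2:ℝ) ^ (0.9 * Real.logb 2 m) = m ^ (0.9:ℝ) := by
    rw [mul_comm, Real.rpow_mul (by norm_num), h2L]
  have hsqrt : Real.sqrt m = k ^ (2.5:ℝ) := by
    rw [hm, Real.sqrt_eq_rpow, ← Real.rpow_natCast k 5, ← Real.rpow_mul hk0.le]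
    norm_num
  have hpow : m ^ (0.9:ℝ) = k ^ (4.5:ℝ) := by
    rw [hm, ← Real.rpow_natCast k 5, ← Real.rpow_mul hk0.le]
    norm_num
  rw [Real.rpow_neg (by norm_num), hL, hpow, hsqrt]
  have heq : k * k ^ (2.5:ℝ) * (k ^ (4.5:ℝ))⁻¹ = k ^ ((1:ℝ) + 2.5 - 4.5) := by
    rw [Real.rpow_sub hk0, Real.rpow_add hk0, Real.rpow_one]
    ring
  rw [heq]
  norm_num
  exact Real.rpow_lt_one_of_one_lt_of_neg hk1 (by norm_num)


/-- Lemma 4.2 in the special case `ρ = *ⁿ`.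
Let `m = (nℓ)⁵`.  Let `X ⊆ [m]^n` be nonempty with the uniform variable on `X`
having blockwise min-entropy at least `0.9·log₂ m`, and let each
`Y^{ij} ⊆ {0,1}^m` satisfy `|Y^{ij}| ≥ 2^(m - √m)`.  Then there is an `x ∈ X`
such that for every `i ∈ [n]`, `j ∈ [ℓ]` both bit values are attained at the
pointed coordinate: `{ y(x_i) : y ∈ Y^{ij} } = {0,1}`. -/
theorem statement5 (n ℓ : ℕ) (hn : 1 ≤ n) (hℓ : 1 ≤ ℓ) (h2 : 2 ≤ n * ℓ)
    (m : ℕ) (hm : m = (n * ℓ) ^ 5)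
    (X : Finset (Fin n → Fin m)) (hXne : X.Nonempty)
    (hblock : ∀ S : Finset (Fin n), S.Nonempty → ∀ α : Fin n → Fin m,
      ((X.filter fun x => ∀ i ∈ S, x i = α i).card : ℝ)
        ≤ (X.card : ℝ) * (2 : ℝ) ^ (-(0.9 * Real.logb 2 (m : ℝ) * (S.card : ℝ))))
    (Y : Fin n → Fin ℓ → Finset (Fin m → Bool))
    (hlarge : ∀ i j, (2 : ℝ) ^ ((m : ℝ) - Real.sqrt (m : ℝ)) ≤ ((Y i j).card : ℝ)) :
    ∃ x ∈ X, ∀ i : Fin n, ∀ j : Fin ℓ,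
      (Y i j).image (fun y => y (x i)) = (Finset.univ : Finset Bool) := by
  classical
  set B : Fin n → Fin ℓ → Finset (Fin m) := fun i j =>
    Finset.univ.filter (fun p => ∀ y ∈ Y i j, ∀ z ∈ Y i j, y p = z p) with hBdef
  set L : ℝ := Real.logb 2 (m:ℝ) with hLdef
  -- constant coordinate sets are small
  have hBcard : ∀ i j, ((B i j).card : ℝ) ≤ Real.sqrt (m:ℝ) := by
    intro i j
    have h1 := constant_coords m (Y i j)
    have hBm : (B i j).card ≤ m := by
      simpa using Finset.card_le_univ (B i j)
    have h2' : ((Y i j).card : ℝ) ≤ (2:ℝ) ^ ((m:ℝ) - ((B i j).card : ℝ)) := by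
      calc ((Y i j).card : ℝ) ≤ ((2 ^ (m - (B i j).card) : ℕ) : ℝ) := by exact_mod_cast h1
        _ = (2:ℝ) ^ ((m:ℝ) - ((B i j).card:ℝ)) := by
            push_cast [hBm]
            rw [← Real.rpow_natCast (2:ℝ) (m - (B i j).card), Nat.cast_sub hBm]
    have h3 := le_trans (hlarge i j) h2'
    have h4 := (Real.rpow_le_rpow_left_iff (by norm_num : (1:ℝ) < 2)).mp h3
    linarith
  -- singleton block bound
  have hsingle : ∀ (i : Fin n) (α : Fin m),
      ((X.filter (fun x => x i = α)).card : ℝ)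
        ≤ (X.card : ℝ) * (2:ℝ) ^ (-(0.9 * L)) := by
    intro i α
    have h := hblock {i} (Finset.singleton_nonempty i) (fun _ => α)
    simpa using h
  set c : ℝ := (X.card : ℝ) * (2:ℝ) ^ (-(0.9 * L)) with hcdef
  have hc0 : 0 ≤ c := by positivity
  set Bad := X.filter (fun x => ∃ i j, x i ∈ B i j) with hBad
  have hsub : Bad ⊆ (Finset.univ : Finset (Fin n × Fin ℓ)).biUnion
      (fun ij => (B ij.1 ij.2).biUnion (fun α => X.filter (fun x => x ij.1 = α))) := by
    intro x hx
    obtain ⟨hxX, i, j, hij⟩ := mem_filter.mp hx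
    refine Finset.mem_biUnion.mpr ⟨(i,j), Finset.mem_univ _,
      Finset.mem_biUnion.mpr ⟨x i, hij, ?_⟩⟩
    exact mem_filter.mpr ⟨hxX, rfl⟩
  have h1 : Bad.card ≤ ∑ ij : Fin n × Fin ℓ,
      ∑ α ∈ B ij.1 ij.2, (X.filter (fun x => x ij.1 = α)).card :=
    le_trans (Finset.card_le_card hsub)
      (le_trans Finset.card_biUnion_le
        (Finset.sum_le_sum (fun ij _ => Finset.card_biUnion_le)))
  have hcount : (Bad.card : ℝ) ≤ ((n*ℓ : ℕ):ℝ) * (Real.sqrt (m:ℝ) * c) := by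
    have h2' : (Bad.card : ℝ) ≤ ∑ ij : Fin n × Fin ℓ,
        ∑ α ∈ B ij.1 ij.2, ((X.filter (fun x => x ij.1 = α)).card : ℝ) := by
      exact_mod_cast h1
    refine le_trans h2' ?_
    have hinner : ∀ ij : Fin n × Fin ℓ,
        (∑ α ∈ B ij.1 ij.2, ((X.filter (fun x => x ij.1 = α)).card : ℝ))
          ≤ Real.sqrt (m:ℝ) * c := by
      intro ij
      calc (∑ α ∈ B ij.1 ij.2, ((X.filter (fun x => x ij.1 = α)).card : ℝ))
          ≤ ∑ _α ∈ B ij.1 ij.2, c := Finset.sum_le_sum (fun α _ => hsingle ij.1 α)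
        _ = ((B ij.1 ij.2).card : ℝ) * c := by rw [Finset.sum_const, nsmul_eq_mul]
        _ ≤ Real.sqrt (m:ℝ) * c := mul_le_mul_of_nonneg_right (hBcard ij.1 ij.2) hc0
    calc (∑ ij : Fin n × Fin ℓ, ∑ α ∈ B ij.1 ij.2,
          ((X.filter (fun x => x ij.1 = α)).card : ℝ))
        ≤ ∑ _ij : Fin n × Fin ℓ, Real.sqrt (m:ℝ) * c :=
          Finset.sum_le_sum (fun ij _ => hinner ij)
      _ = ((n*ℓ : ℕ):ℝ) * (Real.sqrt (m:ℝ) * c) := by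
          rw [Finset.sum_const, nsmul_eq_mul, Finset.card_univ]
          simp
  have hX0 : (0:ℝ) < (X.card : ℝ) := by exact_mod_cast Finset.card_pos.mpr hXne
  have hkey : ((n*ℓ:ℕ):ℝ) * Real.sqrt (m:ℝ) * (2:ℝ) ^ (-(0.9 * L)) < 1 := by
    apply key_ineq ((n*ℓ:ℕ):ℝ) (by exact_mod_cast h2) (m:ℝ)
    rw [hm]; push_cast; ring
  have hlt : (Bad.card : ℝ) < (X.card : ℝ) := by
    calc (Bad.card : ℝ) ≤ ((n*ℓ : ℕ):ℝ) * (Real.sqrt (m:ℝ) * c) := hcount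
      _ = (((n*ℓ:ℕ):ℝ) * Real.sqrt (m:ℝ) * (2:ℝ) ^ (-(0.9 * L))) * (X.card : ℝ) := by
          rw [hcdef]; ring
      _ < 1 * (X.card : ℝ) := mul_lt_mul_of_pos_right hkey hX0
      _ = (X.card : ℝ) := one_mul _
  have hltn : Bad.card < X.card := by exact_mod_cast hlt
  have hne : (X \ Bad).Nonempty := by
    rw [← Finset.card_pos, Finset.card_sdiff_of_subset (Finset.filter_subset _ _)]
    exact Nat.sub_pos_of_lt hltn
  obtain ⟨x, hx⟩ := hne
  obtain ⟨hxX, hxnB⟩ := Finset.mem_sdiff.mp hx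
  refine ⟨x, hxX, fun i j => ?_⟩
  have hnot : x i ∉ B i j := by
    intro h; exact hxnB (mem_filter.mpr ⟨hxX, i, j, h⟩)
  have hexists : ∃ y ∈ Y i j, ∃ z ∈ Y i j, y (x i) ≠ z (x i) := by
    by_contra hcon
    push_neg at hcon
    exact hnot (mem_filter.mpr ⟨Finset.mem_univ _, hcon⟩)
  obtain ⟨y, hy, z, hz, hyz⟩ := hexists
  rw [Finset.eq_univ_iff_forall]
  intro b
  have hb : y (x i) = b ∨ z (x i) = b := by
    revert hyz; cases hb' : y (x i) <;> cases hz' : z (x i) <;> cases b <;> simp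
  rcases hb with h | h
  · exact Finset.mem_image.mpr ⟨y, hy, h⟩
  · exact Finset.mem_image.mpr ⟨z, hz, h⟩
end

section
/- Let X and Y be finite nonempty sets, let a : X → ℝ and b : Y → ℝ, and let T := { (x,y) ∈ X × Y : a(x) < b(y) } be the combinatorial triangle they define. Then there exist subsets X' ⊆ X and Y' ⊆ Y with 4·|X'|·|Y'| ≥ |X|·|Y| such that either X' × Y' ⊆ T or (X' × Y') ∩ T = ∅. -/
open Finset

/-- Figure 4: every rectangle has a large subrectangle that is
monochromatic with respect to a combinatorial triangle.
Let `X`, `Y` be finite nonempty sets, `a : X → ℝ`, `b : Y → ℝ`, and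
`T = {(x,y) : a(x) < b(y)}`.  Then there are `X' ⊆ X` and `Y' ⊆ Y` with
`4·|X'|·|Y'| ≥ |X|·|Y|` such that `X' × Y' ⊆ T` or `(X' × Y') ∩ T = ∅`. -/
theorem statement7 {α β : Type*} [DecidableEq α] [DecidableEq β]
    (X : Finset α) (Y : Finset β) (hX : X.Nonempty) (hY : Y.Nonempty)
    (a : α → ℝ) (b : β → ℝ) :
    ∃ X' ⊆ X, ∃ Y' ⊆ Y,
      X.card * Y.card ≤ 4 * (X'.card * Y'.card) ∧
      ((∀ x ∈ X', ∀ y ∈ Y', a x < b y) ∨ (∀ x ∈ X', ∀ y ∈ Y', ¬ a x < b y)) := by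
  classical
  set S : Finset ℝ :=
    (Y.image b).filter (fun s => Y.card ≤ 2 * (Y.filter (fun y => b y ≤ s)).card) with hS
  have hbne : (Y.image b).Nonempty := hY.image b
  have hSne : S.Nonempty := by
    refine ⟨(Y.image b).max' hbne, ?_⟩
    rw [hS, mem_filter]
    refine ⟨(Y.image b).max'_mem hbne, ?_⟩
    have heq : Y.filter (fun y => b y ≤ (Y.image b).max' hbne) = Y := by
      apply filter_true_of_mem
      intro y hy
      exact (Y.image b).le_max' _ (mem_image_of_mem b hy)
    rw [heq]; omega
  set t := S.min' hSne with ht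
  have htS : t ∈ S := S.min'_mem hSne
  have ht1 : Y.card ≤ 2 * (Y.filter (fun y => b y ≤ t)).card := (mem_filter.mp htS).2
  have ht2 : Y.card ≤ 2 * (Y.filter (fun y => t ≤ b y)).card := by
    by_contra h
    push_neg at h
    have hsplit : (Y.filter (fun y => t ≤ b y)).card
        + (Y.filter (fun y => ¬ t ≤ b y)).card = Y.card :=
      card_filter_add_card_filter_not _
    have hYc : 0 < Y.card := card_pos.mpr hY
    have hne : (Y.filter (fun y => ¬ t ≤ b y)).Nonempty := by
      rw [← card_pos]; omega
    have hine : ((Y.filter (fun y => ¬ t ≤ b y)).image b).Nonempty := hne.image b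
    set s := ((Y.filter (fun y => ¬ t ≤ b y)).image b).max' hine with hs
    have hsmem : s ∈ (Y.filter (fun y => ¬ t ≤ b y)).image b :=
      ((Y.filter (fun y => ¬ t ≤ b y)).image b).max'_mem hine
    obtain ⟨y0, hy0, hy0s⟩ := mem_image.mp hsmem
    have hy0Y : y0 ∈ Y := (mem_filter.mp hy0).1
    have hst : s < t := by
      have h2 := (mem_filter.mp hy0).2
      push_neg at h2
      rw [← hy0s]; exact h2
    have hsub : Y.filter (fun y => ¬ t ≤ b y) ⊆ Y.filter (fun y => b y ≤ s) := by
      intro y hy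
      rw [mem_filter]
      exact ⟨(mem_filter.mp hy).1, le_max' _ _ (mem_image_of_mem b hy)⟩
    have hcard := card_le_card hsub
    have hsS : s ∈ S := by
      rw [hS, mem_filter]
      exact ⟨hy0s ▸ mem_image_of_mem b hy0Y, by omega⟩
    have := S.min'_le s hsS
    rw [← ht] at this
    linarith
  -- Now split X by t
  by_cases hx : X.card ≤ 2 * (X.filter (fun x => a x < t)).card
  · refine ⟨X.filter (fun x => a x < t), filter_subset _ _,
      Y.filter (fun y => t ≤ b y), filter_subset _ _, ?_, Or.inl ?_⟩
    · calc X.card * Y.card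
          ≤ (2 * (X.filter (fun x => a x < t)).card)
            * (2 * (Y.filter (fun y => t ≤ b y)).card) := Nat.mul_le_mul hx ht2
        _ = 4 * ((X.filter (fun x => a x < t)).card
            * (Y.filter (fun y => t ≤ b y)).card) := by ring
    · intro x hxm y hym
      exact lt_of_lt_of_le (mem_filter.mp hxm).2 (mem_filter.mp hym).2
  · have hsplit : (X.filter (fun x => a x < t)).card
        + (X.filter (fun x => ¬ a x < t)).card = X.card :=
      card_filter_add_card_filter_not _
    have hx2 : X.card ≤ 2 * (X.filter (fun x => ¬ a x < t)).card := by omega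
    refine ⟨X.filter (fun x => ¬ a x < t), filter_subset _ _,
      Y.filter (fun y => b y ≤ t), filter_subset _ _, ?_, Or.inr ?_⟩
    · calc X.card * Y.card
          ≤ (2 * (X.filter (fun x => ¬ a x < t)).card)
            * (2 * (Y.filter (fun y => b y ≤ t)).card) := Nat.mul_le_mul hx2 ht1
        _ = 4 * ((X.filter (fun x => ¬ a x < t)).card
            * (Y.filter (fun y => b y ≤ t)).card) := by ring
    · intro x hxm y hym
      have h1 := (mem_filter.mp hxm).2
      have h2 := (mem_filter.mp hym).2
      push_neg at h1 ⊢
      linarith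
end

section
/- Let N, k, t ≥ 1 be integers with t ≤ N, and let T ⊆ [N]^k be downward closed with respect to the coordinatewise order. Then at least one of the following holds: (i) there exist sets Y_1, …, Y_k ⊆ [N] with |Y_i| ≥ t for every i and Y_1 × ⋯ × Y_k ⊆ T; or (ii) there exist sets Y_1^err, …, Y_k^err ⊆ [N] with |Y_i^err| < t for every i such that T ⊆ ⋃_{i∈[k]} { x ∈ [N]^k : x_i ∈ Y_i^err }. -/
open Finset

/-- Claim B.1: a downward-closed set either contains a large
box or is covered by small coordinate slabs.
Let `T ⊆ [N]^k` be downward closed for the coordinatewise order and `t ≤ N`.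
Then either (i) there are sets `Y_i ⊆ [N]` with `|Y_i| ≥ t` and
`Y_1 × ⋯ × Y_k ⊆ T`, or (ii) there are sets `Y_i^err ⊆ [N]` with
`|Y_i^err| < t` such that `T ⊆ ⋃_i { x : x_i ∈ Y_i^err }`. -/
theorem statement8 (N k t : ℕ) (hN : 1 ≤ N) (hk : 1 ≤ k) (ht : 1 ≤ t)
    (htN : t ≤ N)
    (T : Set (Fin k → Fin N))
    (hdc : ∀ x ∈ T, ∀ x' : Fin k → Fin N, (∀ i, x' i ≤ x i) → x' ∈ T) :
    (∃ Y : Fin k → Finset (Fin N),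
        (∀ i, t ≤ (Y i).card) ∧
        ∀ x : Fin k → Fin N, (∀ i, x i ∈ Y i) → x ∈ T) ∨
    (∃ Yerr : Fin k → Finset (Fin N),
        (∀ i, (Yerr i).card < t) ∧
        ∀ x ∈ T, ∃ i, x i ∈ Yerr i) := by
  set c : Fin N := ⟨t - 1, by omega⟩ with hc
  by_cases hmem : (fun _ : Fin k => c) ∈ T
  · left
    refine ⟨fun _ => Finset.Iic c, fun i => ?_, fun x hx => ?_⟩
    · simp only [hc, Fin.card_Iic]; omega
    · exact hdc _ hmem x fun i => Finset.mem_Iic.mp (hx i)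
  · right
    refine ⟨fun _ => Finset.Iio c, fun i => ?_, fun x hx => ?_⟩
    · simp only [hc, Fin.card_Iio]; omega
    · by_contra h
      push_neg at h
      exact hmem (hdc x hx _ fun i => by
        have := h i
        simp [Finset.mem_Iio] at this
        exact this)
end

section
/- Let d ≥ 1 and N ≥ d⁵ be integers with d³ dividing N. Let X be a finite nonempty set partitioned into parts X^1, …, X^t, and suppose each part X^j is assigned a set I_j ⊆ [N] with |I_j| ≤ 10d. Then there exists a balanced function h : [N] → [d³] (every fiber of size N/d³) such that the union X_h of those parts X^j for which h is injective on I_j satisfies |X_h| ≥ (1 − 200/d)·|X|. -/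
open Finset

/-- 2-transitivity of the symmetric group. -/
lemma exists_perm_pair {β : Type*} [DecidableEq β] (x y x' y' : β)
    (hxy : x ≠ y) (hxy' : x' ≠ y') :
    ∃ τ : Equiv.Perm β, τ x = x' ∧ τ y = y' := by
  refine ⟨(Equiv.swap x x').trans (Equiv.swap ((Equiv.swap x x') y) y'), ?_, ?_⟩
  · have hsy : (Equiv.swap x x') y ≠ x' := by
      rcases eq_or_ne y x' with rfl | h
      · rw [Equiv.swap_apply_right]
        exact hxy
      · rw [Equiv.swap_apply_of_ne_of_ne (Ne.symm hxy) h]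
        exact h
    simp only [Equiv.trans_apply, Equiv.swap_apply_left]
    exact Equiv.swap_apply_of_ne_of_ne (Ne.symm hsy) hxy'
  · simp only [Equiv.trans_apply, Equiv.swap_apply_left]

/-- All fibers of `σ ↦ (σ i, σ i')` over distinct pairs have the same size. -/
lemma fiber_const {β : Type*} [Fintype β] [DecidableEq β] (i i' : β)
    (x y x' y' : β) (hxy : x ≠ y) (hxy' : x' ≠ y') :
    ((univ : Finset (Equiv.Perm β)).filter fun σ => σ i = x ∧ σ i' = y).card
      = ((univ : Finset (Equiv.Perm β)).filter fun σ => σ i = x' ∧ σ i' = y').card := by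
  obtain ⟨τ, hτx, hτy⟩ := exists_perm_pair x y x' y' hxy hxy'
  refine Finset.card_bij' (fun σ _ => τ * σ) (fun σ _ => τ⁻¹ * σ) ?_ ?_ ?_ ?_
  · intro σ hσ
    simp only [mem_filter, mem_univ, true_and] at hσ ⊢
    simp [Equiv.Perm.mul_apply, hσ.1, hσ.2, hτx, hτy]
  · intro σ hσ
    simp only [mem_filter, mem_univ, true_and] at hσ ⊢
    constructor
    · rw [Equiv.Perm.mul_apply, hσ.1, ← hτx]; simp
    · rw [Equiv.Perm.mul_apply, hσ.2, ← hτy]; simp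
  · intro σ _; simp [← mul_assoc]
  · intro σ _; simp [← mul_assoc]

/-- Double counting: (#collision perms) * (#distinct pairs)
    = (#collision pairs) * (#perms). -/
lemma collision_count {β γ : Type*} [Fintype β] [DecidableEq β] [DecidableEq γ]
    (h₀ : β → γ) (i i' : β) (hii : i ≠ i') :
    ((univ : Finset (Equiv.Perm β)).filter fun σ => h₀ (σ i) = h₀ (σ i')).card
      * (univ : Finset β).offDiag.card
    = ((univ : Finset β).offDiag.filter fun p => h₀ p.1 = h₀ p.2).card
      * Fintype.card (Equiv.Perm β) := by
  set P := (univ : Finset β).offDiag with hP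
  set Pc := P.filter (fun p => h₀ p.1 = h₀ p.2) with hPc
  set f := ((univ : Finset (Equiv.Perm β)).filter fun σ => σ i = i ∧ σ i' = i').card with hf
  have hfib : ∀ p ∈ P,
      ((univ : Finset (Equiv.Perm β)).filter fun σ => σ i = p.1 ∧ σ i' = p.2).card = f :=
    fun p hp => fiber_const i i' p.1 p.2 i i' (mem_offDiag.mp hp).2.2 hii
  have hmap : ∀ σ : Equiv.Perm β, σ ∈ (univ : Finset (Equiv.Perm β)) →
      (σ i, σ i') ∈ P :=
    fun σ _ => mem_offDiag.mpr ⟨mem_univ _, mem_univ _, fun h => hii (σ.injective h)⟩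
  have hM : Fintype.card (Equiv.Perm β) = P.card * f := by
    rw [← Finset.card_univ,
      Finset.card_eq_sum_card_fiberwise (f := fun σ : Equiv.Perm β => (σ i, σ i')) hmap]
    rw [Finset.sum_congr rfl (fun p hp => ?_), sum_const, smul_eq_mul]
    rw [← hfib p hp]
    congr 1
    ext σ
    simp [Prod.ext_iff]
  have hmapS : ∀ σ : Equiv.Perm β,
      σ ∈ ((univ : Finset (Equiv.Perm β)).filter fun σ => h₀ (σ i) = h₀ (σ i')) →
      (σ i, σ i') ∈ Pc := by
    intro σ hσ
    rw [mem_filter] at hσ ⊢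
    exact ⟨hmap σ (mem_univ _), hσ.2⟩
  have hS : ((univ : Finset (Equiv.Perm β)).filter fun σ => h₀ (σ i) = h₀ (σ i')).card
      = Pc.card * f := by
    rw [Finset.card_eq_sum_card_fiberwise (f := fun σ : Equiv.Perm β => (σ i, σ i')) hmapS]
    rw [Finset.sum_congr rfl (fun p hp => ?_), sum_const, smul_eq_mul]
    rw [← hfib p (mem_filter.mp hp).1]
    congr 1
    ext σ
    simp only [filter_filter, mem_filter, mem_univ, true_and, Prod.ext_iff]
    constructor
    · rintro ⟨_, h1, h2⟩; exact ⟨h1, h2⟩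
    · rintro ⟨h1, h2⟩
      refine ⟨?_, h1, h2⟩
      rw [h1, h2]
      exact (mem_filter.mp hp).2
  rw [hS, hM]
  ring

open scoped Classical in
/-- Section 6.3: some balanced grouping into `d³`
mega-coordinates keeps almost all of a partitioned set.
Let `d ≥ 1`, `N ≥ d⁵` with `d³ ∣ N`.  Let `X` be a finite nonempty set
partitioned into parts `X^1, …, X^t`, each part `X^j` being assigned a set
`I_j ⊆ [N]` with `|I_j| ≤ 10d`.  Then there is a balanced function
`h : [N] → [d³]` (every fiber of size `N/d³`) such that the union `X_h` of
those parts on whose assigned set `h` is injective satisfies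
`|X_h| ≥ (1 - 200/d)·|X|`. -/
theorem statement11 (d N : ℕ) (hd : 1 ≤ d) (hN : d ^ 5 ≤ N) (hdvd : d ^ 3 ∣ N)
    {α : Type*} [DecidableEq α] (X : Finset α) (hX : X.Nonempty)
    (t : ℕ) (parts : Fin t → Finset α)
    (hdisj : ∀ j j' : Fin t, j ≠ j' → Disjoint (parts j) (parts j'))
    (hcover : Finset.univ.biUnion parts = X)
    (I : Fin t → Finset (Fin N)) (hI : ∀ j, (I j).card ≤ 10 * d) :
    ∃ h : Fin N → Fin (d ^ 3),
      (∀ c : Fin (d ^ 3), (Finset.univ.filter fun i => h i = c).card = N / d ^ 3) ∧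
      (1 - 200 / (d : ℝ)) * (X.card : ℝ)
        ≤ (((Finset.univ.filter fun j : Fin t =>
              ∀ i ∈ I j, ∀ i' ∈ I j, h i = h i' → i = i').biUnion parts).card : ℝ) := by
  classical
  set D := d ^ 3 with hDdef
  set q := N / d ^ 3 with hqdef
  have hD1 : 1 ≤ D := Nat.one_le_pow _ _ hd
  have hN0 : 0 < N := lt_of_lt_of_le (pow_pos hd 5) hN
  have hqD : q * D = N := Nat.div_mul_cancel hdvd
  have hq1 : 1 ≤ q := by
    rcases Nat.eq_zero_or_pos q with h | h
    · rw [h, zero_mul] at hqD; omega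
    · exact h
  have hNDq : N = D * q := by rw [← hqD]; ring
  let E : Fin N ≃ Fin D × Fin q := (finCongr hNDq).trans finProdFinEquiv.symm
  set h₀ : Fin N → Fin D := fun i => (E i).1 with hh₀
  -- h₀ is balanced
  have hfiber : ∀ c : Fin D, ((univ : Finset (Fin N)).filter fun i => h₀ i = c).card = q := by
    intro c
    have h1 : ((univ : Finset (Fin N)).filter fun i => h₀ i = c).card
        = (({c} ×ˢ (univ : Finset (Fin q)))).card :=
      Finset.card_equiv E (fun i => by
        simp only [mem_filter, mem_univ, true_and, Finset.mem_product,
          Finset.mem_singleton, and_true, hh₀])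
    rw [h1, Finset.card_product, Finset.card_singleton, Finset.card_univ,
      Fintype.card_fin, one_mul]
  have hbal : ∀ σ : Equiv.Perm (Fin N), ∀ c : Fin D,
      ((univ : Finset (Fin N)).filter fun i => h₀ (σ i) = c).card = q := by
    intro σ c
    exact (Finset.card_equiv σ (fun i => by simp)).trans (hfiber c)
  set M := Fintype.card (Equiv.Perm (Fin N)) with hMdef
  -- key per-pair bound
  have key : ∀ a b : Fin N, a ≠ b →
      D * ((univ : Finset (Equiv.Perm (Fin N))).filter
        fun σ => h₀ (σ a) = h₀ (σ b)).card ≤ 2 * M := by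
    intro a b hab
    have hN2 : 2 ≤ N := by
      have h := Fintype.one_lt_card_iff_nontrivial.mpr ⟨a, b, hab⟩
      simp at h; omega
    have hcc := collision_count h₀ a b hab
    set S := ((univ : Finset (Equiv.Perm (Fin N))).filter
      fun σ => h₀ (σ a) = h₀ (σ b)).card with hSdef
    set K := ((univ : Finset (Fin N)).offDiag.filter fun p => h₀ p.1 = h₀ p.2).card with hKdef
    have hPcard : ((univ : Finset (Fin N)).offDiag).card = N * N - N := by
      rw [Finset.offDiag_card, Finset.card_univ, Fintype.card_fin]
    -- K ≤ N * (q - 1)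
    have hKle : K ≤ N * (q - 1) := by
      have hsub : (univ : Finset (Fin N)).offDiag.filter (fun p => h₀ p.1 = h₀ p.2)
          ⊆ univ.biUnion (fun x => {x} ×ˢ
            (((univ : Finset (Fin N)).filter fun y => h₀ y = h₀ x).erase x)) := by
        intro p hp
        simp only [mem_filter, mem_offDiag] at hp
        obtain ⟨⟨-, -, hne⟩, hcol⟩ := hp
        refine Finset.mem_biUnion.mpr ⟨p.1, mem_univ _, ?_⟩
        rw [Finset.mem_product]
        exact ⟨mem_singleton_self _, Finset.mem_erase.mpr ⟨Ne.symm hne,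
          mem_filter.mpr ⟨mem_univ _, hcol.symm⟩⟩⟩
      calc K ≤ ∑ x : Fin N,
            ({x} ×ˢ (((univ : Finset (Fin N)).filter fun y => h₀ y = h₀ x).erase x)).card :=
            le_trans (Finset.card_le_card hsub) Finset.card_biUnion_le
        _ = ∑ _x : Fin N, (q - 1) := by
            apply Finset.sum_congr rfl
            intro x _
            have hx : x ∈ (univ : Finset (Fin N)).filter fun y => h₀ y = h₀ x :=
              mem_filter.mpr ⟨mem_univ _, rfl⟩
            rw [Finset.card_product, Finset.card_singleton, one_mul,
              Finset.card_erase_of_mem hx, hfiber (h₀ x)]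
        _ = N * (q - 1) := by
            rw [Finset.sum_const, Finset.card_univ, Fintype.card_fin, smul_eq_mul]
    -- arithmetic: D * (N * (q-1)) ≤ 2 * (N*N - N)
    have harith0 : D * (q - 1) ≤ 2 * (N - 1) := by
      have h1 : N = (q - 1) * D + D := by
        have h2 : (q - 1) + 1 = q := Nat.succ_pred_eq_of_pos hq1
        calc N = q * D := hqD.symm
          _ = ((q - 1) + 1) * D := by rw [h2]
          _ = (q - 1) * D + D := by ring
      rw [mul_comm]
      set u := (q - 1) * D with hu
      omega
    have harith : D * (N * (q - 1)) ≤ 2 * (N * N - N) := by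
      have h3 : N * N - N = N * (N - 1) := by rw [Nat.mul_sub, Nat.mul_one]
      rw [h3]
      calc D * (N * (q - 1)) = N * (D * (q - 1)) := by ring
        _ ≤ N * (2 * (N - 1)) := Nat.mul_le_mul_left N harith0
        _ = 2 * (N * (N - 1)) := by ring
    have hPpos : 0 < N * N - N := by
      have : N * N - N = N * (N - 1) := by rw [Nat.mul_sub, Nat.mul_one]
      rw [this]
      exact Nat.mul_pos hN0 (by omega)
    have hfin : D * S * (N * N - N) ≤ 2 * M * (N * N - N) := by
      calc D * S * (N * N - N) = D * (S * ((univ : Finset (Fin N)).offDiag).card) := by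
            rw [hPcard]; ring
        _ = D * (K * M) := by rw [hcc]
        _ = D * K * M := by ring
        _ ≤ D * (N * (q - 1)) * M := by gcongr
        _ ≤ 2 * (N * N - N) * M := by gcongr
        _ = 2 * M * (N * N - N) := by ring
    exact Nat.le_of_mul_le_mul_right hfin hPpos
  -- averaging over all permutations
  set coll : Fin t → Equiv.Perm (Fin N) → ℕ :=
    fun j σ => ((I j).offDiag.filter fun p => h₀ (σ p.1) = h₀ (σ p.2)).card with hcoll
  set W : Equiv.Perm (Fin N) → ℕ :=
    fun σ => ∑ j ∈ univ.filter (fun j => ¬ (∀ i ∈ I j, ∀ i' ∈ I j,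
      h₀ (σ i) = h₀ (σ i') → i = i')), (parts j).card with hW
  have stepA : ∀ σ : Equiv.Perm (Fin N), W σ ≤ ∑ j : Fin t, (parts j).card * coll j σ := by
    intro σ
    calc W σ = ∑ j ∈ univ.filter (fun j => ¬ (∀ i ∈ I j, ∀ i' ∈ I j,
          h₀ (σ i) = h₀ (σ i') → i = i')), (parts j).card * 1 := by simp [hW]
      _ ≤ ∑ j ∈ univ.filter (fun j => ¬ (∀ i ∈ I j, ∀ i' ∈ I j,
          h₀ (σ i) = h₀ (σ i') → i = i')), (parts j).card * coll j σ := by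
          apply Finset.sum_le_sum
          intro j hj
          apply Nat.mul_le_mul_left
          rw [mem_filter] at hj
          have hj2 := hj.2
          push_neg at hj2
          obtain ⟨i, hi, i', hi', hcol, hne⟩ := hj2
          refine Finset.card_pos.mpr ⟨(i, i'), ?_⟩
          rw [mem_filter, mem_offDiag]
          exact ⟨⟨hi, hi', hne⟩, hcol⟩
      _ ≤ ∑ j : Fin t, (parts j).card * coll j σ :=
          Finset.sum_le_sum_of_subset (Finset.filter_subset _ _)
  have stepB : ∀ j, (∑ σ : Equiv.Perm (Fin N), coll j σ)
      = ∑ p ∈ (I j).offDiag, ((univ : Finset (Equiv.Perm (Fin N))).filter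
          fun σ => h₀ (σ p.1) = h₀ (σ p.2)).card := by
    intro j
    simp_rw [hcoll, Finset.card_filter]
    rw [Finset.sum_comm]
  have stepC : ∀ j, D * (∑ σ : Equiv.Perm (Fin N), coll j σ) ≤ 200 * d ^ 2 * M := by
    intro j
    rw [stepB j, Finset.mul_sum]
    calc ∑ p ∈ (I j).offDiag, D * ((univ : Finset (Equiv.Perm (Fin N))).filter
          fun σ => h₀ (σ p.1) = h₀ (σ p.2)).card
        ≤ ∑ _p ∈ (I j).offDiag, 2 * M := by
          apply Finset.sum_le_sum
          intro p hp
          exact key p.1 p.2 (Finset.mem_offDiag.mp hp).2.2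
      _ = (I j).offDiag.card * (2 * M) := by rw [Finset.sum_const, smul_eq_mul]
      _ ≤ (100 * d ^ 2) * (2 * M) := by
          gcongr
          rw [(I j).offDiag_card]
          exact le_trans (Nat.sub_le _ _)
            (le_trans (Nat.mul_le_mul (hI j) (hI j)) (by ring_nf; omega))
      _ = 200 * d ^ 2 * M := by ring
  have hXsum : ∑ j : Fin t, (parts j).card = X.card := by
    rw [← hcover]
    exact (Finset.card_biUnion (fun j _ j' _ hne => hdisj j j' hne)).symm
  have total : D * (∑ σ : Equiv.Perm (Fin N), W σ) ≤ 200 * d ^ 2 * M * X.card := by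
    have t1 : (∑ σ : Equiv.Perm (Fin N), W σ)
        ≤ ∑ σ : Equiv.Perm (Fin N), ∑ j : Fin t, (parts j).card * coll j σ :=
      Finset.sum_le_sum fun σ _ => stepA σ
    have t2 : (∑ σ : Equiv.Perm (Fin N), ∑ j : Fin t, (parts j).card * coll j σ)
        = ∑ j : Fin t, (parts j).card * ∑ σ : Equiv.Perm (Fin N), coll j σ := by
      rw [Finset.sum_comm]
      exact Finset.sum_congr rfl fun j _ => (Finset.mul_sum _ _ _).symm
    calc D * (∑ σ : Equiv.Perm (Fin N), W σ)
        ≤ D * ∑ j : Fin t, (parts j).card * ∑ σ : Equiv.Perm (Fin N), coll j σ := by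
          rw [← t2]; exact Nat.mul_le_mul_left D t1
      _ = ∑ j : Fin t, (parts j).card * (D * ∑ σ : Equiv.Perm (Fin N), coll j σ) := by
          rw [Finset.mul_sum]; exact Finset.sum_congr rfl fun j _ => by ring
      _ ≤ ∑ j : Fin t, (parts j).card * (200 * d ^ 2 * M) :=
          Finset.sum_le_sum fun j _ => Nat.mul_le_mul_left _ (stepC j)
      _ = (∑ j : Fin t, (parts j).card) * (200 * d ^ 2 * M) := by rw [← Finset.sum_mul]
      _ = 200 * d ^ 2 * M * X.card := by rw [hXsum]; ring
  -- pigeonhole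
  have hle : ∑ σ : Equiv.Perm (Fin N), (d * W σ) ≤ ∑ _σ : Equiv.Perm (Fin N),
      200 * X.card := by
    rw [← Finset.mul_sum, Finset.sum_const, Finset.card_univ, smul_eq_mul]
    have hcancel : d * (∑ σ : Equiv.Perm (Fin N), W σ) * d ^ 2 ≤ M * (200 * X.card) * d ^ 2 := by
      calc d * (∑ σ : Equiv.Perm (Fin N), W σ) * d ^ 2
          = D * (∑ σ : Equiv.Perm (Fin N), W σ) := by rw [hDdef]; ring
        _ ≤ 200 * d ^ 2 * M * X.card := total
        _ = M * (200 * X.card) * d ^ 2 := by ring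
    exact Nat.le_of_mul_le_mul_right hcancel (pow_pos hd 2)
  obtain ⟨σ, -, hσ⟩ := Finset.exists_le_of_sum_le Finset.univ_nonempty hle
  refine ⟨fun i => h₀ (σ i), fun c => hbal σ c, ?_⟩
  have hGB : ((univ.filter fun j => ∀ i ∈ I j, ∀ i' ∈ I j,
      h₀ (σ i) = h₀ (σ i') → i = i').biUnion parts).card = X.card - W σ := by
    rw [Finset.card_biUnion (fun j _ j' _ hne => hdisj j j' hne)]
    have hsplit := Finset.sum_filter_add_sum_filter_not univ (fun j => ∀ i ∈ I j, ∀ i' ∈ I j,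
      h₀ (σ i) = h₀ (σ i') → i = i') (fun j => (parts j).card)
    rw [hXsum] at hsplit
    have hWσ : W σ = ∑ j ∈ univ.filter (fun j => ¬ (∀ i ∈ I j, ∀ i' ∈ I j,
      h₀ (σ i) = h₀ (σ i') → i = i')), (parts j).card := rfl
    omega
  have hWle : W σ ≤ X.card := by
    rw [← hXsum, hW]
    exact Finset.sum_le_sum_of_subset (Finset.filter_subset _ _)
  rw [hGB, Nat.cast_sub hWle]
  have hdpos : (0 : ℝ) < d := by exact_mod_cast hd
  have h200 : (d : ℝ) * W σ ≤ 200 * X.card := by exact_mod_cast hσ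
  have hfrac : (W σ : ℝ) ≤ 200 / d * X.card := by
    rw [div_mul_eq_mul_div, le_div_iff₀ hdpos]
    nlinarith
  have hexp : (1 - 200 / (d : ℝ)) * (X.card : ℝ)
      = (X.card : ℝ) - 200 / d * X.card := by ring
  linarith
end

section
/- Let N ≥ 1, let A_1, …, A_N be finite nonempty sets, let β ≥ 0 be real, and let X ⊆ ∏_{i∈[N]} A_i be nonempty. Then there exist a partition X = X^1 ⊔ ⋯ ⊔ X^t, sets I_j ⊆ [N], and tuples α_j ∈ ∏_{i∈I_j} A_i for j = 1,…,t, such that for every j: (i) every x ∈ X^j satisfies x_i = (α_j)_i for all i ∈ I_j; and (ii) the uniform random variable on X^j, marginalized to the coordinates [N] ∖ I_j, has blockwise min-entropy at least β (this condition being vacuous when I_j = [N]). -/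
open Finset

theorem statement13_aux (N : ℕ) (A : Fin N → Type*)
    [∀ i, Fintype (A i)] [∀ i, DecidableEq (A i)]
    (β : ℝ) (hβ : 0 ≤ β) :
    ∀ X : Finset (∀ i, A i),
    ∃ (t : ℕ) (parts : Fin t → Finset (∀ i, A i))
      (I : Fin t → Finset (Fin N)) (α : Fin t → ∀ i, A i),
      (∀ j, (parts j).Nonempty) ∧
      (∀ j j' : Fin t, j ≠ j' → Disjoint (parts j) (parts j')) ∧
      (Finset.univ.biUnion parts = X) ∧
      (∀ j, ∀ x ∈ parts j, ∀ i ∈ I j, x i = α j i) ∧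
      (∀ j, ∀ S : Finset (Fin N), S.Nonempty → Disjoint S (I j) →
        ∀ a : ∀ i, A i,
          (((parts j).filter fun x => ∀ i ∈ S, x i = a i).card : ℝ)
            ≤ ((parts j).card : ℝ) * (2 : ℝ) ^ (-(β * (S.card : ℝ)))) := by
  classical
  intro X
  induction X using Finset.strongInduction with
  | _ X ih =>
  rcases eq_or_ne X ∅ with rfl | hXne
  · exact ⟨0, Fin.elim0, Fin.elim0, Fin.elim0, fun j => j.elim0, fun j => j.elim0,
      by simp, fun j => j.elim0, fun j => j.elim0⟩
  · have hX : X.Nonempty := Finset.nonempty_iff_ne_empty.mpr hXne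
    set Bad : Finset (Fin N) → Prop := fun I =>
      ∃ α : ∀ i, A i, (X.card : ℝ) * (2:ℝ) ^ (-(β * (I.card : ℝ)))
        < ((X.filter fun x => ∀ i ∈ I, x i = α i).card : ℝ) with hBad
    set T : Finset (Finset (Fin N)) :=
      (Finset.univ.powerset).filter Bad with hT
    rcases eq_or_ne T ∅ with hTe | hTne
    · -- no violation: single part
      refine ⟨1, fun _ => X, fun _ => ∅, fun _ => hX.choose, fun _ => hX, ?_, by simp, ?_, ?_⟩
      · intro j j' hjj'; exact absurd (Subsingleton.elim j j') hjj'
      · intro j x hx i hi; simp at hi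
      · intro j S hS hdisj a
        by_contra hcon
        push_neg at hcon
        have hBadS : Bad S := ⟨a, hcon⟩
        have : S ∈ T := by
          rw [hT, Finset.mem_filter]
          exact ⟨Finset.mem_powerset.mpr (Finset.subset_univ S), hBadS⟩
        simp [hTe] at this
    · have hTne' : T.Nonempty := Finset.nonempty_iff_ne_empty.mpr hTne
      obtain ⟨I, hIT, hImax⟩ := Finset.exists_max_image T Finset.card hTne'
      have hIBad : Bad I := (Finset.mem_filter.mp hIT).2
      obtain ⟨α, hα⟩ := hIBad
      set X' := X.filter (fun x => ∀ i ∈ I, x i = α i) with hX'def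
      have hX'sub : X' ⊆ X := Finset.filter_subset _ _
      have hX'ne : X'.Nonempty := by
        rw [← Finset.card_pos]
        have h0 : (0:ℝ) ≤ (X.card:ℝ) * (2:ℝ)^(-(β * (I.card:ℝ))) := by positivity
        have : (0:ℝ) < (X'.card:ℝ) := lt_of_le_of_lt h0 hα
        exact_mod_cast this
      have hYss : X \ X' ⊂ X := Finset.sdiff_ssubset hX'sub hX'ne
      obtain ⟨t, parts, Is, αs, h1, h2, h3, h4, h5⟩ := ih (X \ X') hYss
      refine ⟨t + 1, Fin.cons X' parts, Fin.cons I Is, Fin.cons α αs, ?_, ?_, ?_, ?_, ?_⟩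
      · intro j
        cases j using Fin.cases with
        | zero => simpa using hX'ne
        | succ k => simpa using h1 k
      · -- disjointness
        have hsub : ∀ k, parts k ⊆ X \ X' := by
          intro k
          rw [← h3]
          exact Finset.subset_biUnion_of_mem parts (Finset.mem_univ k)
        have hd0 : ∀ k, Disjoint X' (parts k) := fun k =>
          (Finset.disjoint_sdiff.mono_right (hsub k))
        intro j j'
        cases j using Fin.cases with
        | zero =>
          cases j' using Fin.cases with
          | zero => intro h; exact absurd rfl h
          | succ k => intro _; simpa using hd0 k
        | succ k =>
          cases j' using Fin.cases with
          | zero => intro _; simpa using (hd0 k).symm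
          | succ k' =>
            intro h
            have hkk' : k ≠ k' := fun e => h (by rw [e])
            simpa using h2 k k' hkk'
      · -- biUnion
        ext x
        simp only [Finset.mem_biUnion, Finset.mem_univ, true_and]
        rw [Fin.exists_fin_succ]
        simp only [Fin.cons_zero, Fin.cons_succ]
        have hparts : (∃ i, x ∈ parts i) ↔ x ∈ X \ X' := by
          rw [← h3]; simp
        rw [hparts, Finset.mem_sdiff]
        constructor
        · rintro (h | ⟨h, _⟩)
          exacts [hX'sub h, h]
        · intro hx
          by_cases hx' : x ∈ X'
          exacts [Or.inl hx', Or.inr ⟨hx, hx'⟩]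
      · -- agreement
        intro j
        cases j using Fin.cases with
        | zero =>
          intro x hx i hi
          simp only [Fin.cons_zero] at hx hi ⊢
          rw [hX'def] at hx
          exact (Finset.mem_filter.mp hx).2 i hi
        | succ k => simpa using h4 k
      · -- min-entropy
        intro j
        cases j using Fin.cases with
        | succ k => simpa using h5 k
        | zero =>
          intro S hS hdisj a
          simp only [Fin.cons_zero] at hdisj ⊢
          by_contra hcon
          push_neg at hcon
          set a' : ∀ i, A i := fun i => if i ∈ S then a i else α i with ha'
          have hkey : X.filter (fun x => ∀ i ∈ I ∪ S, x i = a' i)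
              = X'.filter (fun x => ∀ i ∈ S, x i = a i) := by
            ext x
            rw [hX'def]
            simp only [Finset.mem_filter, Finset.filter_filter, and_assoc, Finset.mem_union]
            constructor
            · rintro ⟨hxX, h⟩
              refine ⟨hxX, fun i hi => ?_, fun i hi => ?_⟩
              · have h' := h i (Or.inl hi)
                have hiS : i ∉ S := Finset.disjoint_right.mp hdisj hi
                simpa [ha', hiS] using h'
              · have h' := h i (Or.inr hi)
                simpa [ha', hi] using h'
            · rintro ⟨hxX, hI, hSa⟩
              refine ⟨hxX, fun i hi => ?_⟩
              rcases hi with hi | hi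
              · have hiS : i ∉ S := Finset.disjoint_right.mp hdisj hi
                simpa [ha', hiS] using hI i hi
              · simpa [ha', hi] using hSa i hi
          have hIS : Disjoint I S := hdisj.symm
          have hcard : ((I ∪ S).card : ℝ) = (I.card : ℝ) + (S.card : ℝ) := by
            rw [Finset.card_union_of_disjoint hIS]; push_cast; ring
          have hpos : (0:ℝ) < (2:ℝ) ^ (-(β * (S.card:ℝ))) := by positivity
          have hbig : (X.card : ℝ) * (2:ℝ)^(-(β * (((I ∪ S).card : ℕ) : ℝ)))
              < ((X.filter fun x => ∀ i ∈ I ∪ S, x i = a' i).card : ℝ) := by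
            rw [hkey, hcard]
            have he : -(β * ((I.card:ℝ) + (S.card:ℝ)))
                = -(β * (I.card:ℝ)) + -(β * (S.card:ℝ)) := by ring
            rw [he, Real.rpow_add (by norm_num : (0:ℝ) < 2), ← mul_assoc]
            calc (X.card:ℝ) * (2:ℝ)^(-(β*(I.card:ℝ))) * (2:ℝ)^(-(β*(S.card:ℝ)))
                < (X'.card:ℝ) * (2:ℝ)^(-(β*(S.card:ℝ))) :=
                  mul_lt_mul_of_pos_right hα hpos
              _ < _ := hcon
          have hBadIS : Bad (I ∪ S) := ⟨a', hbig⟩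
          have hin : I ∪ S ∈ T := by
            rw [hT, Finset.mem_filter]
            exact ⟨Finset.mem_powerset.mpr (Finset.subset_univ _), hBadIS⟩
          have hle := hImax _ hin
          rw [Finset.card_union_of_disjoint hIS] at hle
          have hS1 : 1 ≤ S.card := Finset.card_pos.mpr hS
          omega

/-- blockwise min-entropy restoring partition, Section 6.3.
Every nonempty `X ⊆ ∏_{i ∈ [N]} A_i` can be partitioned into parts
`X^1, …, X^t`, where each part `X^j` comes with a set `I_j ⊆ [N]` of fixed
coordinates and a tuple `α_j` such that: (i) every `x ∈ X^j` agrees with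
`α_j` on `I_j`; and (ii) the uniform variable on `X^j`, marginalized to the
coordinates outside `I_j`, has blockwise min-entropy at least `β` (vacuous
when `I_j = [N]`). -/
theorem statement13 (N : ℕ) (hN : 1 ≤ N) (A : Fin N → Type*)
    [∀ i, Fintype (A i)] [∀ i, DecidableEq (A i)] [∀ i, Nonempty (A i)]
    (β : ℝ) (hβ : 0 ≤ β)
    (X : Finset (∀ i, A i)) (hX : X.Nonempty) :
    ∃ (t : ℕ) (parts : Fin t → Finset (∀ i, A i))
      (I : Fin t → Finset (Fin N)) (α : Fin t → ∀ i, A i),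
      (∀ j, (parts j).Nonempty) ∧
      (∀ j j' : Fin t, j ≠ j' → Disjoint (parts j) (parts j')) ∧
      (Finset.univ.biUnion parts = X) ∧
      (∀ j, ∀ x ∈ parts j, ∀ i ∈ I j, x i = α j i) ∧
      (∀ j, ∀ S : Finset (Fin N), S.Nonempty → Disjoint S (I j) →
        ∀ a : ∀ i, A i,
          (((parts j).filter fun x => ∀ i ∈ S, x i = a i).card : ℝ)
            ≤ ((parts j).card : ℝ) * (2 : ℝ) ^ (-(β * (S.card : ℝ)))) :=
  statement13_aux N A β hβ X
end
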